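/- arXiv:2307.00851 — 5 statements merged into one kernel-verified Lean document; each statement's English description precedes it below -/
import Mathlib

section
/- Let d = (d_j)_{j∈ℕ} be a sequence of natural numbers with d_j ≥ 2 for every j, let 𝒞 = ∏_{j∈ℕ} {0,…,d_j−1} with the product topology, and let G be a graph on 𝒞. Then the following are equivalent: (1) (𝒞,G) has no continuous 2-coloring; (2) there exists α ∈ 𝒞 such that for every n ∈ ℕ there is p ∈ ℕ with (α,α) ∈ (ⁿG)^{2p+1}; (3) for every n ∈ ℕ the relation G_n on ∏_{j<n}{0,…,d_j−1} admits an odd closed walk. -/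
open TopologicalSpace

/-- A *graph* on `X`: a symmetric irreflexive binary relation on `X`. -/
def IsGraph {X : Type*} (G : Set (X × X)) : Prop :=
  (∀ x y : X, (x, y) ∈ G → (y, x) ∈ G) ∧ ∀ x : X, (x, x) ∉ G

/-- `(X, G)` admits a continuous coloring with `n` colors
(`Fin n` carries the discrete topology). -/
def HasContColoring {X : Type*} [TopologicalSpace X] (G : Set (X × X)) (n : ℕ) : Prop :=
  ∃ c : X → Fin n, Continuous c ∧ ∀ x y : X, (x, y) ∈ G → c x ≠ c y

/-- `(X, G)` admits a countable continuous coloring (`ℕ` is discrete). -/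
def HasCtbleContColoring {X : Type*} [TopologicalSpace X] (G : Set (X × X)) : Prop :=
  ∃ c : X → ℕ, Continuous c ∧ ∀ x y : X, (x, y) ∈ G → c x ≠ c y

/-- `(X,G) ≼_c (Y,H)` : there is a continuous homomorphism. -/
def RedC {X Y : Type*} [TopologicalSpace X] [TopologicalSpace Y]
    (G : Set (X × X)) (H : Set (Y × Y)) : Prop :=
  ∃ φ : X → Y, Continuous φ ∧ ∀ x y : X, (x, y) ∈ G → (φ x, φ y) ∈ H

/-- `(X,G) ≼^i_c (Y,H)` : there is an injective continuous homomorphism. -/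
def RedIC {X Y : Type*} [TopologicalSpace X] [TopologicalSpace Y]
    (G : Set (X × X)) (H : Set (Y × Y)) : Prop :=
  ∃ φ : X → Y, Continuous φ ∧ Function.Injective φ ∧
    ∀ x y : X, (x, y) ∈ G → (φ x, φ y) ∈ H

/-- A space is zero-dimensional if the clopen sets form a basis. -/
def ZeroDim (X : Type*) [TopologicalSpace X] : Prop :=
  IsTopologicalBasis {s : Set X | IsClopen s}

/-- zero-dimensional metrizable compact -/
def Is0DMC (X : Type*) [TopologicalSpace X] : Prop :=
  CompactSpace X ∧ MetrizableSpace X ∧ ZeroDim X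

/-- zero-dimensional metrizable separable -/
def Is0DMS (X : Type*) [TopologicalSpace X] : Prop :=
  MetrizableSpace X ∧ SeparableSpace X ∧ ZeroDim X

/-- `R^l` : the `l`-fold relational composition of `R`. -/
def RelPow {X : Type*} (R : Set (X × X)) (l : ℕ) : Set (X × X) :=
  {p | ∃ f : ℕ → X, f 0 = p.1 ∧ f l = p.2 ∧ ∀ i < l, (f i, f (i + 1)) ∈ R}

/-- `ⁿG` : pairs agreeing up to `n` with some pair of `G`. -/
def NApprox {d : ℕ → ℕ} (G : Set ((∀ j, Fin (d j)) × (∀ j, Fin (d j)))) (n : ℕ) :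
    Set ((∀ j, Fin (d j)) × (∀ j, Fin (d j))) :=
  {p | ∃ q ∈ G, (∀ j < n, p.1 j = q.1 j) ∧ ∀ j < n, p.2 j = q.2 j}

/-- `G_n` : the relation induced by `G` on sequences of length `n`;
`(s,t) ∈ G_n` iff the basic clopen box `[s] × [t]` meets `G`. -/
def FinApprox {d : ℕ → ℕ} (G : Set ((∀ j, Fin (d j)) × (∀ j, Fin (d j)))) (n : ℕ) :
    Set ((∀ j : Fin n, Fin (d j)) × (∀ j : Fin n, Fin (d j))) :=
  {st | ∃ q ∈ G, (∀ j : Fin n, q.1 j = st.1 j) ∧ ∀ j : Fin n, q.2 j = st.2 j}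

/-- An odd closed walk in a relation. -/
def HasOddClosedWalk {V : Type*} (R : Set (V × V)) : Prop :=
  ∃ (p : ℕ) (w : ℕ → V), w 0 = w (2 * p + 1) ∧ ∀ i < 2 * p + 1, (w i, w (i + 1)) ∈ R

section AuxWalk

variable {X : Type*}

lemma relPow_zero (R : Set (X × X)) (u v : X) : (u, v) ∈ RelPow R 0 ↔ u = v := by
  constructor
  · rintro ⟨f, h0, hl, -⟩
    exact h0.symm.trans hl
  · rintro rfl
    exact ⟨fun _ => u, rfl, rfl, fun i hi => absurd hi (Nat.not_lt_zero i)⟩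

lemma relPow_single {R : Set (X × X)} {u v : X} (h : (u, v) ∈ R) : (u, v) ∈ RelPow R 1 := by
  classical
  refine ⟨fun i => if i = 0 then u else v, by simp, by simp, ?_⟩
  intro i hi
  have : i = 0 := by omega
  subst this
  simpa using h

lemma relPow_mono {R S : Set (X × X)} (h : R ⊆ S) (l : ℕ) : RelPow R l ⊆ RelPow S l := by
  rintro ⟨u, v⟩ ⟨f, h0, hl, he⟩
  exact ⟨f, h0, hl, fun i hi => h (he i hi)⟩

lemma relPow_trans {R : Set (X × X)} {u v w : X} {k m : ℕ}
    (h1 : (u, v) ∈ RelPow R k) (h2 : (v, w) ∈ RelPow R m) : (u, w) ∈ RelPow R (k + m) := by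
  classical
  obtain ⟨f, f0, fk, fe⟩ := h1
  obtain ⟨g, g0, gm, ge⟩ := h2
  have f0' : f 0 = u := f0
  have fk' : f k = v := fk
  have g0' : g 0 = v := g0
  have gm' : g m = w := gm
  refine ⟨fun i => if i ≤ k then f i else g (i - k), by simp [f0'], ?_, ?_⟩
  · by_cases hm : k + m ≤ k
    · have hm0 : m = 0 := by omega
      subst hm0
      show (if k + 0 ≤ k then f (k + 0) else g (k + 0 - k)) = w
      rw [if_pos (by omega), show k + 0 = k from by omega, fk', ← g0', gm']
    · show (if k + m ≤ k then f (k + m) else g (k + m - k)) = w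
      rw [if_neg hm, show k + m - k = m from by omega]
      exact gm'
  · intro i hi
    show ((if i ≤ k then f i else g (i - k)), (if i + 1 ≤ k then f (i + 1) else g (i + 1 - k))) ∈ R
    by_cases hi1 : i + 1 ≤ k
    · rw [if_pos (by omega : i ≤ k), if_pos hi1]
      exact fe i (by omega)
    · by_cases hik : i ≤ k
      · have hik' : i = k := by omega
        subst hik'
        rw [if_pos le_rfl, if_neg hi1, show i + 1 - i = 1 from by omega, fk', ← g0']
        exact ge 0 (by omega)
      · rw [if_neg hik, if_neg hi1, show i + 1 - k = (i - k) + 1 from by omega]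
        exact ge (i - k) (by omega)

lemma relPow_symm {R : Set (X × X)} (hR : ∀ a b, (a, b) ∈ R → (b, a) ∈ R) {u v : X} {l : ℕ}
    (h : (u, v) ∈ RelPow R l) : (v, u) ∈ RelPow R l := by
  obtain ⟨f, f0, fl, fe⟩ := h
  have fl' : f l = v := fl
  have f0' : f 0 = u := f0
  refine ⟨fun i => f (l - i), by simp [fl'], by simp [f0'], ?_⟩
  intro i hi
  show (f (l - i), f (l - (i + 1))) ∈ R
  rw [show l - i = (l - (i + 1)) + 1 from by omega]
  exact hR _ _ (fe _ (by omega))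

lemma exists_two_coloring {R : Set (X × X)} (hsym : ∀ a b, (a, b) ∈ R → (b, a) ∈ R)
    (h : ¬ HasOddClosedWalk R) :
    ∃ c : X → Fin 2, ∀ u v, (u, v) ∈ R → c u ≠ c v := by
  classical
  let W : X → X → Prop := fun u v => ∃ l, (u, v) ∈ RelPow R l
  have Wrefl : ∀ u, W u u := fun u => ⟨0, (relPow_zero R u u).2 rfl⟩
  have Wsymm : ∀ {u v}, W u v → W v u := by
    rintro u v ⟨l, hl⟩
    exact ⟨l, relPow_symm hsym hl⟩
  have Wtrans : ∀ {u v w}, W u v → W v w → W u w := by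
    rintro u v w ⟨k, h1⟩ ⟨m, h2⟩
    exact ⟨k + m, relPow_trans h1 h2⟩
  let s : Setoid X := ⟨W, Wrefl, Wsymm, Wtrans⟩
  let rep : X → X := fun v => (Quotient.mk s v).out
  have hrep : ∀ v, W (rep v) v := fun v => Quotient.exact (Quotient.out_eq (Quotient.mk s v))
  have hrepeq : ∀ {u v}, W u v → rep u = rep v := by
    intro u v huv
    show (Quotient.mk s u).out = (Quotient.mk s v).out
    rw [Quotient.sound (a := u) (b := v) huv]
  refine ⟨fun v => if ∃ l, Odd l ∧ (rep v, v) ∈ RelPow R l then 1 else 0, ?_⟩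
  intro u v huv hc
  replace hc : (if ∃ l, Odd l ∧ (rep u, u) ∈ RelPow R l then (1 : Fin 2) else 0) =
      (if ∃ l, Odd l ∧ (rep v, v) ∈ RelPow R l then (1 : Fin 2) else 0) := hc
  have hW : W u v := ⟨1, relPow_single huv⟩
  have hru : rep u = rep v := hrepeq hW
  by_cases h1 : ∃ l, Odd l ∧ (rep u, u) ∈ RelPow R l
  · have h2 : ∃ l, Odd l ∧ (rep v, v) ∈ RelPow R l := by
      by_contra h2
      rw [if_pos h1, if_neg h2] at hc
      exact absurd hc (by decide)
    obtain ⟨l1, hl1, hw1⟩ := h1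
    obtain ⟨l2, hl2, hw2⟩ := h2
    have w1 : (v, rep u) ∈ RelPow R l2 := by
      rw [hru]; exact relPow_symm hsym hw2
    have w2 : (v, u) ∈ RelPow R (l2 + l1) := relPow_trans w1 hw1
    have w3 : (v, v) ∈ RelPow R (l2 + l1 + 1) := relPow_trans w2 (relPow_single huv)
    obtain ⟨a, ha⟩ := hl1
    obtain ⟨b, hb⟩ := hl2
    obtain ⟨p, hp⟩ : ∃ p, l2 + l1 + 1 = 2 * p + 1 := ⟨a + b + 1, by omega⟩
    obtain ⟨f, f0, fl, fe⟩ := w3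
    refine h ⟨p, f, ?_, ?_⟩
    · rw [f0, ← hp, fl]
    · intro i hi
      exact fe i (by omega)
  · have h2 : ¬ ∃ l, Odd l ∧ (rep v, v) ∈ RelPow R l := by
      intro h2
      rw [if_neg h1, if_pos h2] at hc
      exact absurd hc (by decide)
    obtain ⟨l, hwl⟩ := hrep u
    have hev : Even l := by
      rcases Nat.even_or_odd l with he | ho
      · exact he
      · exact absurd ⟨l, ho, hwl⟩ h1
    obtain ⟨a, ha⟩ := hev
    refine h2 ⟨l + 1, ⟨a, by omega⟩, ?_⟩
    rw [← hru]
    exact relPow_trans hwl (relPow_single huv)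

lemma no_oddWalk_of_coloring {R : Set (X × X)} {c : X → Fin 2}
    (hc : ∀ u v, (u, v) ∈ R → c u ≠ c v) : ¬ HasOddClosedWalk R := by
  rintro ⟨p, w, hw0, hwe⟩
  have key : ∀ a b z : Fin 2, a ≠ z → b ≠ a → b = z := by decide
  have main : ∀ i, i ≤ 2 * p + 1 →
      (Even i → c (w i) = c (w 0)) ∧ (¬ Even i → c (w i) ≠ c (w 0)) := by
    intro i
    induction i with
    | zero => exact fun _ => ⟨fun _ => rfl, fun h => absurd Even.zero h⟩
    | succ i ih =>
      intro hle
      have hi := ih (by omega)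
      have hedge := hc _ _ (hwe i (by omega))
      constructor
      · intro hev
        have hodd : ¬ Even i := Nat.even_add_one.mp hev
        exact key (c (w i)) (c (w (i + 1))) (c (w 0)) (hi.2 hodd) hedge.symm
      · intro hnev
        have hev : Even i := by
          rcases Nat.even_or_odd i with h | h
          · exact h
          · exact absurd h.add_one hnev
        have h0 : c (w i) = c (w 0) := hi.1 hev
        intro hq
        exact hedge (by rw [h0, hq])
  have hodd : ¬ Even (2 * p + 1) := Nat.not_even_iff_odd.mpr ⟨p, rfl⟩
  exact (main _ le_rfl).2 hodd (by rw [← hw0])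

end AuxWalk

section AuxCantor

variable {d : ℕ → ℕ}

/-- restriction to the first `n` coordinates -/
def resF (d : ℕ → ℕ) (n : ℕ) : (∀ j, Fin (d j)) → (∀ j : Fin n, Fin (d j)) :=
  fun α j => α j

/-- extension by zeros -/
noncomputable def extF (d : ℕ → ℕ) (hd : ∀ j, 2 ≤ d j) (n : ℕ) :
    (∀ j : Fin n, Fin (d j)) → (∀ j, Fin (d j)) :=
  fun s j => if h : j < n then s ⟨j, h⟩ else ⟨0, by have := hd j; omega⟩

lemma res_ext (hd : ∀ j, 2 ≤ d j) (n : ℕ) (s : ∀ j : Fin n, Fin (d j)) :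
    resF d n (extF d hd n s) = s := by
  funext j
  simp [resF, extF, j.isLt]

lemma resF_continuous (n : ℕ) : Continuous (resF d n) :=
  continuous_pi fun _ => continuous_apply _

lemma napprox_iff (G : Set ((∀ j, Fin (d j)) × (∀ j, Fin (d j)))) (n : ℕ)
    (α β : ∀ j, Fin (d j)) :
    (α, β) ∈ NApprox G n ↔ (resF d n α, resF d n β) ∈ FinApprox G n := by
  constructor
  · rintro ⟨q, hq, h1, h2⟩
    exact ⟨q, hq, fun j => (h1 j j.2).symm, fun j => (h2 j j.2).symm⟩
  · rintro ⟨q, hq, h1, h2⟩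
    exact ⟨q, hq, fun j hj => (h1 ⟨j, hj⟩).symm, fun j hj => (h2 ⟨j, hj⟩).symm⟩

lemma relPow_napprox_proj {G : Set ((∀ j, Fin (d j)) × (∀ j, Fin (d j)))} {n l : ℕ}
    {α β : ∀ j, Fin (d j)} (h : (α, β) ∈ RelPow (NApprox G n) l) :
    (resF d n α, resF d n β) ∈ RelPow (FinApprox G n) l := by
  obtain ⟨f, f0, fl, fe⟩ := h
  exact ⟨fun i => resF d n (f i), congrArg (resF d n) f0, congrArg (resF d n) fl,
    fun i hi => (napprox_iff G n _ _).1 (fe i hi)⟩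

lemma relPow_napprox_lift (hd : ∀ j, 2 ≤ d j)
    {G : Set ((∀ j, Fin (d j)) × (∀ j, Fin (d j)))} {n l : ℕ}
    {s : ∀ j : Fin n, Fin (d j)} (h : (s, s) ∈ RelPow (FinApprox G n) l)
    {α : ∀ j, Fin (d j)} (hα : resF d n α = s) :
    (α, α) ∈ RelPow (NApprox G n) l := by
  classical
  obtain ⟨g, g0, gl, ge⟩ := h
  have key : ∀ m, resF d n (if m = 0 then α else if m = l then α else extF d hd n (g m)) = g m := by
    intro m
    by_cases h0 : m = 0
    · subst h0
      rw [if_pos rfl, hα, g0]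
    · by_cases hl : m = l
      · subst hl
        rw [if_neg h0, if_pos rfl, hα, gl]
      · rw [if_neg h0, if_neg hl, res_ext]
  refine ⟨fun i => if i = 0 then α else if i = l then α else extF d hd n (g i), by simp, ?_, ?_⟩
  · by_cases h0 : l = 0 <;> simp [h0]
  · intro i hi
    exact (napprox_iff G n _ _).2 (by rw [key, key]; exact ge i hi)

lemma exists_factoring {c : (∀ j, Fin (d j)) → Fin 2} (hc : Continuous c) :
    ∃ n, ∀ α β : ∀ j, Fin (d j), (∀ j < n, α j = β j) → c α = c β := by
  classical
  have step : ∀ α : ∀ j, Fin (d j), ∃ n, ∀ β, (∀ j < n, β j = α j) → c β = c α := by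
    intro α
    have hopen : IsOpen (c ⁻¹' {c α}) := (isOpen_discrete _).preimage hc
    obtain ⟨S, hS, hαS, hSsub⟩ :=
      (isTopologicalBasis_pi fun _ : ℕ => isTopologicalBasis_opens).exists_subset_of_mem_open
        (show α ∈ c ⁻¹' {c α} from rfl) hopen
    obtain ⟨U, F, -, rfl⟩ := hS
    refine ⟨(F.sup id) + 1, fun β hβ => hSsub ?_⟩
    rw [Set.mem_pi]
    intro j hj
    have hjF : j ∈ F := hj
    rw [hβ j (Nat.lt_succ_of_le (Finset.le_sup (f := id) hjF))]
    exact hαS j hj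
  choose nn hn using step
  obtain ⟨t, ht⟩ := isCompact_univ.elim_finite_subcover
      (fun α : ∀ j, Fin (d j) => {β : ∀ j, Fin (d j) | ∀ j < nn α, β j = α j})
      (fun α => by
        show IsOpen {β : ∀ j, Fin (d j) | ∀ j < nn α, β j = α j}
        have heq : {β : ∀ j, Fin (d j) | ∀ j < nn α, β j = α j} =
            ⋂ j : Fin (nn α), {β : ∀ j, Fin (d j) | β (j : ℕ) = α j} := by
          ext β
          simp only [Set.mem_iInter, Set.mem_setOf_eq]
          exact ⟨fun h j => h j j.2, fun h j hj => h ⟨j, hj⟩⟩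
        rw [heq]
        exact isOpen_iInter_of_finite fun j => by
          show IsOpen ((fun β : ∀ k, Fin (d k) => β (j : ℕ)) ⁻¹' {α (j : ℕ)})
          exact (isOpen_discrete _).preimage (continuous_apply (j : ℕ)))
      (fun α _ => Set.mem_iUnion.2 ⟨α, fun j hj => rfl⟩)
  refine ⟨t.sup nn, fun α β hab => ?_⟩
  obtain ⟨γ, hγt, hγ⟩ := Set.mem_iUnion₂.1 (ht (Set.mem_univ α))
  have hβ : ∀ j < nn γ, β j = γ j := fun j hj => by
    rw [← hab j (lt_of_lt_of_le hj (Finset.le_sup hγt))]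
    exact hγ j hj
  rw [hn γ α hγ, hn γ β hβ]

end AuxCantor

theorem stmt0 (d : ℕ → ℕ) (hd : ∀ j, 2 ≤ d j)
    (G : Set ((∀ j, Fin (d j)) × (∀ j, Fin (d j)))) (hG : IsGraph G) :
    (¬ HasContColoring G 2 ↔
        ∃ α : ∀ j, Fin (d j), ∀ n : ℕ, ∃ p : ℕ,
          (α, α) ∈ RelPow (NApprox G n) (2 * p + 1)) ∧
    (¬ HasContColoring G 2 ↔
        ∀ n : ℕ, HasOddClosedWalk (FinApprox G n)) := by
  classical
  have imp31 : (∀ n, HasOddClosedWalk (FinApprox G n)) → ¬ HasContColoring G 2 := by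
    rintro h3 ⟨c, hc, hcp⟩
    obtain ⟨n, hn⟩ := exists_factoring hc
    have hcn : ∀ s t, (s, t) ∈ FinApprox G n →
        c (extF d hd n s) ≠ c (extF d hd n t) := by
      rintro s t ⟨q, hq, h1, h2⟩ heq
      have e1 : c (extF d hd n s) = c q.1 := hn _ _ (fun j hj => by
        show extF d hd n s j = q.1 j
        rw [extF, dif_pos hj]
        exact (h1 ⟨j, hj⟩).symm)
      have e2 : c (extF d hd n t) = c q.2 := hn _ _ (fun j hj => by
        show extF d hd n t j = q.2 j
        rw [extF, dif_pos hj]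
        exact (h2 ⟨j, hj⟩).symm)
      exact hcp q.1 q.2 hq (by rw [← e1, ← e2, heq])
    exact no_oddWalk_of_coloring hcn (h3 n)
  have imp13 : ¬ HasContColoring G 2 → ∀ n, HasOddClosedWalk (FinApprox G n) := by
    intro h1 n
    by_contra hwalk
    apply h1
    have hsym : ∀ s t, (s, t) ∈ FinApprox G n → (t, s) ∈ FinApprox G n := by
      rintro s t ⟨q, hq, ha, hb⟩
      exact ⟨(q.2, q.1), hG.1 _ _ hq, hb, ha⟩
    obtain ⟨c', hc'⟩ := exists_two_coloring hsym hwalk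
    refine ⟨fun α => c' (resF d n α), ?_, ?_⟩
    · exact Continuous.comp continuous_of_discreteTopology (resF_continuous n)
    · intro x y hxy
      exact hc' _ _ ⟨(x, y), hxy, fun j => rfl, fun j => rfl⟩
  have imp23 : (∃ α : ∀ j, Fin (d j), ∀ n, ∃ p,
      (α, α) ∈ RelPow (NApprox G n) (2 * p + 1)) →
      ∀ n, HasOddClosedWalk (FinApprox G n) := by
    rintro ⟨α, hα⟩ n
    obtain ⟨p, hp⟩ := hα n
    obtain ⟨f, f0, fl, fe⟩ := relPow_napprox_proj hp
    exact ⟨p, f, by rw [f0, fl], fe⟩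
  have imp32 : (∀ n, HasOddClosedWalk (FinApprox G n)) →
      ∃ α : ∀ j, Fin (d j), ∀ n, ∃ p,
        (α, α) ∈ RelPow (NApprox G n) (2 * p + 1) := by
    intro h3
    set A : ℕ → Set (∀ j, Fin (d j)) :=
      fun n => {α | ∃ p, (α, α) ∈ RelPow (NApprox G n) (2 * p + 1)} with hA
    have hsub : ∀ n, A (n + 1) ⊆ A n := by
      rintro n α ⟨p, hp⟩
      refine ⟨p, relPow_mono ?_ _ hp⟩
      rintro q ⟨r, hr, ha, hb⟩
      exact ⟨r, hr, fun j hj => ha j (by omega), fun j hj => hb j (by omega)⟩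
    have hnon : ∀ n, (A n).Nonempty := by
      intro n
      obtain ⟨p, w, hw0, hwe⟩ := h3 n
      exact ⟨extF d hd n (w 0), p,
        relPow_napprox_lift hd ⟨w, rfl, hw0.symm, hwe⟩ (res_ext hd n (w 0))⟩
    have hAeq : ∀ n, A n = (resF d n) ⁻¹'
        {s | ∃ p, (s, s) ∈ RelPow (FinApprox G n) (2 * p + 1)} := by
      intro n
      ext α
      constructor
      · rintro ⟨p, hp⟩
        exact ⟨p, relPow_napprox_proj hp⟩
      · rintro ⟨p, hp⟩
        exact ⟨p, relPow_napprox_lift hd hp rfl⟩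
    have hcl : ∀ n, IsClosed (A n) := by
      intro n
      rw [hAeq]
      exact (isClosed_discrete _).preimage (resF_continuous n)
    obtain ⟨α, hα⟩ := IsCompact.nonempty_iInter_of_sequence_nonempty_isCompact_isClosed
      A hsub hnon ((hcl 0).isCompact) hcl
    exact ⟨α, fun n => Set.mem_iInter.1 hα n⟩
  exact ⟨⟨fun h1 => imp32 (imp13 h1), fun h2 => imp31 (imp23 h2)⟩, ⟨imp13, imp31⟩⟩
end

section
/- There is a family ((K_α,H_α))_{α∈2^ℕ}, where each K_α is a compact subset of 2^ℕ and each H_α is a countable graph on K_α with no continuous 2-coloring, such that for every zero-dimensional metrizable compact space X and every graph G on X exactly one of the following holds: (1) (X,G) admits a continuous 2-coloring; (2) there are α ∈ 2^ℕ and an injective continuous map φ : K_α → X with H_α ⊆ (φ×φ)⁻¹(G). In other words, ((K_α,H_α))_{α∈2^ℕ} is a ≼^i_c-basis for the class of graphs on zero-dimensional metrizable compact spaces with continuous chromatic number at least three. -/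
open TopologicalSpace

section Aux
open Set

lemma clopen_sep {X : Type*} [TopologicalSpace X]
    (h0 : IsTopologicalBasis {s : Set X | IsClopen s}) {A B : Set X}
    (hA : IsCompact A) (hB : IsClosed B) (hAB : Disjoint A B) :
    ∃ C : Set X, IsClopen C ∧ A ⊆ C ∧ Disjoint C B := by
  have key : ∀ a : A, ∃ C : Set X, IsClopen C ∧ (a : X) ∈ C ∧ C ⊆ Bᶜ := by
    rintro ⟨a, ha⟩
    obtain ⟨v, hv, hav, hvB⟩ := h0.exists_subset_of_mem_open
      (show a ∈ Bᶜ from fun h => hAB.ne_of_mem ha h rfl) hB.isOpen_compl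
    exact ⟨v, hv, hav, hvB⟩
  choose U hU haU hUB using key
  have hcov : A ⊆ ⋃ a : A, U a := fun x hx => mem_iUnion.2 ⟨⟨x, hx⟩, haU ⟨x, hx⟩⟩
  obtain ⟨t, ht⟩ := hA.elim_finite_subcover U (fun a => (hU a).2) hcov
  refine ⟨⋃ a ∈ t, U a, ?_, ht, ?_⟩
  · exact isClopen_biUnion_finset fun a _ => hU a
  · refine Set.disjoint_left.2 ?_
    rintro x hx hxB
    obtain ⟨a, -, hxa⟩ := mem_iUnion₂.1 hx
    exact hUB a hxa hxB

lemma countable_clopens (X : Type*) [TopologicalSpace X] [SecondCountableTopology X]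
    [CompactSpace X] : {s : Set X | IsClopen s}.Countable := by
  classical
  obtain ⟨b, hbc, -, hb⟩ := exists_countable_basis X
  haveI : Countable ↥b := hbc.to_subtype
  apply Set.Countable.mono ?_ (Set.countable_range (fun t : Finset ↥b => ⋃ v ∈ t, (v : Set X)))
  rintro s (hs : IsClopen s)
  have hcomp : IsCompact s := hs.isClosed.isCompact
  have hcov : s ⊆ ⋃ v : {v : Set X // v ∈ b ∧ v ⊆ s}, (v : Set X) := by
    intro x hx
    obtain ⟨v, hv, hxv, hvs⟩ := hb.exists_subset_of_mem_open hx hs.isOpen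
    exact mem_iUnion.2 ⟨⟨v, hv, hvs⟩, hxv⟩
  obtain ⟨t, ht⟩ := hcomp.elim_finite_subcover _ (fun v => hb.isOpen v.2.1) hcov
  refine ⟨t.image (fun v => (⟨v.1, v.2.1⟩ : ↥b)), ?_⟩
  have : ⋃ v ∈ t.image (fun v : {v : Set X // v ∈ b ∧ v ⊆ s} => (⟨v.1, v.2.1⟩ : ↥b)),
      (v : Set X) = ⋃ v ∈ t, (v : Set X) := by
    rw [Finset.set_biUnion_finset_image]
  show ⋃ v ∈ t.image (fun v : {v : Set X // v ∈ b ∧ v ⊆ s} => (⟨v.1, v.2.1⟩ : ↥b)), (v : Set X) = s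
  rw [this]
  apply Set.Subset.antisymm
  · exact Set.iUnion₂_subset fun v _ => v.2.2
  · exact ht

lemma exists_depth (c : (ℕ → Bool) → Fin 2) (hc : Continuous c) :
    ∃ n : ℕ, ∀ x y : ℕ → Bool, (∀ i < n, x i = y i) → c x = c y := by
  classical
  have loc : ∀ x : ℕ → Bool, ∃ n : ℕ, ∀ y, (∀ i < n, y i = x i) → c y = c x := by
    intro x
    have hopen : IsOpen (c ⁻¹' {c x}) := (isOpen_discrete _).preimage hc
    obtain ⟨I, u, hIu, hsub⟩ := isOpen_pi_iff.1 hopen x rfl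
    refine ⟨(I.sup id) + 1, fun y hy => ?_⟩
    have : y ∈ (I : Set ℕ).pi u := by
      intro i hi
      have : y i = x i := hy i (Nat.lt_succ_of_le (Finset.le_sup (f := id) hi))
      rw [this]; exact (hIu i hi).2
    exact hsub this
  choose n hn using loc
  have hcov : (univ : Set (ℕ → Bool)) ⊆ ⋃ x, {y | ∀ i < n x, y i = x i} := by
    intro x _
    exact mem_iUnion.2 ⟨x, fun i _ => rfl⟩
  have hopen : ∀ x : ℕ → Bool, IsOpen {y : ℕ → Bool | ∀ i < n x, y i = x i} := by
    intro x
    have : {y : ℕ → Bool | ∀ i < n x, y i = x i}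
        = ⋂ i ∈ Finset.range (n x), (fun y : ℕ → Bool => y i) ⁻¹' {x i} := by
      ext y; simp [Finset.mem_range]
    rw [this]
    exact isOpen_biInter_finset fun i _ =>
      (isOpen_discrete _).preimage (continuous_apply i)
  obtain ⟨t, ht⟩ := isCompact_univ.elim_finite_subcover _ hopen hcov
  refine ⟨(t.sup n) + 1, fun x y hxy => ?_⟩
  obtain ⟨z, hzt, hxz⟩ := mem_iUnion₂.1 (ht (mem_univ x))
  have hnz : n z ≤ t.sup n := Finset.le_sup hzt
  have hyz : ∀ i < n z, y i = z i := fun i hi => by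
    rw [← hxy i (lt_of_lt_of_le hi (Nat.lt_succ_of_le hnz).le)]; exact hxz i hi
  rw [hn z x hxz, hn z y hyz]

def H0 : Set ((ℕ → Bool) × (ℕ → Bool)) :=
  {e | ∃ n : ℕ, (∀ i < n, e.1 i = e.2 i) ∧ e.1 n ≠ e.2 n ∧
      ∀ i, n < i → e.1 i = false ∧ e.2 i = false}

def H0' : Set (↥(univ : Set (ℕ → Bool)) × ↥(univ : Set (ℕ → Bool))) :=
  {e | ((e.1 : ℕ → Bool), (e.2 : ℕ → Bool)) ∈ H0}

lemma H0_countable : H0.Countable := by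
  classical
  have : H0 ⊆ Set.range (fun p : (Σ n : ℕ, Fin n → Bool) × Bool =>
      ((fun i => if h : i < p.1.1 then p.1.2 ⟨i, h⟩ else if i = p.1.1 then p.2 else false,
        fun i => if h : i < p.1.1 then p.1.2 ⟨i, h⟩ else if i = p.1.1 then !p.2 else false) :
        (ℕ → Bool) × (ℕ → Bool))) := by
    rintro ⟨x, y⟩ ⟨n, hlt, hne, hgt⟩
    refine ⟨⟨⟨n, fun i => x i⟩, x n⟩, ?_⟩
    have hyn : y n = !(x n) := by
      cases hx : x n <;> cases hy : y n <;> simp_all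
    simp only [Prod.mk.injEq]
    constructor <;> funext i <;> rcases lt_trichotomy i n with h | h | h
    · simp [h]
    · subst h; simp
    · simp only [dif_neg (not_lt.2 h.le), if_neg h.ne']
      exact ((hgt i h).1).symm
    · simp only [dif_pos h]; exact hlt i h
    · subst h; simp [hyn]
    · simp only [dif_neg (not_lt.2 h.le), if_neg h.ne']
      exact ((hgt i h).2).symm
  exact Set.Countable.mono this (Set.countable_range _)

lemma H0'_countable : H0'.Countable := by
  have : H0' ⊆ (fun e : (ℕ → Bool) × (ℕ → Bool) =>
      ((⟨e.1, mem_univ _⟩, ⟨e.2, mem_univ _⟩) :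
        ↥(univ : Set (ℕ → Bool)) × ↥(univ : Set (ℕ → Bool)))) '' H0 := by
    rintro ⟨⟨x, hx⟩, ⟨y, hy⟩⟩ he
    exact ⟨(x, y), he, rfl⟩
  exact Set.Countable.mono this (H0_countable.image _)

lemma H0'_graph : IsGraph H0' := by
  constructor
  · rintro x y ⟨n, hlt, hne, hgt⟩
    exact ⟨n, fun i hi => (hlt i hi).symm, hne.symm, fun i hi => ⟨(hgt i hi).2, (hgt i hi).1⟩⟩
  · rintro x ⟨n, -, hne, -⟩
    exact hne rfl

lemma H0'_no2col : ¬ HasContColoring H0' 2 := by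
  rintro ⟨c, hc, hcol⟩
  set c' : (ℕ → Bool) → Fin 2 := fun y => c ⟨y, mem_univ y⟩ with hc'
  have hc'c : Continuous c' := hc.comp (Continuous.subtype_mk continuous_id _)
  obtain ⟨n, hn⟩ := exists_depth c' hc'c
  set x : ℕ → Bool := fun _ => false with hx
  set y : ℕ → Bool := fun i => decide (i = n) with hy
  have hedge : ((⟨x, mem_univ x⟩, ⟨y, mem_univ y⟩) :
      ↥(univ : Set (ℕ → Bool)) × ↥(univ : Set (ℕ → Bool))) ∈ H0' := by
    refine ⟨n, fun i hi => ?_, by simp [hx, hy], fun i hi => ?_⟩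
    · simp [hx, hy, hi.ne]
    · simp [hx, hy, hi.ne']
  exact hcol _ _ hedge (hn x y (fun i hi => by simp [hx, hy, hi.ne]))

open Cardinal in
lemma mk_cantor : #(ℕ → Bool) = 2 ^ aleph0 := by
  rw [← Cardinal.power_def, Cardinal.mk_bool, Cardinal.mk_nat]

open Cardinal in
lemma card_codomain :
    #(Set ℕ × (ℕ → Option ((ℕ → Bool) × (ℕ → Bool)))) ≤ #(ℕ → Bool) := by
  have hopt : #(Option ((ℕ → Bool) × (ℕ → Bool))) = 2 ^ aleph0 := by
    rw [Cardinal.mk_option, Cardinal.mk_prod, mk_cantor, Cardinal.lift_id,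
      ← Cardinal.power_add, Cardinal.aleph0_add_aleph0]
    exact Cardinal.add_one_eq (Cardinal.cantor aleph0).le
  have harr : #(ℕ → Option ((ℕ → Bool) × (ℕ → Bool))) = 2 ^ aleph0 := by
    rw [← Cardinal.power_def, hopt, Cardinal.mk_nat, ← Cardinal.power_mul,
      Cardinal.aleph0_mul_aleph0]
  rw [Cardinal.mk_prod, harr, Cardinal.mk_set, Cardinal.mk_nat, Cardinal.lift_id,
    ← Cardinal.power_add, Cardinal.aleph0_add_aleph0, mk_cantor]

lemma main_construction {X : Type*} [TopologicalSpace X] (hX : Is0DMC X) (G : Set (X × X))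
    (hG : IsGraph G) (hnc : ¬ HasContColoring G 2) :
    ∃ (K : Set (ℕ → Bool)) (H : Set (↥K × ↥K)), IsCompact K ∧ H.Countable ∧ IsGraph H ∧
      ¬ HasContColoring H 2 ∧ RedIC H G := by
  classical
  obtain ⟨hcomp, hmet, hzd⟩ := hX
  haveI := hcomp; haveI := hmet
  haveI : SecondCountableTopology X := by
    letI := metrizableSpaceMetric X; infer_instance
  -- choose a monochromatic edge for every clopen set
  have key : ∀ s : {s : Set X // IsClopen s}, ∃ e : X × X, e ∈ G ∧
      ((e.1 ∈ s.1 ∧ e.2 ∈ s.1) ∨ (e.1 ∉ s.1 ∧ e.2 ∉ s.1)) := by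
    intro s
    by_contra h
    push_neg at h
    apply hnc
    refine ⟨fun x => if x ∈ s.1 then 0 else 1, ?_, ?_⟩
    · apply IsLocallyConstant.continuous
      intro t
      have : (fun x => if x ∈ s.1 then (0 : Fin 2) else 1) ⁻¹' t =
          (if (0 : Fin 2) ∈ t then s.1 else ∅) ∪ (if (1 : Fin 2) ∈ t then s.1ᶜ else ∅) := by
        ext x
        by_cases hx : x ∈ s.1 <;> by_cases h0 : (0 : Fin 2) ∈ t <;>
          by_cases h1 : (1 : Fin 2) ∈ t <;> simp [hx, h0, h1]
      rw [this]
      refine IsOpen.union ?_ ?_ <;> split_ifs <;>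
        first | exact s.2.isOpen | exact s.2.compl.isOpen | exact isOpen_empty
    · intro x y hxy
      have := h (x, y) hxy
      by_cases hx : x ∈ s.1 <;> by_cases hy : y ∈ s.1 <;> simp [hx, hy] at this ⊢
  choose ed hedG hedm using key
  haveI hctidx : Countable {s : Set X // IsClopen s} := (countable_clopens X).to_subtype
  set V : Set X := (Set.range fun s => (ed s).1) ∪ (Set.range fun s => (ed s).2) with hV
  set K₀ : Set X := closure V with hK₀
  have hK₀c : IsCompact K₀ := isClosed_closure.isCompact
  haveI : CompactSpace ↥K₀ := isCompact_iff_compactSpace.1 hK₀c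
  have hmem1 : ∀ s, (ed s).1 ∈ K₀ := fun s =>
    subset_closure (Or.inl (mem_range_self s))
  have hmem2 : ∀ s, (ed s).2 ∈ K₀ := fun s =>
    subset_closure (Or.inr (mem_range_self s))
  set E : Set (↥K₀ × ↥K₀) :=
    {q | (∃ s, ed s = ((q.1 : X), (q.2 : X))) ∨ (∃ s, ed s = ((q.2 : X), (q.1 : X)))} with hE
  have hEc : E.Countable := by
    have hsub : E ⊆ (Set.range fun s => ((⟨(ed s).1, hmem1 s⟩ : ↥K₀), (⟨(ed s).2, hmem2 s⟩ : ↥K₀)))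
        ∪ (Set.range fun s => ((⟨(ed s).2, hmem2 s⟩ : ↥K₀), (⟨(ed s).1, hmem1 s⟩ : ↥K₀))) := by
      rintro ⟨u, v⟩ (⟨s, hs⟩ | ⟨s, hs⟩)
      · exact Or.inl ⟨s, by ext <;> simp [hs]⟩
      · exact Or.inr ⟨s, by ext <;> simp [hs]⟩
    exact Set.Countable.mono hsub ((Set.countable_range _).union (Set.countable_range _))
  have hEG : ∀ u v : ↥K₀, (u, v) ∈ E → ((u : X), (v : X)) ∈ G := by
    rintro u v (⟨s, hs⟩ | ⟨s, hs⟩)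
    · have := hedG s; rw [hs] at this; exact this
    · have := hedG s; rw [hs] at this; exact hG.1 _ _ this
  have hEg : IsGraph E := by
    constructor
    · rintro u v (h | h)
      · exact Or.inr h
      · exact Or.inl h
    · rintro u hu
      exact hG.2 (u : X) (hEG u u hu)
  have hEnc : ¬ HasContColoring E 2 := by
    rintro ⟨c, hc, hcol⟩
    set C' : Set ↥K₀ := c ⁻¹' {0} with hC'def
    have hC' : IsClopen C' := (isClopen_discrete _).preimage hc
    set A : Set X := Subtype.val '' C' with hA
    set B : Set X := Subtype.val '' C'ᶜ with hB
    have hAcomp : IsCompact A := (hC'.isClosed.isCompact).image continuous_subtype_val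
    have hBcomp : IsCompact B := (hC'.compl.isClosed.isCompact).image continuous_subtype_val
    have hdisj : Disjoint A B :=
      (Set.disjoint_image_iff Subtype.val_injective).2 disjoint_compl_right
    obtain ⟨C, hCcl, hAC, hCB⟩ := clopen_sep hzd hAcomp hBcomp.isClosed hdisj
    set s : {s : Set X // IsClopen s} := ⟨C, hCcl⟩ with hs
    set u : ↥K₀ := ⟨(ed s).1, hmem1 s⟩ with hu
    set v : ↥K₀ := ⟨(ed s).2, hmem2 s⟩ with hv
    have hedge : (u, v) ∈ E := Or.inl ⟨s, rfl⟩
    have memA : ∀ w : ↥K₀, (w : X) ∈ C → w ∈ C' := by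
      intro w hw
      by_contra hwc
      exact Set.disjoint_left.1 hCB hw ⟨w, hwc, rfl⟩
    have memB : ∀ w : ↥K₀, (w : X) ∉ C → w ∉ C' := by
      intro w hw hwc
      exact hw (hAC ⟨w, hwc, rfl⟩)
    rcases hedm s with ⟨h1, h2⟩ | ⟨h1, h2⟩
    · exact hcol u v hedge (by rw [show c u = 0 from memA u h1, show c v = 0 from memA v h2])
    · have hu1 : c u = 1 := by
        have := memB u h1
        have h' : c u ≠ 0 := fun h => this (by simpa [hC'def] using h)
        omega
      have hv1 : c v = 1 := by
        have := memB v h2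
        have h' : c v ≠ 0 := fun h => this (by simpa [hC'def] using h)
        omega
      exact hcol u v hedge (by rw [hu1, hv1])
  -- embed K₀ into Cantor space
  obtain ⟨f, hf⟩ := (countable_clopens X).exists_eq_range ⟨univ, isClopen_univ⟩
  have hfcl : ∀ n, IsClopen (f n) := by
    intro n
    have : f n ∈ {s : Set X | IsClopen s} := hf ▸ mem_range_self n
    exact this
  set ψ : ↥K₀ → (ℕ → Bool) := fun w n => (f n).boolIndicator (w : X) with hψ
  have hψc : Continuous ψ := by
    apply continuous_pi
    intro n
    exact ((continuous_boolIndicator_iff_isClopen _).2 (hfcl n)).comp continuous_subtype_val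
  have hψi : Function.Injective ψ := by
    intro a b hab
    by_contra hne
    have hvne : (a : X) ≠ (b : X) := fun h => hne (Subtype.ext h)
    obtain ⟨w, hw, haw, hwb⟩ := hzd.exists_subset_of_mem_open
      (show (a : X) ∈ ({(b : X)}ᶜ : Set X) from hvne) isOpen_compl_singleton
    have : w ∈ range f := hf ▸ hw
    obtain ⟨m, rfl⟩ := this
    have h1 : ψ a m = true := ((f m).mem_iff_boolIndicator _).1 haw
    have h2 : ψ b m = false := ((f m).notMem_iff_boolIndicator _).1
      (fun hbm => hwb hbm rfl)
    rw [hab] at h1; rw [h1] at h2; exact Bool.noConfusion h2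
  set K : Set (ℕ → Bool) := Set.range ψ with hK
  have hKcomp : IsCompact K := isCompact_range hψc
  set ψ' : ↥K₀ → ↥K := fun w => ⟨ψ w, mem_range_self w⟩ with hψ'
  have hψ'c : Continuous ψ' := hψc.subtype_mk _
  have hψ'i : Function.Injective ψ' := fun a b h => hψi (congrArg Subtype.val h)
  have hψ's : Function.Surjective ψ' := by
    rintro ⟨z, w, rfl⟩
    exact ⟨w, rfl⟩
  set H : Set (↥K × ↥K) := (Prod.map ψ' ψ') '' E with hH
  refine ⟨K, H, hKcomp, hEc.image _, ?_, ?_, ?_⟩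
  · constructor
    · rintro x y ⟨⟨a, b⟩, hab, heq⟩
      refine ⟨(b, a), hEg.1 a b hab, ?_⟩
      simp only [Prod.map, Prod.mk.injEq] at heq ⊢
      exact ⟨heq.2, heq.1⟩
    · rintro x ⟨⟨a, b⟩, hab, heq⟩
      simp only [Prod.map, Prod.mk.injEq] at heq
      have : a = b := hψ'i (heq.1.trans heq.2.symm)
      rw [this] at hab
      exact hEg.2 b hab
  · rintro ⟨c, hc, hcol⟩
    exact hEnc ⟨c ∘ ψ', hc.comp hψ'c, fun a b hab =>
      hcol _ _ ⟨(a, b), hab, rfl⟩⟩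
  · -- RedIC H G
    haveI : T2Space ↥K := inferInstance
    set e : ↥K₀ ≃ ↥K := Equiv.ofBijective ψ' ⟨hψ'i, hψ's⟩ with he
    have hec : Continuous e := hψ'c
    set homeo := hec.homeoOfEquivCompactToT2 with hhomeo
    refine ⟨fun z => ((homeo.symm z : ↥K₀) : X), continuous_subtype_val.comp homeo.symm.continuous,
      ?_, ?_⟩
    · exact Subtype.val_injective.comp homeo.symm.injective
    · rintro x y ⟨⟨a, b⟩, hab, heq⟩
      simp only [Prod.map, Prod.mk.injEq] at heq
      have hx : homeo.symm x = a := by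
        rw [← heq.1]
        exact homeo.symm_apply_apply a
      have hy : homeo.symm y = b := by
        rw [← heq.2]
        exact homeo.symm_apply_apply b
      show ((((homeo.symm x) : ↥K₀) : X), (((homeo.symm y) : ↥K₀) : X)) ∈ G
      rw [hx, hy]
      exact hEG a b hab

def GoodPair : Type :=
  {p : Σ K : Set (ℕ → Bool), Set (↥K × ↥K) //
    IsCompact p.1 ∧ p.2.Countable ∧ IsGraph p.2 ∧ ¬ HasContColoring p.2 2}

lemma goodPair_nonempty : Nonempty GoodPair :=
  ⟨⟨⟨Set.univ, H0'⟩, isCompact_univ, H0'_countable, H0'_graph, H0'_no2col⟩⟩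

lemma countable_option_code {β : Type*} {s : Set β} (hs : s.Countable) :
    ∃ F : ℕ → Option β, {t | ∃ n, F n = some t} = s := by
  rcases s.eq_empty_or_nonempty with rfl | hne
  · exact ⟨fun _ => none, by ext t; simp⟩
  · obtain ⟨g, hg⟩ := hs.exists_eq_range hne
    exact ⟨fun n => some (g n), by ext t; simp [hg, Set.mem_range, eq_comm]⟩

noncomputable def Amb (p : GoodPair) : Set ((ℕ → Bool) × (ℕ → Bool)) :=
  (fun q : ↥p.1.1 × ↥p.1.1 => ((q.1 : ℕ → Bool), (q.2 : ℕ → Bool))) '' p.1.2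

lemma mem_Amb (p : GoodPair) (r : ↥p.1.1 × ↥p.1.1) :
    r ∈ p.1.2 ↔ ((r.1 : ℕ → Bool), (r.2 : ℕ → Bool)) ∈ Amb p := by
  constructor
  · intro h; exact ⟨r, h, rfl⟩
  · rintro ⟨r', hr', heq⟩
    simp only [Prod.mk.injEq] at heq
    have : r' = r := Prod.ext (Subtype.ext heq.1) (Subtype.ext heq.2)
    rwa [← this]

lemma exists_surj : ∃ σ : (ℕ → Bool) → GoodPair, Function.Surjective σ := by
  classical
  haveI := goodPair_nonempty
  obtain ⟨b, hbc, hbne', hb⟩ := exists_countable_basis (ℕ → Bool)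
  have hbnemp : b.Nonempty := by
    obtain ⟨v, hv, -, -⟩ := hb.exists_subset_of_mem_open (mem_univ (fun _ => false)) isOpen_univ
    exact ⟨v, hv⟩
  obtain ⟨e, he⟩ := hbc.exists_eq_range hbnemp
  set code : Set (ℕ → Bool) → Set ℕ := fun K => {n | e n ⊆ Kᶜ} with hcode
  have code_inj : ∀ K1 K2 : Set (ℕ → Bool), IsClosed K1 → IsClosed K2 →
      code K1 = code K2 → K1 = K2 := by
    intro K1 K2 h1 h2 hc
    have hsets : {s | s ∈ b ∧ s ⊆ K1ᶜ} = {s | s ∈ b ∧ s ⊆ K2ᶜ} := by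
      ext s
      constructor <;> rintro ⟨hsb, hss⟩ <;> refine ⟨hsb, ?_⟩
      · obtain ⟨n, rfl⟩ := he ▸ hsb
        have : n ∈ code K1 := hss
        rw [hc] at this; exact this
      · obtain ⟨n, rfl⟩ := he ▸ hsb
        have : n ∈ code K2 := hss
        rw [← hc] at this; exact this
    have e1 := hb.open_eq_sUnion' h1.isOpen_compl
    have e2 := hb.open_eq_sUnion' h2.isOpen_compl
    have : K1ᶜ = K2ᶜ := by rw [e1, e2, hsets]
    exact compl_injective this
  choose F hF using fun p : GoodPair => countable_option_code (Set.Countable.image p.2.2.1 _ :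
    (Amb p).Countable)
  set J : GoodPair → Set ℕ × (ℕ → Option ((ℕ → Bool) × (ℕ → Bool))) :=
    fun p => (code p.1.1, F p) with hJ
  have Jinj : Function.Injective J := by
    intro p q h
    have h1 : code p.1.1 = code q.1.1 := congrArg Prod.fst h
    have h2 : F p = F q := congrArg Prod.snd h
    have hK : p.1.1 = q.1.1 :=
      code_inj _ _ p.2.1.isClosed q.2.1.isClosed h1
    have hAmb : Amb p = Amb q := by
      have e1 : Amb p = {t | ∃ n, F p n = some t} := (hF p).symm
      have e2 : Amb q = {t | ∃ n, F q n = some t} := (hF q).symm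
      rw [e1, e2, h2]
    obtain ⟨⟨K1, H1⟩, hp⟩ := p
    obtain ⟨⟨K2, H2⟩, hq⟩ := q
    simp only at hK
    subst hK
    have : H1 = H2 := by
      ext r
      rw [mem_Amb ⟨⟨K1, H1⟩, hp⟩ r]
      rw [show Amb ⟨⟨K1, H1⟩, hp⟩ = Amb ⟨⟨K1, H2⟩, hq⟩ from hAmb]
      exact (mem_Amb ⟨⟨K1, H2⟩, hq⟩ r).symm
    subst this
    rfl
  have hle : Cardinal.mk GoodPair ≤ Cardinal.mk (ℕ → Bool) :=
    le_trans (Cardinal.mk_le_of_injective Jinj) card_codomain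
  obtain ⟨g⟩ := Cardinal.le_def _ _ |>.1 hle
  exact ⟨Function.invFun g, Function.invFun_surjective g.injective⟩


end Aux

/-- Every zero-dimensional metrizable compact space embeds in `2^ℕ`, so the basis
elements can be realized as graphs on compact subsets of the Cantor space. -/
theorem stmt1 :
    ∃ (K : (ℕ → Bool) → Set (ℕ → Bool))
      (H : ∀ α : ℕ → Bool, Set (↥(K α) × ↥(K α))),
      (∀ α, IsCompact (K α)) ∧
      (∀ α, (H α).Countable) ∧
      (∀ α, IsGraph (H α)) ∧
      (∀ α, ¬ HasContColoring (H α) 2) ∧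
      ∀ (X : Type*) [TopologicalSpace X], Is0DMC X →
        ∀ G : Set (X × X), IsGraph G →
          Xor' (HasContColoring G 2) (∃ α, RedIC (H α) G) := by
  obtain ⟨σ, hσ⟩ := exists_surj
  refine ⟨fun α => (σ α).1.1, fun α => (σ α).1.2,
    fun α => (σ α).2.1, fun α => (σ α).2.2.1, fun α => (σ α).2.2.2.1,
    fun α => (σ α).2.2.2.2, ?_⟩
  intro X _ hX G hG
  by_cases h : HasContColoring G 2
  · refine Or.inl ⟨h, ?_⟩
    rintro ⟨α, φ, hφc, hφi, hφh⟩
    obtain ⟨c, hc, hcol⟩ := h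
    exact (σ α).2.2.2.2 ⟨c ∘ φ, hc.comp hφc, fun x y hxy => hcol _ _ (hφh x y hxy)⟩
  · obtain ⟨K', H', hK', hH'c, hH'g, hH'nc, hred⟩ := main_construction hX G hG h
    obtain ⟨α, hα⟩ := hσ ⟨⟨K', H'⟩, hK', hH'c, hH'g, hH'nc⟩
    refine Or.inr ⟨⟨α, ?_⟩, h⟩
    show RedIC (σ α).1.2 G
    have : ∀ p : GoodPair, p = (⟨⟨K', H'⟩, hK', hH'c, hH'g, hH'nc⟩ : GoodPair) →
        RedIC p.1.2 G := by
      rintro p rfl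
      exact hred
    exact this (σ α) hα
end

section
/- There exist a zero-dimensional metrizable compact space 𝕂 and a sequence (𝔾_p)_{p∈ℕ} of countable graphs on 𝕂 such that: each 𝔾_p is the difference of two closed subsets of 𝕂×𝕂, has continuous chromatic number exactly three, admits a partition of 𝕂 into two 𝔾_p-independent sets each of the form (O∩C)∪(F∖C) with O open, F closed and C clopen, and every vertex of 𝔾_p has degree at most one; 𝔾_{p+1} ⊆ 𝔾_p for every p (so that (𝕂,𝔾_{p+1}) ≼^i_c (𝕂,𝔾_p)); and for no p is there a continuous map φ : 𝕂 → 𝕂 with 𝔾_p ⊆ (φ×φ)⁻¹(𝔾_{p+1}). Hence ((𝕂,𝔾_p))_{p∈ℕ} is an infinite strictly descending chain for both ≼_c and ≼^i_c. -/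
open TopologicalSpace

/-- `A` is of the form `(O ∩ C) ∪ (F \ C)` with `O` open, `F` closed, `C` clopen
(the class `Σ⁰₁ ⊕ Π⁰₁`). -/
def SigmaPiForm {X : Type*} [TopologicalSpace X] (A : Set X) : Prop :=
  ∃ O F C : Set X, IsOpen O ∧ IsClosed F ∧ IsClopen C ∧ A = O ∩ C ∪ F \ C

/-- `A` is `G`-independent. -/
def Indep {X : Type*} (G : Set (X × X)) (A : Set X) : Prop :=
  ∀ x ∈ A, ∀ y ∈ A, (x, y) ∉ G


open Filter Set Topology

/-- encode a finite list of "gaps" as an element of Cantor space: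
`code [a₁,...,an]` has `1`s exactly in positions `a₁, a₁+1+a₂, ...`. -/
def code : List ℕ → ℕ → Bool
  | [], _ => false
  | a :: l, n => if n < a then false else if n = a then true else code l (n - a - 1)

lemma code_lt {a : ℕ} {l : List ℕ} {n : ℕ} (h : n < a) : code (a :: l) n = false := by
  simp [code, h]

lemma code_self (a : ℕ) (l : List ℕ) : code (a :: l) a = true := by
  simp [code]

lemma code_gt {a : ℕ} {l : List ℕ} {n : ℕ} (h : a < n) : code (a :: l) n = code l (n - a - 1) := by
  have h1 : ¬ n < a := by omega
  have h2 : ¬ n = a := by omega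
  simp [code, h1, h2]

/-- position of the `i`-th one of `code l`. -/
def posSum (l : List ℕ) : ℕ → ℕ
  | 0 => l.headI
  | i + 1 => match l with
    | [] => i + 1
    | a :: l' => a + 1 + posSum l' i

lemma posSum_cons_succ (a : ℕ) (l : List ℕ) (i : ℕ) :
    posSum (a :: l) (i + 1) = a + 1 + posSum l i := rfl

lemma code_true_iff (l : List ℕ) (n : ℕ) :
    code l n = true ↔ ∃ i, i < l.length ∧ n = posSum l i := by
  induction l generalizing n with
  | nil => simp [code]
  | cons a l ih =>
    rcases lt_trichotomy n a with h | h | h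
    · simp only [code_lt h]
      constructor
      · intro hc; exact absurd hc (by simp)
      · rintro ⟨i, hi, hpos⟩
        rcases i with _ | i
        · exfalso; rw [show posSum (a :: l) 0 = a from rfl] at hpos; omega
        · rw [posSum_cons_succ] at hpos; omega
    · subst h
      simp only [code_self, true_iff]
      exact ⟨0, by simp, by simp [posSum]⟩
    · rw [code_gt h, ih]
      constructor
      · rintro ⟨i, hi, hpos⟩
        exact ⟨i + 1, by simpa using hi, by rw [posSum_cons_succ]; omega⟩
      · rintro ⟨i, hi, hpos⟩
        rcases i with _ | i
        · exfalso; rw [show posSum (a :: l) 0 = a from rfl] at hpos; omega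
        · rw [posSum_cons_succ] at hpos
          exact ⟨i, by simpa using hi, by omega⟩

lemma posSum_strictMono (l : List ℕ) : StrictMono (posSum l) := by
  have key : ∀ i l, posSum l i < posSum l (i + 1) := by
    intro i
    induction i with
    | zero => intro l; cases l with
      | nil => show (0:ℕ) < 1; omega
      | cons a l' =>
        show posSum (a :: l') 0 < posSum (a :: l') 1
        rw [show posSum (a :: l') 0 = a from rfl, posSum_cons_succ]
        omega
    | succ i ih => intro l; cases l with
      | nil => show (i + 1 : ℕ) < i + 2; omega
      | cons a l' =>
        rw [posSum_cons_succ, posSum_cons_succ]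
        have := ih l'
        omega
  exact strictMono_nat_of_lt_succ (fun n => key n l)

lemma code_injective : Function.Injective code := by
  intro l l' h
  induction l generalizing l' with
  | nil =>
    cases l' with
    | nil => rfl
    | cons a m =>
      have := congrFun h a
      rw [code_self] at this
      simp [code] at this
  | cons a l ih =>
    cases l' with
    | nil =>
      have := congrFun h a
      rw [code_self] at this
      simp [code] at this
    | cons b m =>
      have hab : a = b := by
        by_contra hne
        rcases Nat.lt_or_ge a b with hlt | hge
        · have := congrFun h a
          rw [code_self, code_lt hlt] at this
          exact Bool.noConfusion this
        · have hlt : b < a := by omega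
          have := congrFun h b
          rw [code_lt hlt, code_self] at this
          exact Bool.noConfusion this
      subst hab
      have hc : code l = code m := by
        funext n
        have h2 := congrFun h (a + 1 + n)
        rw [code_gt (by omega), code_gt (by omega)] at h2
        have e : a + 1 + n - a - 1 = n := by omega
        rw [e] at h2; exact h2
      rw [ih hc]

/-- The compact space: elements of Cantor space with at most 4 ones,
at least one of which is in position 0 or 1. -/
def Kset : Set (ℕ → Bool) :=
  {x | (x 0 = true ∨ x 1 = true) ∧
    ∀ a b c d e : ℕ, a < b → b < c → c < d → d < e →
      ¬(x a = true ∧ x b = true ∧ x c = true ∧ x d = true ∧ x e = true)}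

lemma isOpen_evalTrue (a : ℕ) : IsOpen {x : ℕ → Bool | x a = true} := by
  have h : {x : ℕ → Bool | x a = true} = (fun x : ℕ → Bool => x a) ⁻¹' {true} := by
    ext x; simp
  rw [h]; exact (isOpen_discrete _).preimage (continuous_apply a)

lemma isClosed_Kset : IsClosed Kset := by
  have h1 : IsClosed {x : ℕ → Bool | x 0 = true ∨ x 1 = true} := by
    have : {x : ℕ → Bool | x 0 = true ∨ x 1 = true} =
        ((fun x : ℕ → Bool => x 0) ⁻¹' {true}) ∪ ((fun x : ℕ → Bool => x 1) ⁻¹' {true}) := by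
      ext x; simp [Set.mem_preimage]
    rw [this]
    exact ((isClosed_discrete _).preimage (continuous_apply 0)).union
      ((isClosed_discrete _).preimage (continuous_apply 1))
  have h2 : IsClosed {x : ℕ → Bool | ∀ a b c d e : ℕ, a < b → b < c → c < d → d < e →
      ¬(x a = true ∧ x b = true ∧ x c = true ∧ x d = true ∧ x e = true)} := by
    have : {x : ℕ → Bool | ∀ a b c d e : ℕ, a < b → b < c → c < d → d < e →
        ¬(x a = true ∧ x b = true ∧ x c = true ∧ x d = true ∧ x e = true)} =
        ⋂ (a : ℕ) (b : ℕ) (c : ℕ) (d : ℕ) (e : ℕ),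
          {x : ℕ → Bool | a < b → b < c → c < d → d < e →
            ¬(x a = true ∧ x b = true ∧ x c = true ∧ x d = true ∧ x e = true)} := by
      ext x; simp only [Set.mem_iInter, Set.mem_setOf_eq]
    rw [this]
    refine isClosed_iInter fun a => isClosed_iInter fun b => isClosed_iInter fun c =>
      isClosed_iInter fun d => isClosed_iInter fun e => ?_
    by_cases hab : a < b
    · by_cases hbc : b < c
      · by_cases hcd : c < d
        · by_cases hde : d < e
          · have : {x : ℕ → Bool | a < b → b < c → c < d → d < e →
                ¬(x a = true ∧ x b = true ∧ x c = true ∧ x d = true ∧ x e = true)} =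
                (({x : ℕ → Bool | x a = true} ∩ {x | x b = true} ∩ {x | x c = true}
                  ∩ {x | x d = true} ∩ {x | x e = true}))ᶜ := by
              ext x; simp only [Set.mem_setOf_eq, Set.mem_compl_iff, Set.mem_inter_iff]
              constructor
              · intro h hx; exact h hab hbc hcd hde ⟨hx.1.1.1.1, hx.1.1.1.2, hx.1.1.2, hx.1.2, hx.2⟩
              · intro h _ _ _ _ hx; exact h ⟨⟨⟨⟨hx.1, hx.2.1⟩, hx.2.2.1⟩, hx.2.2.2.1⟩, hx.2.2.2.2⟩
            rw [this]
            refine IsOpen.isClosed_compl ?_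
            exact ((((isOpen_evalTrue a).inter (isOpen_evalTrue b)).inter
              (isOpen_evalTrue c)).inter (isOpen_evalTrue d)).inter (isOpen_evalTrue e)
          · have : {x : ℕ → Bool | a < b → b < c → c < d → d < e →
                ¬(x a = true ∧ x b = true ∧ x c = true ∧ x d = true ∧ x e = true)} = Set.univ := by
              ext x; simp only [Set.mem_setOf_eq, Set.mem_univ, iff_true]
              intro _ _ _ h; exact absurd h hde
            rw [this]; exact isClosed_univ
        · have : {x : ℕ → Bool | a < b → b < c → c < d → d < e →
              ¬(x a = true ∧ x b = true ∧ x c = true ∧ x d = true ∧ x e = true)} = Set.univ := by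
            ext x; simp only [Set.mem_setOf_eq, Set.mem_univ, iff_true]
            intro _ _ h; exact absurd h hcd
          rw [this]; exact isClosed_univ
      · have : {x : ℕ → Bool | a < b → b < c → c < d → d < e →
            ¬(x a = true ∧ x b = true ∧ x c = true ∧ x d = true ∧ x e = true)} = Set.univ := by
          ext x; simp only [Set.mem_setOf_eq, Set.mem_univ, iff_true]
          intro _ h; exact absurd h hbc
        rw [this]; exact isClosed_univ
    · have : {x : ℕ → Bool | a < b → b < c → c < d → d < e →
          ¬(x a = true ∧ x b = true ∧ x c = true ∧ x d = true ∧ x e = true)} = Set.univ := by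
        ext x; simp only [Set.mem_setOf_eq, Set.mem_univ, iff_true]
        intro h; exact absurd h hab
      rw [this]; exact isClosed_univ
  have : Kset = {x : ℕ → Bool | x 0 = true ∨ x 1 = true} ∩
      {x : ℕ → Bool | ∀ a b c d e : ℕ, a < b → b < c → c < d → d < e →
      ¬(x a = true ∧ x b = true ∧ x c = true ∧ x d = true ∧ x e = true)} := rfl
  rw [this]
  exact h1.inter h2

lemma isCompact_Kset : IsCompact Kset := isClosed_Kset.isCompact

/-- membership of codes in `Kset`. -/
lemma code_mem_Kset {l : List ℕ} (hne : l ≠ []) (hhd : l.headI ≤ 1) (hlen : l.length ≤ 4) :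
    code l ∈ Kset := by
  constructor
  · rcases Nat.le_one_iff_eq_zero_or_eq_one.mp hhd with h | h
    · left
      cases l with
      | nil => exact absurd rfl hne
      | cons a l' => simp only [List.headI] at h; subst h; exact code_self 0 l'
    · right
      cases l with
      | nil => exact absurd rfl hne
      | cons a l' => simp only [List.headI] at h; subst h; exact code_self 1 l'
  · intro a b c d e hab hbc hcd hde ⟨ha, hb, hc, hd, he⟩
    rw [code_true_iff] at ha hb hc hd he
    obtain ⟨ia, hia, rfl⟩ := ha
    obtain ⟨ib, hib, rfl⟩ := hb
    obtain ⟨ic, hic, rfl⟩ := hc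
    obtain ⟨id', hid, rfl⟩ := hd
    obtain ⟨ie, hie, rfl⟩ := he
    have m := posSum_strictMono l
    have h1 : ia < ib := m.lt_iff_lt.mp hab
    have h2 : ib < ic := m.lt_iff_lt.mp hbc
    have h3 : ic < id' := m.lt_iff_lt.mp hcd
    have h4 : id' < ie := m.lt_iff_lt.mp hde
    omega
-- chunk 2 (to be appended after dev1 content)
/-- `hd t` : head symbol (0 or 1) of the address of the `c`-point `c_t`. -/
def hd (t : ℤ) : ℕ := if 0 ≤ t then t.natAbs % 2 else (t.natAbs - 1) % 2

/-- `eta t` : second address entry of `c_t`. -/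
def eta (t : ℤ) : ℕ := t.natAbs

lemma hd_le_one (t : ℤ) : hd t ≤ 1 := by unfold hd; split_ifs <;> omega

lemma hd_eta_inj {t t' : ℤ} (h1 : hd t = hd t') (h2 : eta t = eta t') : t = t' := by
  unfold hd eta at *; split_ifs at h1 <;> omega

/-- cycle-adjacency in the cycle of length `2k+3`, on `ℤ`-addresses. -/
def CN (k : ℕ) (t t' : ℤ) : Prop :=
  -(k : ℤ) - 2 ≤ t ∧ ((t < k ∧ t' = t + 1) ∨ (t = k ∧ t' = -(k : ℤ) - 2))

lemma CN_det {k : ℕ} {t t1 t2 : ℤ} (h1 : CN k t t1) (h2 : CN k t t2) : t1 = t2 := by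
  unfold CN at *; omega

lemma CN_bound {k : ℕ} {t t' : ℤ} (h : CN k t t') : eta t ≤ k + 2 ∧ eta t' ≤ k + 2 := by
  unfold CN eta at *; omega

lemma CN_hd_ne {k : ℕ} {t t' : ℤ} (h : CN k t t') (h2 : 2 ≤ eta t ∨ 2 ≤ eta t') :
    hd t ≠ hd t' := by
  unfold CN eta hd at *; split_ifs <;> omega

lemma CN_ne {k : ℕ} {t t' : ℤ} (h : CN k t t') : t ≠ t' := by unfold CN at h; omega

/-- value of the 3-coloring at `c_t` and at all points below it. -/
def gnat (t : ℤ) : ℕ := if 0 ≤ t then t.natAbs % 2 else if t = -1 then 2 else 1 - t.natAbs % 2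

def gam (t : ℤ) : Fin 3 := ⟨gnat t, by unfold gnat; split_ifs <;> omega⟩

lemma gam_ne {k : ℕ} {t t' : ℤ} (h : CN k t t') : gam t ≠ gam t' := by
  intro he
  have hv : gnat t = gnat t' := congrArg Fin.val he
  unfold gnat at hv; unfold CN at h
  split_ifs at hv <;> omega

/-- recover `t` from its address data. -/
def tOf (j u : ℕ) : ℤ := if u % 2 = j % 2 then (u : ℤ) else -(u : ℤ)

lemma tOf_hd_eta (t : ℤ) : tOf (hd t) (eta t) = t := by
  unfold tOf hd eta; split_ifs <;> omega

/-- the points of our space. -/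
def ptI (j : ℕ) : ℕ → Bool := code [j]
def ptC (t : ℤ) : ℕ → Bool := code [hd t, eta t]
def ptZ (t : ℤ) (k : ℕ) : ℕ → Bool := code [hd t, eta t, k]
def ptE (t : ℤ) (k v : ℕ) : ℕ → Bool := code [hd t, eta t, k, v]

lemma ptI_mem {j : ℕ} (hj : j ≤ 1) : ptI j ∈ Kset :=
  code_mem_Kset (by simp) (by simpa [List.headI]) (by simp)
lemma ptC_mem (t : ℤ) : ptC t ∈ Kset :=
  code_mem_Kset (by simp) (by simpa [List.headI] using hd_le_one t) (by simp)
lemma ptZ_mem (t : ℤ) (k : ℕ) : ptZ t k ∈ Kset :=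
  code_mem_Kset (by simp) (by simpa [List.headI] using hd_le_one t) (by simp)
lemma ptE_mem (t : ℤ) (k v : ℕ) : ptE t k v ∈ Kset :=
  code_mem_Kset (by simp) (by simpa [List.headI] using hd_le_one t) (by simp)

def iK (j : ℕ) (hj : j ≤ 1) : ↥Kset := ⟨ptI j, ptI_mem hj⟩
def cK (t : ℤ) : ↥Kset := ⟨ptC t, ptC_mem t⟩
def zK (t : ℤ) (k : ℕ) : ↥Kset := ⟨ptZ t k, ptZ_mem t k⟩
def eK (t : ℤ) (k v : ℕ) : ↥Kset := ⟨ptE t k v, ptE_mem t k v⟩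

lemma code_append_eval {l : List ℕ} {v n : ℕ} (h : n < v) : code (l ++ [v]) n = code l n := by
  induction l generalizing n with
  | nil =>
    show code [v] n = code [] n
    rw [code_lt h]; rfl
  | cons a l ih =>
    rcases lt_trichotomy n a with h' | h' | h'
    · rw [List.cons_append, code_lt h', code_lt h']
    · subst h'; rw [List.cons_append, code_self, code_self]
    · rw [List.cons_append, code_gt h', code_gt h', ih (by omega)]

lemma tendsto_code_append (l : List ℕ) :
    Filter.Tendsto (fun v : ℕ => code (l ++ [v])) Filter.atTop (nhds (code l)) := by
  rw [tendsto_pi_nhds]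
  intro n
  have hev : ∀ᶠ v in Filter.atTop, code l n = code (l ++ [v]) n :=
    Filter.eventually_atTop.mpr ⟨n + 1, fun v hv => (code_append_eval (by omega)).symm⟩
  exact Filter.Tendsto.congr' hev tendsto_const_nhds

lemma tendsto_eK_a (t : ℤ) (k : ℕ) :
    Filter.Tendsto (fun n : ℕ => eK t k (2 * n)) Filter.atTop (nhds (zK t k)) := by
  rw [IsEmbedding.subtypeVal.tendsto_nhds_iff]
  have h2 : Filter.Tendsto (fun n : ℕ => 2 * n) Filter.atTop Filter.atTop :=
    Filter.tendsto_atTop_atTop_of_monotone (fun a b h => by omega) (fun b => ⟨b, by omega⟩)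
  exact (tendsto_code_append [hd t, eta t, k]).comp h2

lemma tendsto_eK_b (t : ℤ) (k : ℕ) :
    Filter.Tendsto (fun n : ℕ => eK t k (2 * n + 1)) Filter.atTop (nhds (zK t k)) := by
  rw [IsEmbedding.subtypeVal.tendsto_nhds_iff]
  have h2 : Filter.Tendsto (fun n : ℕ => 2 * n + 1) Filter.atTop Filter.atTop :=
    Filter.tendsto_atTop_atTop_of_monotone (fun a b h => by omega) (fun b => ⟨b, by omega⟩)
  exact (tendsto_code_append [hd t, eta t, k]).comp h2

/-- `code l n = false` between consecutive ones. -/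
lemma code_false_between {l : List ℕ} {i n : ℕ} (h1 : posSum l i < n) (h2 : n < posSum l (i + 1)) :
    code l n = false := by
  by_contra hne
  have h : code l n = true := by revert hne; cases code l n <;> simp
  · obtain ⟨i', hi', rfl⟩ := (code_true_iff l n).mp h
    have m := posSum_strictMono l
    rcases Nat.lt_or_ge i' (i + 1) with hlt | hge
    · have : posSum l i' ≤ posSum l i := m.le_iff_le.mpr (by omega)
      omega
    · have : posSum l (i + 1) ≤ posSum l i' := m.le_iff_le.mpr (by omega)
      omega

/-- the cylinder of length `N` around `x` is a neighborhood. -/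
lemma eventually_cyl (x : ℕ → Bool) (N : ℕ) : ∀ᶠ y in nhds x, ∀ i < N, y i = x i := by
  have : {y : ℕ → Bool | ∀ i < N, y i = x i} =
      ⋂ i ∈ Finset.range N, (fun y : ℕ → Bool => y i) ⁻¹' {x i} := by
    ext y; simp [Set.mem_iInter]
  have hopen : IsOpen {y : ℕ → Bool | ∀ i < N, y i = x i} := by
    rw [this]
    exact isOpen_biInter_finset fun i _ =>
      (isOpen_discrete _).preimage (continuous_apply i)
  exact hopen.mem_nhds (by simp)

open scoped Classical in
/-- the 3-coloring, as a function on Cantor space. -/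
noncomputable def col (x : ℕ → Bool) : Fin 3 :=
  if h : ∃ m, x ((if x 0 = true then 0 else 1) + 1 + m) = true
  then gam (tOf (if x 0 = true then 0 else 1) (Nat.find h))
  else ⟨if x 0 = true then 0 else 1, by split_ifs <;> omega⟩

lemma gam_tOf_large {j u : ℕ} (hj : j ≤ 1) (hu : 4 ≤ u) : gam (tOf j u) = ⟨j, by omega⟩ := by
  have : gnat (tOf j u) = j := by unfold gnat tOf; split_ifs <;> omega
  exact Fin.ext this

open scoped Classical in
lemma col_pos {x : ℕ → Bool} {j : ℕ} (hxj : (if x 0 = true then 0 else 1) = j)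
    (h : ∃ m, x (j + 1 + m) = true) : col x = gam (tOf j (Nat.find h)) := by
  subst hxj; simp only [col]; rw [dif_pos h]

open scoped Classical in
lemma col_neg {x : ℕ → Bool} {j : ℕ} (hxj : (if x 0 = true then 0 else 1) = j)
    (hj : j ≤ 1) (h : ¬ ∃ m, x (j + 1 + m) = true) : col x = ⟨j, by omega⟩ := by
  subst hxj; simp only [col]; rw [dif_neg h]

/-- evaluation of `col` on codes of depth ≥ 2. -/
lemma col_code2 (t : ℤ) (rest : List ℕ) : col (code (hd t :: eta t :: rest)) = gam t := by
  classical
  have hj : (if code (hd t :: eta t :: rest) 0 = true then 0 else 1) = hd t := by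
    have h1 := hd_le_one t
    rcases Nat.le_one_iff_eq_zero_or_eq_one.mp h1 with h | h <;> rw [h]
    · rw [show code (0 :: eta t :: rest) 0 = true from code_self 0 _]; simp
    · rw [show code (1 :: eta t :: rest) 0 = false from code_lt (by omega)]; simp
  have hsum1 : hd t + 1 + eta t = posSum (hd t :: eta t :: rest) 1 := by
    rw [posSum_cons_succ]; rfl
  have htrue : code (hd t :: eta t :: rest) (hd t + 1 + eta t) = true := by
    rw [hsum1]
    exact (code_true_iff _ _).mpr ⟨1, by simp, rfl⟩
  have hex : ∃ m, code (hd t :: eta t :: rest) (hd t + 1 + m) = true := ⟨eta t, htrue⟩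
  rw [col_pos hj hex]
  have hfind : Nat.find hex = eta t := by
    have hle : Nat.find hex ≤ eta t := Nat.find_le htrue
    have hge : ¬ Nat.find hex < eta t := by
      intro hlt
      have hspec := Nat.find_spec hex
      have hfalse : code (hd t :: eta t :: rest) (hd t + 1 + Nat.find hex) = false := by
        refine code_false_between (i := 0) ?_ ?_
        · rw [show posSum (hd t :: eta t :: rest) 0 = hd t from rfl]; omega
        · rw [← hsum1]; omega
      exact Bool.noConfusion (hfalse.symm.trans hspec)
    omega
  rw [hfind, tOf_hd_eta]

lemma col_eK (t : ℤ) (k v : ℕ) : col (eK t k v).1 = gam t := col_code2 t [k, v]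

/-- continuity of `col` at points with a one among the first two coordinates. -/
lemma continuousAt_col {x : ℕ → Bool} (hx : x 0 = true ∨ x 1 = true) : ContinuousAt col x := by
  classical
  set j : ℕ := if x 0 = true then 0 else 1 with hjdef
  have hj1 : j ≤ 1 := by rw [hjdef]; split_ifs <;> omega
  have key : ∃ N : ℕ, ∀ y : ℕ → Bool, (∀ i < N, y i = x i) → col y = col x := by
    by_cases h : ∃ m, x (j + 1 + m) = true
    · refine ⟨j + 2 + Nat.find h, fun y hy => ?_⟩
      have hy0 : y 0 = x 0 := hy 0 (by omega)
      have hjy : (if y 0 = true then 0 else 1) = j := by rw [hy0, hjdef]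
      have hexy : ∃ m, y (j + 1 + m) = true :=
        ⟨Nat.find h, by rw [hy _ (by omega)]; exact Nat.find_spec h⟩
      have h1 : Nat.find hexy ≤ Nat.find h :=
        Nat.find_le (by rw [hy _ (by omega)]; exact Nat.find_spec h)
      have hfy : Nat.find hexy = Nat.find h := by
        rcases Nat.lt_or_ge (Nat.find hexy) (Nat.find h) with hlt | hge
        · exfalso
          have hspec := Nat.find_spec hexy
          rw [hy _ (by omega)] at hspec
          exact absurd hspec (by simpa using Nat.find_min h hlt)
        · omega
      rw [col_pos hjy hexy, col_pos (hjdef.symm) h, hfy]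
    · refine ⟨j + 6, fun y hy => ?_⟩
      have hy0 : y 0 = x 0 := hy 0 (by omega)
      have hjy : (if y 0 = true then 0 else 1) = j := by rw [hy0, hjdef]
      rw [col_neg (hjdef.symm) hj1 h]
      by_cases hexy : ∃ m, y (j + 1 + m) = true
      · have hbig : 4 ≤ Nat.find hexy := by
          by_contra hsmall
          have hspec := Nat.find_spec hexy
          rw [hy _ (by omega)] at hspec
          exact h ⟨Nat.find hexy, hspec⟩
        rw [col_pos hjy hexy]
        exact gam_tOf_large hj1 hbig
      · rw [col_neg hjy hj1 hexy]
  obtain ⟨N, hN⟩ := key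
  have hev : ∀ᶠ y in nhds x, col y = col x := (eventually_cyl x N).mono fun y hy => hN y hy
  exact Filter.Tendsto.congr' (hev.mono fun y hy => hy.symm) tendsto_const_nhds

lemma continuous_colK : Continuous (fun q : ↥Kset => col q.1) := by
  rw [continuous_iff_continuousAt]
  intro q
  exact (continuousAt_col q.2.1).comp continuousAt_subtype_val
-- chunk 3 : position functions with values in ℕ∞
open scoped Classical in
/-- position of the first one after position `s` (⊤ if none). -/
noncomputable def nxt (x : ℕ → Bool) (s : ℕ) : ℕ∞ :=
  if h : ∃ m, x (s + 1 + m) = true then ((s + 1 + Nat.find h : ℕ) : ℕ∞) else ⊤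

noncomputable def nxtE (x : ℕ → Bool) : ℕ∞ → ℕ∞ := fun s =>
  match s with
  | ⊤ => ⊤
  | (n : ℕ) => nxt x n

def s1 (x : ℕ → Bool) : ℕ := if x 0 = true then 0 else 1

noncomputable def S2 (x : ℕ → Bool) : ℕ∞ := nxt x (s1 x)
noncomputable def S3 (x : ℕ → Bool) : ℕ∞ := nxtE x (S2 x)
noncomputable def S4 (x : ℕ → Bool) : ℕ∞ := nxtE x (S3 x)

lemma nxtE_coe (x : ℕ → Bool) (n : ℕ) : nxtE x (n : ℕ∞) = nxt x n := rfl
lemma nxtE_top (x : ℕ → Bool) : nxtE x ⊤ = ⊤ := rfl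

lemma S4_top_of_S3 {x : ℕ → Bool} (h : S3 x = ⊤) : S4 x = ⊤ := by
  rw [S4, h, nxtE_top]

lemma S3_top_of_S2 {x : ℕ → Bool} (h : S2 x = ⊤) : S3 x = ⊤ := by
  rw [S3, h, nxtE_top]

lemma nxt_eq_iff {x : ℕ → Bool} {s r : ℕ} :
    nxt x s = (r : ℕ∞) ↔ s < r ∧ x r = true ∧ ∀ m, s < m → m < r → x m = false := by
  classical
  constructor
  · intro h
    rw [nxt] at h
    split_ifs at h with hex
    · have hr : s + 1 + Nat.find hex = r := by exact_mod_cast h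
      refine ⟨by omega, by rw [← hr]; exact Nat.find_spec hex, fun m hm1 hm2 => ?_⟩
      have := Nat.find_min hex (m := m - s - 1) (by omega)
      have he : s + 1 + (m - s - 1) = m := by omega
      rw [he] at this
      revert this; cases x m <;> simp
    · exact absurd h (by simp)
  · rintro ⟨h1, h2, h3⟩
    have hex : ∃ m, x (s + 1 + m) = true := ⟨r - s - 1, by rw [show s+1+(r-s-1) = r by omega]; exact h2⟩
    rw [nxt, dif_pos hex]
    have : Nat.find hex = r - s - 1 := by
      have hle : Nat.find hex ≤ r - s - 1 := Nat.find_le (by rw [show s+1+(r-s-1) = r by omega]; exact h2)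
      have : ¬ Nat.find hex < r - s - 1 := by
        intro hlt
        have hsp := Nat.find_spec hex
        have := h3 (s + 1 + Nat.find hex) (by omega) (by omega)
        exact Bool.noConfusion (this.symm.trans hsp)
      omega
    rw [this]
    congr 1
    omega

lemma nxt_top_iff {x : ℕ → Bool} {s : ℕ} :
    nxt x s = ⊤ ↔ ∀ m, s < m → x m = false := by
  classical
  rw [nxt]
  split_ifs with hex
  · constructor
    · intro h; exact absurd h (ENat.coe_ne_top _)
    · intro h
      obtain ⟨m, hm⟩ := hex
      exact absurd hm (by rw [h (s+1+m) (by omega)]; simp)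
  · simp only [true_iff]
    intro m hm
    by_contra hc
    exact hex ⟨m - s - 1, by rw [show s+1+(m-s-1) = m by omega]; revert hc; cases x m <;> simp⟩

lemma nxt_lt {x : ℕ → Bool} {s : ℕ} {r : ℕ} (h : nxt x s = (r : ℕ∞)) : s < r :=
  (nxt_eq_iff.mp h).1

/-- agreement lemmas. -/
lemma nxt_eq_of_agree {x y : ℕ → Bool} {s r N : ℕ} (h : nxt x s = (r : ℕ∞)) (hrN : r < N)
    (ha : ∀ i < N, y i = x i) : nxt y s = (r : ℕ∞) := by
  rw [nxt_eq_iff] at h ⊢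
  exact ⟨h.1, by rw [ha r hrN]; exact h.2.1, fun m h1 h2 => by rw [ha m (by omega)]; exact h.2.2 m h1 h2⟩

lemma nxt_big_of_agree {x y : ℕ → Bool} {s N : ℕ} (h : nxt x s = ⊤)
    (ha : ∀ i < N, y i = x i) (L : ℕ) (hLN : L < N) : (L : ℕ∞) < nxt y s := by
  rcases eq_or_ne (nxt y s) ⊤ with ht | ht
  · rw [ht]; exact WithTop.coe_lt_top L
  · lift nxt y s to ℕ using ht with r hr
    have hy := nxt_eq_iff.mp hr.symm
    rcases Nat.lt_or_ge L r with hlt | hge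
    · exact_mod_cast hlt
    · exfalso
      have := (nxt_top_iff.mp h) r hy.1
      rw [ha r (by omega)] at hy
      exact Bool.noConfusion (this.symm.trans hy.2.1)

lemma s1_eq_of_agree {x y : ℕ → Bool} {N : ℕ} (hN : 0 < N) (ha : ∀ i < N, y i = x i) :
    s1 y = s1 x := by
  unfold s1; rw [ha 0 hN]

/-- continuity of `S2, S3, S4` (everywhere on Cantor space). -/
lemma continuousAt_of_locallyBig {f : (ℕ → Bool) → ℕ∞} {x : ℕ → Bool}
    (h : ∀ L : ℕ, ∃ N : ℕ, ∀ y, (∀ i < N, y i = x i) → (L : ℕ∞) < f y) (hfx : f x = ⊤) :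
    ContinuousAt f x := by
  rw [ContinuousAt, hfx, ENat.tendsto_nhds_top_iff_natCast_lt]
  intro L
  obtain ⟨N, hN⟩ := h L
  exact (eventually_cyl x N).mono fun y hy => hN y hy

lemma continuousAt_of_locallyConst {f : (ℕ → Bool) → ℕ∞} {x : ℕ → Bool} {r : ℕ}
    (h : ∃ N : ℕ, ∀ y, (∀ i < N, y i = x i) → f y = r) (hfx : f x = (r : ℕ∞)) :
    ContinuousAt f x := by
  rw [ContinuousAt, hfx, ENat.nhds_eq_pure (by simp), Filter.tendsto_pure]
  obtain ⟨N, hN⟩ := h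
  exact (eventually_cyl x N).mono fun y hy => hN y hy

lemma continuousAt_S2 (x : ℕ → Bool) : ContinuousAt S2 x := by
  rcases eq_or_ne (S2 x) ⊤ with ht | ht
  · refine continuousAt_of_locallyBig (fun L => ⟨s1 x + L + 2, fun y hy => ?_⟩) ht
    rw [S2, s1_eq_of_agree (by omega) hy]
    exact nxt_big_of_agree ht hy L (by omega)
  · lift S2 x to ℕ using ht with r hr
    refine continuousAt_of_locallyConst ⟨r + 1, fun y hy => ?_⟩ hr.symm
    rw [S2, s1_eq_of_agree (by omega) hy]
    exact nxt_eq_of_agree hr.symm (by omega) hy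

lemma lt_nxt_of_lt {y : ℕ → Bool} {L r : ℕ} (h : L < r) : (L : ℕ∞) < nxt y r := by
  rcases eq_or_ne (nxt y r) ⊤ with ht | ht
  · rw [ht]; exact WithTop.coe_lt_top L
  · lift nxt y r to ℕ using ht with r' hr'
    have := nxt_lt hr'.symm
    exact_mod_cast (by omega : L < r')

lemma lt_nxtE_of_lt {y : ℕ → Bool} {L : ℕ} {s : ℕ∞} (h : (L : ℕ∞) < s) :
    (L : ℕ∞) < nxtE y s := by
  match s with
  | ⊤ => rw [nxtE_top]; exact WithTop.coe_lt_top L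
  | (r : ℕ) =>
    rw [nxtE_coe]
    exact lt_nxt_of_lt (by exact_mod_cast h)

lemma continuousAt_S3 (x : ℕ → Bool) : ContinuousAt S3 x := by
  rcases eq_or_ne (S2 x) ⊤ with ht2 | ht2
  · refine continuousAt_of_locallyBig (fun L => ⟨s1 x + L + 3, fun y hy => ?_⟩) (S3_top_of_S2 ht2)
    have h2 : ((L + 1 : ℕ) : ℕ∞) < S2 y := by
      rw [S2, s1_eq_of_agree (by omega) hy]
      exact nxt_big_of_agree ht2 hy (L + 1) (by omega)
    rw [S3]
    exact lt_nxtE_of_lt (lt_trans (by exact_mod_cast (by omega : L < L + 1)) h2)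
  · lift S2 x to ℕ using ht2 with r2 hr2
    rcases eq_or_ne (S3 x) ⊤ with ht3 | ht3
    · refine continuousAt_of_locallyBig (fun L => ⟨r2 + L + 2, fun y hy => ?_⟩) ht3
      have h2 : S2 y = (r2 : ℕ∞) := by
        rw [S2, s1_eq_of_agree (by omega) hy]
        exact nxt_eq_of_agree hr2.symm (by omega) hy
      rw [S3, h2, nxtE_coe]
      rw [S3, ← hr2, nxtE_coe] at ht3
      exact nxt_big_of_agree ht3 hy L (by omega)
    · lift S3 x to ℕ using ht3 with r3 hr3
      have hlt : r2 < r3 := by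
        rw [S3, ← hr2, nxtE_coe] at hr3
        exact nxt_lt hr3.symm
      refine continuousAt_of_locallyConst ⟨r3 + 1, fun y hy => ?_⟩ hr3.symm
      have h2 : S2 y = (r2 : ℕ∞) := by
        rw [S2, s1_eq_of_agree (by omega) hy]
        exact nxt_eq_of_agree hr2.symm (by omega) hy
      rw [S3, h2, nxtE_coe]
      rw [S3, ← hr2, nxtE_coe] at hr3
      exact_mod_cast nxt_eq_of_agree hr3.symm (by omega) hy

lemma continuousAt_S4 (x : ℕ → Bool) : ContinuousAt S4 x := by
  rcases eq_or_ne (S2 x) ⊤ with ht2 | ht2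
  · refine continuousAt_of_locallyBig (fun L => ⟨s1 x + L + 4, fun y hy => ?_⟩)
      (S4_top_of_S3 (S3_top_of_S2 ht2)) 
    have h2 : ((L + 2 : ℕ) : ℕ∞) < S2 y := by
      rw [S2, s1_eq_of_agree (by omega) hy]
      exact nxt_big_of_agree ht2 hy (L + 2) (by omega)
    have h3 : ((L + 1 : ℕ) : ℕ∞) < S3 y := by
      rw [S3]
      exact lt_nxtE_of_lt (lt_trans (by exact_mod_cast (by omega : L + 1 < L + 2)) h2)
    rw [S4]
    exact lt_nxtE_of_lt (lt_trans (by exact_mod_cast (by omega : L < L + 1)) h3)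
  · lift S2 x to ℕ using ht2 with r2 hr2
    rcases eq_or_ne (S3 x) ⊤ with ht3 | ht3
    · refine continuousAt_of_locallyBig (fun L => ⟨r2 + L + 3, fun y hy => ?_⟩)
        (S4_top_of_S3 ht3)
      have h2 : S2 y = (r2 : ℕ∞) := by
        rw [S2, s1_eq_of_agree (by omega) hy]
        exact nxt_eq_of_agree hr2.symm (by omega) hy
      rw [S3, ← hr2, nxtE_coe] at ht3
      have h3 : ((L + 1 : ℕ) : ℕ∞) < S3 y := by
        rw [S3, h2, nxtE_coe]
        exact nxt_big_of_agree ht3 hy (L + 1) (by omega)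
      rw [S4]
      exact lt_nxtE_of_lt (lt_trans (by exact_mod_cast (by omega : L < L + 1)) h3)
    · lift S3 x to ℕ using ht3 with r3 hr3
      have hlt : r2 < r3 := by
        rw [S3, ← hr2, nxtE_coe] at hr3
        exact nxt_lt hr3.symm
      rcases eq_or_ne (S4 x) ⊤ with ht4 | ht4
      · refine continuousAt_of_locallyBig (fun L => ⟨r3 + L + 2, fun y hy => ?_⟩) ht4
        have h2 : S2 y = (r2 : ℕ∞) := by
          rw [S2, s1_eq_of_agree (by omega) hy]
          exact nxt_eq_of_agree hr2.symm (by omega) hy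
        have h3 : S3 y = (r3 : ℕ∞) := by
          rw [S3, h2, nxtE_coe]
          rw [S3, ← hr2, nxtE_coe] at hr3
          exact nxt_eq_of_agree hr3.symm (by omega) hy
        rw [S4, h3, nxtE_coe]
        rw [S4, ← hr3, nxtE_coe] at ht4
        exact nxt_big_of_agree ht4 hy L (by omega)
      · lift S4 x to ℕ using ht4 with r4 hr4
        have hlt4 : r3 < r4 := by
          rw [S4, ← hr3, nxtE_coe] at hr4
          exact nxt_lt hr4.symm
        refine continuousAt_of_locallyConst ⟨r4 + 1, fun y hy => ?_⟩ hr4.symm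
        have h2 : S2 y = (r2 : ℕ∞) := by
          rw [S2, s1_eq_of_agree (by omega) hy]
          exact nxt_eq_of_agree hr2.symm (by omega) hy
        have h3 : S3 y = (r3 : ℕ∞) := by
          rw [S3, h2, nxtE_coe]
          rw [S3, ← hr2, nxtE_coe] at hr3
          exact nxt_eq_of_agree hr3.symm (by omega) hy
        rw [S4, h3, nxtE_coe]
        rw [S4, ← hr3, nxtE_coe] at hr4
        exact_mod_cast nxt_eq_of_agree hr4.symm (by omega) hy

/-- the address space. -/
abbrev DD := Bool × ℕ∞ × ℕ∞ × ℕ∞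

noncomputable def hD (x : ℕ → Bool) : DD := (x 0, S2 x, S3 x, S4 x)

lemma continuous_hD : Continuous (fun q : ↥Kset => hD q.1) := by
  rw [continuous_iff_continuousAt]
  intro q
  have h0 : ContinuousAt hD q.1 := by
    refine ContinuousAt.prodMk ((continuous_apply 0).continuousAt) ?_
    exact ContinuousAt.prodMk (continuousAt_S2 _)
      (ContinuousAt.prodMk (continuousAt_S3 _) (continuousAt_S4 _))
  exact h0.comp continuousAt_subtype_val

/-- evaluation of `nxt` on codes. -/
lemma nxt_code {l : List ℕ} {i : ℕ} (hi : i + 1 < l.length) :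
    nxt (code l) (posSum l i) = (posSum l (i + 1) : ℕ∞) := by
  rw [nxt_eq_iff]
  refine ⟨posSum_strictMono l (by omega), (code_true_iff _ _).mpr ⟨i + 1, hi, rfl⟩,
    fun m h1 h2 => code_false_between h1 h2⟩

lemma nxt_code_top {l : List ℕ} {i : ℕ} (hi : l.length ≤ i + 1) :
    nxt (code l) (posSum l i) = ⊤ := by
  rw [nxt_top_iff]
  intro m hm
  by_contra hc
  have h : code l m = true := by revert hc; cases code l m <;> simp
  obtain ⟨i', hi', rfl⟩ := (code_true_iff l m).mp h
  have : posSum l i' ≤ posSum l i := (posSum_strictMono l).le_iff_le.mpr (by omega)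
  omega

lemma s1_code {a : ℕ} (ha : a ≤ 1) (rest : List ℕ) : s1 (code (a :: rest)) = a := by
  unfold s1
  rcases Nat.le_one_iff_eq_zero_or_eq_one.mp ha with h | h <;> subst h
  · rw [code_self]; simp
  · rw [code_lt (by omega)]; simp

lemma posSum0 (a : ℕ) (rest : List ℕ) : posSum (a :: rest) 0 = a := rfl

/-- S-values of the four kinds of points. -/
lemma S_ptI {j : ℕ} (hj : j ≤ 1) : S2 (ptI j) = ⊤ ∧ S3 (ptI j) = ⊤ ∧ S4 (ptI j) = ⊤ := by
  have h2 : S2 (ptI j) = ⊤ := by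
    rw [S2, ptI, s1_code hj]
    exact nxt_code_top (l := [j]) (i := 0) (by simp)
  exact ⟨h2, S3_top_of_S2 h2, S4_top_of_S3 (S3_top_of_S2 h2)⟩

lemma S_ptC (t : ℤ) : S2 (ptC t) = ((hd t + 1 + eta t : ℕ) : ℕ∞) ∧ S3 (ptC t) = ⊤ ∧
    S4 (ptC t) = ⊤ := by
  have h2 : S2 (ptC t) = ((hd t + 1 + eta t : ℕ) : ℕ∞) := by
    rw [S2, ptC, s1_code (hd_le_one t)]
    have h := nxt_code (l := [hd t, eta t]) (i := 0) (by simp)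
    rw [show posSum [hd t, eta t] 1 = hd t + 1 + eta t from rfl] at h
    exact h
  have h3 : S3 (ptC t) = ⊤ := by
    rw [S3, h2, nxtE_coe, ptC]
    have h := nxt_code_top (l := [hd t, eta t]) (i := 1) (by simp)
    rw [show posSum [hd t, eta t] 1 = hd t + 1 + eta t from rfl] at h
    exact h
  exact ⟨h2, h3, S4_top_of_S3 h3⟩

lemma S_ptZ (t : ℤ) (k : ℕ) : S2 (ptZ t k) = ((hd t + 1 + eta t : ℕ) : ℕ∞) ∧
    S3 (ptZ t k) = ((hd t + 1 + eta t + 1 + k : ℕ) : ℕ∞) ∧ S4 (ptZ t k) = ⊤ := by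
  have e1 : posSum [hd t, eta t, k] 1 = hd t + 1 + eta t := rfl
  have e2 : posSum [hd t, eta t, k] 2 = hd t + 1 + eta t + 1 + k := by
    rw [show posSum [hd t, eta t, k] 2 = hd t + 1 + (eta t + 1 + k) from rfl]; omega
  have h2 : S2 (ptZ t k) = ((hd t + 1 + eta t : ℕ) : ℕ∞) := by
    rw [S2, ptZ, s1_code (hd_le_one t)]
    have h := nxt_code (l := [hd t, eta t, k]) (i := 0) (by simp)
    rw [e1] at h
    exact h
  have h3 : S3 (ptZ t k) = ((hd t + 1 + eta t + 1 + k : ℕ) : ℕ∞) := by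
    rw [S3, h2, nxtE_coe, ptZ]
    have h := nxt_code (l := [hd t, eta t, k]) (i := 1) (by simp)
    rw [e1, e2] at h
    exact h
  have h4 : S4 (ptZ t k) = ⊤ := by
    rw [S4, h3, nxtE_coe, ptZ]
    have h := nxt_code_top (l := [hd t, eta t, k]) (i := 2) (by simp)
    rw [e2] at h
    exact h
  exact ⟨h2, h3, h4⟩

lemma S_ptE (t : ℤ) (k v : ℕ) : S2 (ptE t k v) = ((hd t + 1 + eta t : ℕ) : ℕ∞) ∧
    S3 (ptE t k v) = ((hd t + 1 + eta t + 1 + k : ℕ) : ℕ∞) ∧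
    S4 (ptE t k v) = ((hd t + 1 + eta t + 1 + k + 1 + v : ℕ) : ℕ∞) := by
  have e1 : posSum [hd t, eta t, k, v] 1 = hd t + 1 + eta t := rfl
  have e2 : posSum [hd t, eta t, k, v] 2 = hd t + 1 + eta t + 1 + k := by
    rw [show posSum [hd t, eta t, k, v] 2 = hd t + 1 + (eta t + 1 + k) from rfl]; omega
  have e3 : posSum [hd t, eta t, k, v] 3 = hd t + 1 + eta t + 1 + k + 1 + v := by
    rw [show posSum [hd t, eta t, k, v] 3 = hd t + 1 + (eta t + 1 + (k + 1 + v)) from rfl]; omega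
  have h2 : S2 (ptE t k v) = ((hd t + 1 + eta t : ℕ) : ℕ∞) := by
    rw [S2, ptE, s1_code (hd_le_one t)]
    have h := nxt_code (l := [hd t, eta t, k, v]) (i := 0) (by simp)
    rw [e1] at h
    exact h
  have h3 : S3 (ptE t k v) = ((hd t + 1 + eta t + 1 + k : ℕ) : ℕ∞) := by
    rw [S3, h2, nxtE_coe, ptE]
    have h := nxt_code (l := [hd t, eta t, k, v]) (i := 1) (by simp)
    rw [e1, e2] at h
    exact h
  have h4 : S4 (ptE t k v) = ((hd t + 1 + eta t + 1 + k + 1 + v : ℕ) : ℕ∞) := by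
    rw [S4, h3, nxtE_coe, ptE]
    have h := nxt_code (l := [hd t, eta t, k, v]) (i := 2) (by simp)
    rw [e2, e3] at h
    exact h
  exact ⟨h2, h3, h4⟩

lemma x0_code {a : ℕ} (ha : a ≤ 1) (rest : List ℕ) :
    code (a :: rest) 0 = decide (a = 0) := by
  rcases Nat.le_one_iff_eq_zero_or_eq_one.mp ha with h | h <;> subst h
  · rw [code_self]; simp
  · rw [code_lt (by omega)]; simp

/-- reconstruction: a point of `Kset` with the S-data of a depth-4 code is that code. -/
lemma reconstruct4 {x : ℕ → Bool} (hx : x ∈ Kset) {j u k v : ℕ} (hj : j ≤ 1)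
    (h1 : s1 x = j) (h2 : S2 x = ((j + 1 + u : ℕ) : ℕ∞))
    (h3 : S3 x = ((j + 1 + u + 1 + k : ℕ) : ℕ∞))
    (h4 : S4 x = ((j + 1 + u + 1 + k + 1 + v : ℕ) : ℕ∞)) :
    x = code [j, u, k, v] := by
  have hxj : x j = true := by
    unfold s1 at h1
    rcases Nat.le_one_iff_eq_zero_or_eq_one.mp hj with hj0 | hj1
    · subst hj0
      by_contra hc
      have : x 0 = false := by revert hc; cases x 0 <;> simp
      rw [this] at h1; simp at h1
    · subst hj1
      rcases hx.1 with h | h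
      · rw [h] at h1; simp at h1
      · exact h
  have hx0 : j = 1 → x 0 = false := by
    intro hj1; subst hj1
    unfold s1 at h1
    by_contra hc
    have : x 0 = true := by revert hc; cases x 0 <;> simp
    rw [this] at h1; simp at h1
  rw [S2] at h2; rw [h1] at h2
  have n2 := nxt_eq_iff.mp h2
  rw [S3, S2, h1, h2, nxtE_coe] at h3
  have n3 := nxt_eq_iff.mp h3
  rw [S4, S3, S2, h1, h2, nxtE_coe, h3, nxtE_coe] at h4
  have n4 := nxt_eq_iff.mp h4
  funext n
  have hcode : code [j, u, k, v] n = true ↔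
      n = j ∨ n = j + 1 + u ∨ n = j + 1 + u + 1 + k ∨ n = j + 1 + u + 1 + k + 1 + v := by
    rw [code_true_iff]
    constructor
    · rintro ⟨i, hi, rfl⟩
      simp only [List.length] at hi
      interval_cases i
      · left; rfl
      · right; left; rw [posSum_cons_succ, posSum0]
      · right; right; left; rw [posSum_cons_succ, posSum_cons_succ, posSum0]; omega
      · right; right; right
        rw [posSum_cons_succ, posSum_cons_succ, posSum_cons_succ, posSum0]; omega
    · rintro (rfl | rfl | rfl | rfl)
      · exact ⟨0, by simp, rfl⟩
      · exact ⟨1, by simp, by rw [posSum_cons_succ, posSum0]⟩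
      · exact ⟨2, by simp, by rw [posSum_cons_succ, posSum_cons_succ, posSum0]; omega⟩
      · exact ⟨3, by simp, by
          rw [posSum_cons_succ, posSum_cons_succ, posSum_cons_succ, posSum0]; omega⟩
  have hiff : x n = true ↔ code [j, u, k, v] n = true := by
    rw [hcode]
    constructor
    · intro hxn
      by_contra hc
      push_neg at hc
      obtain ⟨c1, c2, c3, c4⟩ := hc
      rcases Nat.lt_or_ge n j with hlt | hge
      · have hn0 : n = 0 := by omega
        rw [hn0, hx0 (by omega)] at hxn
        exact Bool.noConfusion hxn
      rcases Nat.lt_or_ge n (j + 1 + u) with hlt2 | hge2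
      · rw [n2.2.2 n (by omega) (by omega)] at hxn; exact Bool.noConfusion hxn
      rcases Nat.lt_or_ge n (j + 1 + u + 1 + k) with hlt3 | hge3
      · rw [n3.2.2 n (by omega) (by omega)] at hxn; exact Bool.noConfusion hxn
      rcases Nat.lt_or_ge n (j + 1 + u + 1 + k + 1 + v) with hlt4 | hge4
      · rw [n4.2.2 n (by omega) (by omega)] at hxn; exact Bool.noConfusion hxn
      · exact (hx.2 j (j + 1 + u) (j + 1 + u + 1 + k) (j + 1 + u + 1 + k + 1 + v) n
          (by omega) (by omega) (by omega) (by omega)) ⟨hxj, n2.2.1, n3.2.1, n4.2.1, hxn⟩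
    · rintro (rfl | rfl | rfl | rfl)
      exacts [hxj, n2.2.1, n3.2.1, n4.2.1]
  cases hb : x n <;> cases hb2 : code [j, u, k, v] n
  · rfl
  · rw [hb, hb2] at hiff; simp at hiff
  · rw [hb, hb2] at hiff; simp at hiff
  · rfl
-- chunk 4 : the relation W on address space and its closedness
def dJ (d : DD) : Bool := d.1
def dA (d : DD) : ℕ∞ := d.2.1
def dB (d : DD) : ℕ∞ := d.2.2.1
def dC (d : DD) : ℕ∞ := d.2.2.2

def repD (d : DD) (t : ℤ) : Prop :=
  dJ d = decide (hd t = 0) ∧ dA d = ((hd t + 1 + eta t : ℕ) : ℕ∞)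

lemma repD_unique {d : DD} {t t' : ℤ} (h1 : repD d t) (h2 : repD d t') : t = t' := by
  have hJ : decide (hd t = 0) = decide (hd t' = 0) := h1.1 ▸ h2.1
  have hA : ((hd t + 1 + eta t : ℕ) : ℕ∞) = ((hd t' + 1 + eta t' : ℕ) : ℕ∞) := h1.2 ▸ h2.2
  have hA' : hd t + 1 + eta t = hd t' + 1 + eta t' := by exact_mod_cast hA
  have h1t := hd_le_one t
  have h2t := hd_le_one t'
  have hhd : hd t = hd t' := by
    rcases Nat.le_one_iff_eq_zero_or_eq_one.mp h1t with h | h <;>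
      rcases Nat.le_one_iff_eq_zero_or_eq_one.mp h2t with h' | h' <;>
        rw [h, h'] <;> rw [h, h'] at hJ <;> simp_all
  exact hd_eta_inj hhd (by omega)

lemma decide_hd_ne {t t' : ℤ} (h : hd t ≠ hd t') :
    decide (hd t = 0) ≠ decide (hd t' = 0) := by
  have h1t := hd_le_one t
  have h2t := hd_le_one t'
  rcases Nat.le_one_iff_eq_zero_or_eq_one.mp h1t with h1 | h1 <;>
    rcases Nat.le_one_iff_eq_zero_or_eq_one.mp h2t with h2 | h2 <;> rw [h1, h2] <;> simp_all

/-- consecutive integers have `eta` differing by one. -/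
lemma eta_consec {t t' : ℤ} (h : t' = t + 1) : eta t' = eta t + 1 ∨ eta t = eta t' + 1 := by
  unfold eta; omega

lemma hd_consec_ne {t t' : ℤ} (h : t' = t + 1) (h2 : 2 ≤ eta t ∨ 2 ≤ eta t') :
    hd t ≠ hd t' := by
  unfold hd eta at *; split_ifs <;> omega

/-- the "limit" part of the closed relation. -/
def LIMrel : Set (DD × DD) :=
  {q | dB q.1 = ⊤ ∧ dB q.2 = ⊤ ∧
    ((∃ t t' : ℤ, repD q.1 t ∧ repD q.2 t' ∧ (t' = t + 1 ∨ t = t' + 1)) ∨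
     (dA q.1 = ⊤ ∧ dA q.2 = ⊤ ∧ dJ q.1 ≠ dJ q.2))}

/-- the "edge" part of the closed relation. -/
def EDGrel (p : ℕ) : Set (DD × DD) :=
  {q | ∃ k : ℕ, p ≤ k ∧ ∃ t t' : ℤ, repD q.1 t ∧ repD q.2 t' ∧
    dB q.1 = ((hd t + 1 + eta t + 1 + k : ℕ) : ℕ∞) ∧
    dB q.2 = ((hd t' + 1 + eta t' + 1 + k : ℕ) : ℕ∞) ∧
    ((dC q.1 = ⊤ ∧ dC q.2 = ⊤ ∧ (CN k t t' ∨ CN k t' t)) ∨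
     (∃ n : ℕ,
       (dC q.1 = ((hd t + 1 + eta t + 1 + k + 1 + 2 * n : ℕ) : ℕ∞) ∧
        dC q.2 = ((hd t' + 1 + eta t' + 1 + k + 1 + (2 * n + 1) : ℕ) : ℕ∞) ∧ CN k t t') ∨
       (dC q.1 = ((hd t + 1 + eta t + 1 + k + 1 + (2 * n + 1) : ℕ) : ℕ∞) ∧
        dC q.2 = ((hd t' + 1 + eta t' + 1 + k + 1 + 2 * n : ℕ) : ℕ∞) ∧ CN k t' t)))}

def Wrel (p : ℕ) : Set (DD × DD) := LIMrel ∪ EDGrel p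

lemma EDGrel_CN {p : ℕ} {q : DD × DD} (h : q ∈ EDGrel p) :
    ∃ k : ℕ, p ≤ k ∧ ∃ t t' : ℤ, repD q.1 t ∧ repD q.2 t' ∧
      dB q.1 = ((hd t + 1 + eta t + 1 + k : ℕ) : ℕ∞) ∧
      dB q.2 = ((hd t' + 1 + eta t' + 1 + k : ℕ) : ℕ∞) ∧ (CN k t t' ∨ CN k t' t) := by
  obtain ⟨k, hk, t, t', r1, r2, b1, b2, hc⟩ := h
  refine ⟨k, hk, t, t', r1, r2, b1, b2, ?_⟩
  rcases hc with ⟨_, _, hcn⟩ | ⟨n, ⟨_, _, hcn⟩ | ⟨_, _, hcn⟩⟩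
  exacts [hcn, Or.inl hcn, Or.inr hcn]

/-- hD of points of `Kset` realize `repD`. -/
lemma repD_hD_ptE (t : ℤ) (k v : ℕ) : repD (hD (ptE t k v)) t := by
  refine ⟨?_, (S_ptE t k v).1⟩
  show ptE t k v 0 = _
  exact x0_code (hd_le_one t) _

lemma repD_hD_ptZ (t : ℤ) (k : ℕ) : repD (hD (ptZ t k)) t := by
  refine ⟨?_, (S_ptZ t k).1⟩
  show ptZ t k 0 = _
  exact x0_code (hd_le_one t) _

/-- edges of the graph land in `Wrel`. -/
lemma edge_mem_W {p k : ℕ} (hk : p ≤ k) {t t' : ℤ} (hCN : CN k t t') (n : ℕ) :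
    (hD (ptE t k (2 * n)), hD (ptE t' k (2 * n + 1))) ∈ Wrel p := by
  right
  refine ⟨k, hk, t, t', repD_hD_ptE t k _, repD_hD_ptE t' k _,
    (S_ptE t k (2 * n)).2.1, (S_ptE t' k (2 * n + 1)).2.1, Or.inr ⟨n, Or.inl
      ⟨(S_ptE t k (2 * n)).2.2, (S_ptE t' k (2 * n + 1)).2.2, hCN⟩⟩⟩

lemma edge_mem_W' {p k : ℕ} (hk : p ≤ k) {t t' : ℤ} (hCN : CN k t t') (n : ℕ) :
    (hD (ptE t' k (2 * n + 1)), hD (ptE t k (2 * n))) ∈ Wrel p := by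
  right
  exact ⟨k, hk, t', t, repD_hD_ptE t' k _, repD_hD_ptE t k _,
    (S_ptE t' k (2 * n + 1)).2.1, (S_ptE t k (2 * n)).2.1, Or.inr ⟨n, Or.inr
      ⟨(S_ptE t' k (2 * n + 1)).2.2, (S_ptE t k (2 * n)).2.2, hCN⟩⟩⟩

/-- the basic neighborhoods in `ℕ∞`. -/
def nbh (v : ℕ∞) (L : ℕ) : Set ℕ∞ := if v = ⊤ then Set.Ioi (L : ℕ∞) else {v}

lemma nbh_mem_nhds (v : ℕ∞) (L : ℕ) : nbh v L ∈ nhds v := by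
  unfold nbh
  split_ifs with hv
  · subst hv
    exact isOpen_Ioi.mem_nhds (WithTop.coe_lt_top L)
  · exact (ENat.isOpen_singleton hv).mem_nhds rfl

lemma nbh_cases {v : ℕ∞} {L : ℕ} {w : ℕ∞} (h : w ∈ nbh v L) :
    (v = ⊤ ∧ (L : ℕ∞) < w) ∨ (v ≠ ⊤ ∧ w = v) := by
  unfold nbh at h
  split_ifs at h with hv
  · exact Or.inl ⟨hv, h⟩
  · exact Or.inr ⟨hv, h⟩
-- chunk 5 : closedness of Wrel
lemma cast_lt_of {L : ℕ} {v : ℕ∞} {m : ℕ} (h : (L : ℕ∞) < v) (hv : v = (m : ℕ∞)) : L < m := by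
  rw [hv] at h; exact_mod_cast h

lemma eq_toNat_of {v : ℕ∞} {m : ℕ} (hv : v ≠ ⊤) (h : v = (m : ℕ∞)) : v.toNat = m := by
  rw [h]; simp

lemma isClosed_Wrel (p : ℕ) : IsClosed (Wrel p) := by
  rw [← isOpen_compl_iff, isOpen_iff_mem_nhds]
  rintro ⟨d1, d2⟩ he
  rw [Set.mem_compl_iff] at he
  set L := (dA d1).toNat + (dA d2).toNat + (dB d1).toNat + (dB d2).toNat +
    (dC d1).toNat + (dC d2).toNat + p + 40 with hL
  have hU : {q : DD × DD | dJ q.1 = dJ d1 ∧ dJ q.2 = dJ d2 ∧ dA q.1 ∈ nbh (dA d1) L ∧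
      dA q.2 ∈ nbh (dA d2) L ∧ dB q.1 ∈ nbh (dB d1) L ∧ dB q.2 ∈ nbh (dB d2) L ∧
      dC q.1 ∈ nbh (dC d1) L ∧ dC q.2 ∈ nbh (dC d2) L} ∈ nhds (d1, d2) := by
    have cJ1 : Continuous (fun q : DD × DD => dJ q.1) := by unfold dJ; fun_prop
    have cJ2 : Continuous (fun q : DD × DD => dJ q.2) := by unfold dJ; fun_prop
    have cA1 : Continuous (fun q : DD × DD => dA q.1) := by unfold dA; fun_prop
    have cA2 : Continuous (fun q : DD × DD => dA q.2) := by unfold dA; fun_prop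
    have cB1 : Continuous (fun q : DD × DD => dB q.1) := by unfold dB; fun_prop
    have cB2 : Continuous (fun q : DD × DD => dB q.2) := by unfold dB; fun_prop
    have cC1 : Continuous (fun q : DD × DD => dC q.1) := by unfold dC; fun_prop
    have cC2 : Continuous (fun q : DD × DD => dC q.2) := by unfold dC; fun_prop
    have m1 : (fun q : DD × DD => dJ q.1) ⁻¹' {dJ d1} ∈ nhds (d1, d2) :=
      cJ1.continuousAt.preimage_mem_nhds ((isOpen_discrete _).mem_nhds rfl)
    have m2 : (fun q : DD × DD => dJ q.2) ⁻¹' {dJ d2} ∈ nhds (d1, d2) :=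
      cJ2.continuousAt.preimage_mem_nhds ((isOpen_discrete _).mem_nhds rfl)
    have m3 : (fun q : DD × DD => dA q.1) ⁻¹' nbh (dA d1) L ∈ nhds (d1, d2) :=
      cA1.continuousAt.preimage_mem_nhds (nbh_mem_nhds _ _)
    have m4 : (fun q : DD × DD => dA q.2) ⁻¹' nbh (dA d2) L ∈ nhds (d1, d2) :=
      cA2.continuousAt.preimage_mem_nhds (nbh_mem_nhds _ _)
    have m5 : (fun q : DD × DD => dB q.1) ⁻¹' nbh (dB d1) L ∈ nhds (d1, d2) :=
      cB1.continuousAt.preimage_mem_nhds (nbh_mem_nhds _ _)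
    have m6 : (fun q : DD × DD => dB q.2) ⁻¹' nbh (dB d2) L ∈ nhds (d1, d2) :=
      cB2.continuousAt.preimage_mem_nhds (nbh_mem_nhds _ _)
    have m7 : (fun q : DD × DD => dC q.1) ⁻¹' nbh (dC d1) L ∈ nhds (d1, d2) :=
      cC1.continuousAt.preimage_mem_nhds (nbh_mem_nhds _ _)
    have m8 : (fun q : DD × DD => dC q.2) ⁻¹' nbh (dC d2) L ∈ nhds (d1, d2) :=
      cC2.continuousAt.preimage_mem_nhds (nbh_mem_nhds _ _)
    exact Filter.inter_mem m1 (Filter.inter_mem m2 (Filter.inter_mem m3 (Filter.inter_mem m4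
      (Filter.inter_mem m5 (Filter.inter_mem m6 (Filter.inter_mem m7 m8))))))
  refine Filter.mem_of_superset hU ?_
  rintro ⟨g1, g2⟩ ⟨hJ1, hJ2, hA1, hA2, hB1, hB2, hC1, hC2⟩ hmem
  exfalso; apply he
  rcases hmem with ⟨hgB1, hgB2, hLor⟩ | ⟨k, hk, t, t', r1, r2, hgB1, hgB2, hCc⟩
  · -- LIM case
    have hB1t : dB d1 = ⊤ := by
      rcases nbh_cases hB1 with ⟨h, _⟩ | ⟨h, he'⟩
      · exact h
      · rw [he'] at hgB1; exact hgB1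
    have hB2t : dB d2 = ⊤ := by
      rcases nbh_cases hB2 with ⟨h, _⟩ | ⟨h, he'⟩
      · exact h
      · rw [he'] at hgB2; exact hgB2
    rcases hLor with ⟨t, t', r1, r2, hcons⟩ | ⟨hgA1, hgA2, hgJ⟩
    · -- consec subcase
      have hee : eta t ≤ eta t' + 1 ∧ eta t' ≤ eta t + 1 := by
        unfold eta; rcases hcons with h | h <;> omega
      have hh1 := hd_le_one t
      have hh2 := hd_le_one t'
      rcases nbh_cases hA1 with ⟨hA1t, hA1b⟩ | ⟨hA1f, hA1e⟩ <;>
        rcases nbh_cases hA2 with ⟨hA2t, hA2b⟩ | ⟨hA2f, hA2e⟩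
      · -- both ⊤ : the ∞∞ clause for (d1,d2)
        have hn1 : L < hd t + 1 + eta t := cast_lt_of hA1b r1.2
        have hn2 : L < hd t' + 1 + eta t' := cast_lt_of hA2b r2.2
        have hne : hd t ≠ hd t' := by
          rcases hcons with h | h
          · exact hd_consec_ne h (Or.inl (by omega))
          · exact (hd_consec_ne h (Or.inl (by omega))).symm
        refine Or.inl ⟨hB1t, hB2t, Or.inr ⟨hA1t, hA2t, ?_⟩⟩
        rw [← hJ1, ← hJ2, r1.1, r2.1]
        exact decide_hd_ne hne
      · -- d1 ⊤, d2 finite : impossible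
        exfalso
        have hn1 : L < hd t + 1 + eta t := cast_lt_of hA1b r1.2
        have ha2 : (dA d2).toNat = hd t' + 1 + eta t' := eq_toNat_of hA2f (by rw [← hA2e]; exact r2.2)
        omega
      · -- d1 finite, d2 ⊤ : impossible
        exfalso
        have hn2 : L < hd t' + 1 + eta t' := cast_lt_of hA2b r2.2
        have ha1 : (dA d1).toNat = hd t + 1 + eta t := eq_toNat_of hA1f (by rw [← hA1e]; exact r1.2)
        omega
      · -- both finite : the consec clause for (d1,d2)
        refine Or.inl ⟨hB1t, hB2t, Or.inl ⟨t, t', ⟨?_, ?_⟩, ⟨?_, ?_⟩, hcons⟩⟩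
        · rw [← hJ1]; exact r1.1
        · rw [← hA1e]; exact r1.2
        · rw [← hJ2]; exact r2.1
        · rw [← hA2e]; exact r2.2
    · -- ∞∞ subcase
      have hA1t : dA d1 = ⊤ := by
        rcases nbh_cases hA1 with ⟨h, _⟩ | ⟨h, he'⟩
        · exact h
        · rw [he'] at hgA1; exact hgA1
      have hA2t : dA d2 = ⊤ := by
        rcases nbh_cases hA2 with ⟨h, _⟩ | ⟨h, he'⟩
        · exact h
        · rw [he'] at hgA2; exact hgA2
      refine Or.inl ⟨hB1t, hB2t, Or.inr ⟨hA1t, hA2t, ?_⟩⟩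
      rw [← hJ1, ← hJ2]; exact hgJ
  · -- EDG case
    have hCNor : CN k t t' ∨ CN k t' t := by
      rcases hCc with ⟨_, _, hcn⟩ | ⟨n, ⟨_, _, hcn⟩ | ⟨_, _, hcn⟩⟩
      exacts [hcn, Or.inl hcn, Or.inr hcn]
    have hbnd : eta t ≤ k + 2 ∧ eta t' ≤ k + 2 := by
      rcases hCNor with h | h
      · exact CN_bound h
      · exact (CN_bound h).symm
    have hh1 := hd_le_one t
    have hh2 := hd_le_one t'
    rcases nbh_cases hA1 with ⟨hA1t, hA1b⟩ | ⟨hA1f, hA1e⟩ <;>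
      rcases nbh_cases hA2 with ⟨hA2t, hA2b⟩ | ⟨hA2f, hA2e⟩
    · -- both A ⊤ : conclude ∞∞ LIM for (d1,d2)
      have hn1 : L < hd t + 1 + eta t := cast_lt_of hA1b r1.2
      have hn2 : L < hd t' + 1 + eta t' := cast_lt_of hA2b r2.2
      have hne : hd t ≠ hd t' := by
        rcases hCNor with h | h
        · exact CN_hd_ne h (Or.inl (by omega))
        · exact (CN_hd_ne h (Or.inl (by omega))).symm
      have hB1t : dB d1 = ⊤ := by
        rcases nbh_cases hB1 with ⟨h, _⟩ | ⟨h, he'⟩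
        · exact h
        · exfalso
          have := eq_toNat_of h (by rw [← he']; exact hgB1)
          omega
      have hB2t : dB d2 = ⊤ := by
        rcases nbh_cases hB2 with ⟨h, _⟩ | ⟨h, he'⟩
        · exact h
        · exfalso
          have := eq_toNat_of h (by rw [← he']; exact hgB2)
          omega
      refine Or.inl ⟨hB1t, hB2t, Or.inr ⟨hA1t, hA2t, ?_⟩⟩
      rw [← hJ1, ← hJ2, r1.1, r2.1]
      exact decide_hd_ne hne
    · -- A1 ⊤, A2 finite : impossible
      exfalso
      have hn1 : L < hd t + 1 + eta t := cast_lt_of hA1b r1.2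
      have ha2 : (dA d2).toNat = hd t' + 1 + eta t' := eq_toNat_of hA2f (by rw [← hA2e]; exact r2.2)
      rcases hCNor with h | h <;> (unfold CN eta at *; omega)
    · -- A1 finite, A2 ⊤ : impossible
      exfalso
      have hn2 : L < hd t' + 1 + eta t' := cast_lt_of hA2b r2.2
      have ha1 : (dA d1).toNat = hd t + 1 + eta t := eq_toNat_of hA1f (by rw [← hA1e]; exact r1.2)
      rcases hCNor with h | h <;> (unfold CN eta at *; omega)
    · -- both A finite
      have ha1 : (dA d1).toNat = hd t + 1 + eta t := eq_toNat_of hA1f (by rw [← hA1e]; exact r1.2)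
      have ha2 : (dA d2).toNat = hd t' + 1 + eta t' := eq_toNat_of hA2f (by rw [← hA2e]; exact r2.2)
      rcases nbh_cases hB1 with ⟨hB1t, hB1b⟩ | ⟨hB1f, hB1e⟩ <;>
        rcases nbh_cases hB2 with ⟨hB2t, hB2b⟩ | ⟨hB2f, hB2e⟩
      · -- both B ⊤ : conclude consec LIM for (d1,d2)
        have hn1 : L < hd t + 1 + eta t + 1 + k := cast_lt_of hB1b hgB1
        have hcons : t' = t + 1 ∨ t = t' + 1 := by
          rcases hCNor with h | h <;> (unfold CN eta at *; omega)
        refine Or.inl ⟨hB1t, hB2t, Or.inl ⟨t, t', ⟨?_, ?_⟩, ⟨?_, ?_⟩, hcons⟩⟩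
        · rw [← hJ1]; exact r1.1
        · rw [← hA1e]; exact r1.2
        · rw [← hJ2]; exact r2.1
        · rw [← hA2e]; exact r2.2
      · -- B1 ⊤, B2 finite : impossible
        exfalso
        have hn1 : L < hd t + 1 + eta t + 1 + k := cast_lt_of hB1b hgB1
        have hb2 : (dB d2).toNat = hd t' + 1 + eta t' + 1 + k :=
          eq_toNat_of hB2f (by rw [← hB2e]; exact hgB2)
        omega
      · -- B1 finite, B2 ⊤ : impossible
        exfalso
        have hn2 : L < hd t' + 1 + eta t' + 1 + k := cast_lt_of hB2b hgB2
        have hb1 : (dB d1).toNat = hd t + 1 + eta t + 1 + k :=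
          eq_toNat_of hB1f (by rw [← hB1e]; exact hgB1)
        omega
      · -- both B finite
        have hb1 : (dB d1).toNat = hd t + 1 + eta t + 1 + k :=
          eq_toNat_of hB1f (by rw [← hB1e]; exact hgB1)
        rcases nbh_cases hC1 with ⟨hC1t, hC1b⟩ | ⟨hC1f, hC1e⟩ <;>
          rcases nbh_cases hC2 with ⟨hC2t, hC2b⟩ | ⟨hC2f, hC2e⟩
        · -- both C ⊤ : EDG with the ⊤⊤ branch
          refine Or.inr ⟨k, hk, t, t', ⟨?_, ?_⟩, ⟨?_, ?_⟩, ?_, ?_, Or.inl ⟨hC1t, hC2t, hCNor⟩⟩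
          · rw [← hJ1]; exact r1.1
          · rw [← hA1e]; exact r1.2
          · rw [← hJ2]; exact r2.1
          · rw [← hA2e]; exact r2.2
          · rw [← hB1e]; exact hgB1
          · rw [← hB2e]; exact hgB2
        · -- C1 ⊤, C2 finite : impossible
          exfalso
          rcases hCc with ⟨hcg1, hcg2, _⟩ | ⟨n, ⟨hcg1, hcg2, _⟩ | ⟨hcg1, hcg2, _⟩⟩
          · rw [hC2e] at hcg2; exact hC2f hcg2
          · have hc2 : (dC d2).toNat = hd t' + 1 + eta t' + 1 + k + 1 + (2 * n + 1) :=
              eq_toNat_of hC2f (by rw [← hC2e]; exact hcg2)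
            have hn1 : L < hd t + 1 + eta t + 1 + k + 1 + 2 * n := cast_lt_of hC1b hcg1
            omega
          · have hc2 : (dC d2).toNat = hd t' + 1 + eta t' + 1 + k + 1 + 2 * n :=
              eq_toNat_of hC2f (by rw [← hC2e]; exact hcg2)
            have hn1 : L < hd t + 1 + eta t + 1 + k + 1 + (2 * n + 1) := cast_lt_of hC1b hcg1
            omega
        · -- C1 finite, C2 ⊤ : impossible
          exfalso
          rcases hCc with ⟨hcg1, hcg2, _⟩ | ⟨n, ⟨hcg1, hcg2, _⟩ | ⟨hcg1, hcg2, _⟩⟩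
          · rw [hC1e] at hcg1; exact hC1f hcg1
          · have hc1 : (dC d1).toNat = hd t + 1 + eta t + 1 + k + 1 + 2 * n :=
              eq_toNat_of hC1f (by rw [← hC1e]; exact hcg1)
            have hn2 : L < hd t' + 1 + eta t' + 1 + k + 1 + (2 * n + 1) := cast_lt_of hC2b hcg2
            omega
          · have hc1 : (dC d1).toNat = hd t + 1 + eta t + 1 + k + 1 + (2 * n + 1) :=
              eq_toNat_of hC1f (by rw [← hC1e]; exact hcg1)
            have hn2 : L < hd t' + 1 + eta t' + 1 + k + 1 + 2 * n := cast_lt_of hC2b hcg2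
            omega
        · -- both C finite : EDG transfers verbatim
          refine Or.inr ⟨k, hk, t, t', ⟨?_, ?_⟩, ⟨?_, ?_⟩, ?_, ?_, ?_⟩
          · rw [← hJ1]; exact r1.1
          · rw [← hA1e]; exact r1.2
          · rw [← hJ2]; exact r2.1
          · rw [← hA2e]; exact r2.2
          · rw [← hB1e]; exact hgB1
          · rw [← hB2e]; exact hgB2
          · rcases hCc with ⟨hcg1, hcg2, hcn⟩ | ⟨n, ⟨hcg1, hcg2, hcn⟩ | ⟨hcg1, hcg2, hcn⟩⟩
            · rw [hC1e] at hcg1; exact absurd hcg1 hC1f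
            · exact Or.inr ⟨n, Or.inl ⟨by rw [← hC1e]; exact hcg1, by rw [← hC2e]; exact hcg2, hcn⟩⟩
            · exact Or.inr ⟨n, Or.inr ⟨by rw [← hC1e]; exact hcg1, by rw [← hC2e]; exact hcg2, hcn⟩⟩
-- chunk 6 : no closed odd walk in Wrel
lemma CN_zmod {k : ℕ} {t t' : ℤ} (h : CN k t t') :
    ((t' : ZMod (2 * k + 3)) = (t : ZMod (2 * k + 3)) + 1) := by
  rcases h.2 with ⟨_, rfl⟩ | ⟨rfl, rfl⟩
  · push_cast; ring
  · have h0 : ((2 * k + 3 : ℕ) : ZMod (2 * k + 3)) = 0 := ZMod.natCast_self _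
    push_cast at h0 ⊢
    linear_combination -h0

lemma bool_ne_flip {a b : Bool} (h : a ≠ b) : b = !a := by revert h; cases a <;> cases b <;> simp

lemma no_odd_walk (p : ℕ) (ζ : ℕ → DD)
    (hstep : ∀ i, (ζ (i % (2 * p + 3)), ζ ((i + 1) % (2 * p + 3))) ∈ Wrel (p + 1)) : False := by
  classical
  set N := 2 * p + 3 with hN
  set ξ : ℕ → DD := fun i => ζ (i % N) with hξ
  have hstep' : ∀ i, (ξ i, ξ (i + 1)) ∈ Wrel (p + 1) := fun i => hstep i
  have hξN : ξ N = ξ 0 := by rw [hξ]; simp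
  rcases eq_or_ne (dB (ξ 0)) ⊤ with hB0 | hB0
  · -- LIM chain: parity argument
    have key : ∀ i, dB (ξ i) = ⊤ → (ξ i, ξ (i + 1)) ∈ LIMrel ∧ dB (ξ (i + 1)) = ⊤ := by
      intro i hi
      rcases hstep' i with hl | hedg
      · exact ⟨hl, hl.2.1⟩
      · obtain ⟨k, _, t, t', _, _, hb, _, _⟩ := hedg
        exact absurd (hb.symm.trans hi) (ENat.coe_ne_top _)
    have hall : ∀ i, dB (ξ i) = ⊤ := by
      intro i
      induction i with
      | zero => exact hB0
      | succ i ih => exact (key i ih).2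
    set χ : DD → Bool :=
      fun d => if h : ∃ t, repD d t then decide (Even (Classical.choose h)) else dJ d with hχ
    have hflip : ∀ i, χ (ξ (i + 1)) = ! χ (ξ i) := by
      intro i
      obtain ⟨⟨_, _, hor⟩, _⟩ := key i (hall i)
      rcases hor with ⟨t, t', r1, r2, hcons⟩ | ⟨ha1, ha2, hj⟩
      · have e1 : ∃ s, repD (ξ i) s := ⟨t, r1⟩
        have e2 : ∃ s, repD (ξ (i + 1)) s := ⟨t', r2⟩
        rw [hχ]; simp only
        rw [dif_pos e2, dif_pos e1]
        have ht : Classical.choose e1 = t := repD_unique (Classical.choose_spec e1) r1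
        have ht' : Classical.choose e2 = t' := repD_unique (Classical.choose_spec e2) r2
        rw [ht, ht']
        rcases hcons with h | h <;> rw [h] <;>
          simp only [Int.even_add_one, decide_not, Bool.not_not]
      · have ha1' : dA (ξ i) = ⊤ := ha1
        have ha2' : dA (ξ (i + 1)) = ⊤ := ha2
        have hj' : dJ (ξ i) ≠ dJ (ξ (i + 1)) := hj
        have e1 : ¬ ∃ s, repD (ξ i) s := by
          rintro ⟨s, hs⟩
          exact (ENat.coe_ne_top _) (ha1'.symm.trans hs.2).symm
        have e2 : ¬ ∃ s, repD (ξ (i + 1)) s := by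
          rintro ⟨s, hs⟩
          exact (ENat.coe_ne_top _) (ha2'.symm.trans hs.2).symm
        rw [hχ]; simp only
        rw [dif_neg e2, dif_neg e1]
        exact bool_ne_flip hj'
    have hpar : ∀ i, χ (ξ i) = (if Even i then χ (ξ 0) else !(χ (ξ 0))) := by
      intro i
      induction i with
      | zero => simp
      | succ i ih =>
        rw [hflip i, ih]
        by_cases he : Even i <;> simp [Nat.even_add_one, he]
    have h1 := hpar N
    rw [hξN] at h1
    have hNodd : ¬ Even N := by rw [hN, Nat.even_iff]; omega
    rw [if_neg hNodd] at h1
    exact absurd h1 (by cases χ (ξ 0) <;> simp)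
  · -- EDG chain: winding argument
    have key : ∀ i, dB (ξ i) ≠ ⊤ → ∃ k t t', p + 1 ≤ k ∧ repD (ξ i) t ∧ repD (ξ (i + 1)) t' ∧
        dB (ξ i) = ((hd t + 1 + eta t + 1 + k : ℕ) : ℕ∞) ∧
        dB (ξ (i + 1)) = ((hd t' + 1 + eta t' + 1 + k : ℕ) : ℕ∞) ∧
        (CN k t t' ∨ CN k t' t) := by
      intro i hi
      rcases hstep' i with hl | hedg
      · exact absurd hl.1 hi
      · obtain ⟨k, hk, t, t', r1, r2, b1, b2, hc⟩ := hedg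
        refine ⟨k, t, t', hk, r1, r2, b1, b2, ?_⟩
        rcases hc with ⟨_, _, h⟩ | ⟨n, ⟨_, _, h⟩ | ⟨_, _, h⟩⟩
        exacts [h, Or.inl h, Or.inr h]
    have hnot : ∀ i, dB (ξ i) ≠ ⊤ := by
      intro i
      induction i with
      | zero => exact hB0
      | succ i ih =>
        obtain ⟨k, t, t', _, _, _, _, b2, _⟩ := key i ih
        rw [b2]; exact ENat.coe_ne_top _
    have hrep : ∀ i, ∃ t, repD (ξ i) t := by
      intro i
      obtain ⟨k, t, t', _, r1, _⟩ := key i (hnot i)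
      exact ⟨t, r1⟩
    set T : ℕ → ℤ := fun i => Classical.choose (hrep i) with hT
    have hTspec : ∀ i, repD (ξ i) (T i) := fun i => Classical.choose_spec (hrep i)
    obtain ⟨k0, t0, t0', hk0, r10, r20, b10, b20, hcn0⟩ := key 0 (hnot 0)
    have hBall : ∀ i, dB (ξ i) = ((hd (T i) + 1 + eta (T i) + 1 + k0 : ℕ) : ℕ∞) := by
      intro i
      induction i with
      | zero =>
        have ht : T 0 = t0 := repD_unique (hTspec 0) r10
        rw [ht]; exact b10
      | succ i ih =>
        obtain ⟨k, t, t', hk, r1, r2, b1, b2, hcn⟩ := key i (hnot i)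
        have ht : T i = t := repD_unique (hTspec i) r1
        have ht' : T (i + 1) = t' := repD_unique (hTspec (i + 1)) r2
        have hkk : k = k0 := by
          rw [ht, b1] at ih
          have := Nat.cast_inj.mp ih
          omega
        rw [ht', ← hkk]; exact b2
    have hCNall : ∀ i, CN k0 (T i) (T (i + 1)) ∨ CN k0 (T (i + 1)) (T i) := by
      intro i
      obtain ⟨k, t, t', hk, r1, r2, b1, b2, hcn⟩ := key i (hnot i)
      have ht : T i = t := repD_unique (hTspec i) r1
      have ht' : T (i + 1) = t' := repD_unique (hTspec (i + 1)) r2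
      have hkk : k = k0 := by
        have ih := hBall i
        rw [ht, b1] at ih
        have := Nat.cast_inj.mp ih
        omega
      rw [ht, ht', ← hkk]; exact hcn
    set M := 2 * k0 + 3 with hM
    have hz : ∀ i, ((T (i + 1) : ℤ) : ZMod M) = ((T i : ℤ) : ZMod M) + 1 ∨
        ((T i : ℤ) : ZMod M) = ((T (i + 1) : ℤ) : ZMod M) + 1 := by
      intro i
      rcases hCNall i with h | h
      · exact Or.inl (CN_zmod h)
      · exact Or.inr (CN_zmod h)
    set ε : ℕ → ℤ :=
      fun i => if ((T (i + 1) : ℤ) : ZMod M) = ((T i : ℤ) : ZMod M) + 1 then 1 else -1 with hε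
    have hε1 : ∀ i, ε i = 1 ∨ ε i = -1 := by
      intro i
      rw [hε]; simp only
      split_ifs
      exacts [Or.inl rfl, Or.inr rfl]
    have hεstep : ∀ i, ((T (i + 1) : ℤ) : ZMod M) = ((T i : ℤ) : ZMod M) + ((ε i : ℤ) : ZMod M) := by
      intro i
      rw [hε]; simp only
      split_ifs with h
      · rw [h]; push_cast; ring
      · rcases hz i with h' | h'
        · exact absurd h' h
        · rw [h']; push_cast; ring
    have hsum : ∀ m, ((T m : ℤ) : ZMod M) =
        ((T 0 : ℤ) : ZMod M) + ((∑ i ∈ Finset.range m, ε i : ℤ) : ZMod M) := by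
      intro m
      induction m with
      | zero => simp
      | succ m ih =>
        rw [Finset.sum_range_succ, hεstep m, ih]
        push_cast
        ring
    have hTN : T N = T 0 := by
      have h1 := hTspec N
      rw [hξN] at h1
      exact repD_unique h1 (hTspec 0)
    have hMne : NeZero M := ⟨by omega⟩
    have hdvd : (M : ℤ) ∣ (∑ i ∈ Finset.range N, ε i) := by
      have hh := hsum N
      rw [hTN] at hh
      have h0 : ((∑ i ∈ Finset.range N, ε i : ℤ) : ZMod M) = 0 := left_eq_add.mp hh
      exact_mod_cast (ZMod.intCast_zmod_eq_zero_iff_dvd _ _).mp h0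
    have hbound : ∀ m : ℕ, -(m : ℤ) ≤ (∑ i ∈ Finset.range m, ε i) ∧
        (∑ i ∈ Finset.range m, ε i) ≤ m ∧ (∑ i ∈ Finset.range m, ε i) % 2 = m % 2 := by
      intro m
      induction m with
      | zero => simp
      | succ m ih =>
        rw [Finset.sum_range_succ]
        rcases hε1 m with h | h <;> rw [h] <;> push_cast <;> omega
    obtain ⟨hb1, hb2, hb3⟩ := hbound N
    have hσne : (∑ i ∈ Finset.range N, ε i) ≠ 0 := by
      intro h
      rw [h] at hb3
      rw [hN] at hb3
      omega
    have hle := Int.le_of_dvd (abs_pos.mpr hσne) ((dvd_abs _ _).mpr hdvd)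
    have habs : |∑ i ∈ Finset.range N, ε i| ≤ (N : ℤ) := abs_le.mpr ⟨hb1, hb2⟩
    have hfin : (M : ℤ) ≤ (N : ℤ) := le_trans hle habs
    rw [hM, hN] at hfin
    push_cast at hfin
    omega
-- chunk 7 : the graphs
def Gra (p : ℕ) : Set (↥Kset × ↥Kset) :=
  {q | ∃ k, p ≤ k ∧ ∃ t t' : ℤ, CN k t t' ∧ ∃ n : ℕ,
    (q.1 = eK t k (2 * n) ∧ q.2 = eK t' k (2 * n + 1)) ∨
    (q.1 = eK t' k (2 * n + 1) ∧ q.2 = eK t k (2 * n))}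

lemma eK_inj {t t' : ℤ} {k k' v v' : ℕ} (h : eK t k v = eK t' k' v') :
    t = t' ∧ k = k' ∧ v = v' := by
  have h1 : ptE t k v = ptE t' k' v' := congrArg Subtype.val h
  have h2 := code_injective h1
  simp only [List.cons.injEq, and_true] at h2
  exact ⟨hd_eta_inj h2.1 h2.2.1, h2.2.2.1, h2.2.2.2⟩

lemma CN_det' {k : ℕ} {t1 t2 t' : ℤ} (h1 : CN k t1 t') (h2 : CN k t2 t') : t1 = t2 := by
  unfold CN at *; omega

lemma Gra_countable (p : ℕ) : (Gra p).Countable := by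
  have h : Gra p ⊆ Set.range (fun w : ℕ × ℤ × ℤ × ℕ =>
      ((eK w.2.1 w.1 (2 * w.2.2.2), eK w.2.2.1 w.1 (2 * w.2.2.2 + 1)) : ↥Kset × ↥Kset)) ∪
      Set.range (fun w : ℕ × ℤ × ℤ × ℕ =>
      ((eK w.2.2.1 w.1 (2 * w.2.2.2 + 1), eK w.2.1 w.1 (2 * w.2.2.2)) : ↥Kset × ↥Kset)) := by
    rintro ⟨x, y⟩ ⟨k, _, t, t', _, n, ⟨hx, hy⟩ | ⟨hx, hy⟩⟩
    · exact Or.inl ⟨(k, t, t', n), by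
        have hx' : x = eK t k (2 * n) := hx
        have hy' : y = eK t' k (2 * n + 1) := hy
        show (eK t k (2 * n), eK t' k (2 * n + 1)) = (x, y)
        rw [← hx', ← hy']⟩
    · exact Or.inr ⟨(k, t, t', n), by
        have hx' : x = eK t' k (2 * n + 1) := hx
        have hy' : y = eK t k (2 * n) := hy
        show (eK t' k (2 * n + 1), eK t k (2 * n)) = (x, y)
        rw [← hx', ← hy']⟩
  exact Set.Countable.mono h ((Set.countable_range _).union (Set.countable_range _))

lemma Gra_isGraph (p : ℕ) : IsGraph (Gra p) := by
  constructor
  · rintro x y ⟨k, hk, t, t', hcn, n, ⟨hx, hy⟩ | ⟨hx, hy⟩⟩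
    · exact ⟨k, hk, t, t', hcn, n, Or.inr ⟨hy, hx⟩⟩
    · exact ⟨k, hk, t, t', hcn, n, Or.inl ⟨hy, hx⟩⟩
  · rintro x ⟨k, hk, t, t', hcn, n, ⟨hx, hy⟩ | ⟨hx, hy⟩⟩
    · have := (eK_inj (hx.symm.trans hy)).2.2; omega
    · have := (eK_inj (hx.symm.trans hy)).2.2; omega

lemma Gra_deg1 (p : ℕ) (x y z : ↥Kset) (h1 : (x, y) ∈ Gra p) (h2 : (x, z) ∈ Gra p) : y = z := by
  obtain ⟨k, hk, t, t', hcn, n, hor⟩ := h1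
  obtain ⟨k2, hk2, s, s', hcn2, n2, hor2⟩ := h2
  rcases hor with ⟨hx, hy⟩ | ⟨hx, hy⟩ <;> rcases hor2 with ⟨hx2, hy2⟩ | ⟨hx2, hy2⟩ <;>
    simp only at hx hy hx2 hy2
  · obtain ⟨ht, hkk, hv⟩ := eK_inj (hx.symm.trans hx2)
    have hn : n = n2 := by omega
    subst ht hkk hn
    rw [hy, hy2, CN_det hcn hcn2]
  · exfalso
    obtain ⟨_, _, hv⟩ := eK_inj (hx.symm.trans hx2)
    omega
  · exfalso
    obtain ⟨_, _, hv⟩ := eK_inj (hx.symm.trans hx2)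
    omega
  · obtain ⟨ht, hkk, hv⟩ := eK_inj (hx.symm.trans hx2)
    have hn : n = n2 := by omega
    subst ht hkk hn
    rw [hy, hy2, CN_det' hcn hcn2]

lemma Gra_mono (p : ℕ) : Gra (p + 1) ⊆ Gra p := by
  rintro q ⟨k, hk, t, t', hcn, n, hor⟩
  exact ⟨k, by omega, t, t', hcn, n, hor⟩

/-- 3-colorability. -/
lemma Gra_col3 (p : ℕ) : HasContColoring (Gra p) 3 := by
  refine ⟨fun q => col q.1, continuous_colK, ?_⟩
  rintro x y ⟨k, hk, t, t', hcn, n, ⟨hx, hy⟩ | ⟨hx, hy⟩⟩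
  · have hx' : x = eK t k (2 * n) := hx
    have hy' : y = eK t' k (2 * n + 1) := hy
    rw [hx', hy']
    show col (eK t k (2 * n)).1 ≠ col (eK t' k (2 * n + 1)).1
    rw [col_eK, col_eK]
    exact gam_ne hcn
  · have hx' : x = eK t' k (2 * n + 1) := hx
    have hy' : y = eK t k (2 * n) := hy
    rw [hx', hy']
    show col (eK t' k (2 * n + 1)).1 ≠ col (eK t k (2 * n)).1
    rw [col_eK, col_eK]
    exact (gam_ne hcn).symm

/-- the walk around the cycle of length `2p+3`. -/
def mWalk (p : ℕ) (i : ℕ) : ℤ := if i ≤ p then (i : ℤ) else (i : ℤ) - (2 * p + 3)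

lemma mWalk_CN (p : ℕ) (i : ℕ) :
    CN p (mWalk p (i % (2 * p + 3))) (mWalk p ((i + 1) % (2 * p + 3))) := by
  have h1 : i % (2 * p + 3) < 2 * p + 3 := Nat.mod_lt _ (by omega)
  have h2 : (i + 1) % (2 * p + 3) = (i % (2 * p + 3) + 1) % (2 * p + 3) := by
    conv_lhs => rw [Nat.add_mod]
    rw [Nat.mod_eq_of_lt (show (1 : ℕ) < 2 * p + 3 by omega)]
  rcases Nat.lt_or_ge (i % (2 * p + 3) + 1) (2 * p + 3) with hlt | hge
  · rw [h2, Nat.mod_eq_of_lt hlt]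
    set r := i % (2 * p + 3) with hr
    unfold mWalk CN
    split_ifs <;> omega
  · have he : i % (2 * p + 3) = 2 * p + 2 := by clear h2; omega
    have h0 : (i + 1) % (2 * p + 3) = 0 := by
      rw [h2, he, show 2 * p + 2 + 1 = 2 * p + 3 from by ring, Nat.mod_self]
    rw [he, h0]
    have e1 : mWalk p (2 * p + 2) = -1 := by
      unfold mWalk; rw [if_neg (by omega)]; push_cast; ring
    have e2 : mWalk p 0 = 0 := by
      unfold mWalk; rw [if_pos (by omega)]; norm_num
    rw [e1, e2]
    unfold CN
    omega

/-- consequence of continuity: a continuous proper coloring separates `CN`-related z-points. -/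
lemma zK_color_ne {p : ℕ} {β : Type*} [TopologicalSpace β] [DiscreteTopology β]
    {c : ↥Kset → β} (hc : Continuous c)
    (hprop : ∀ x y : ↥Kset, (x, y) ∈ Gra p → c x ≠ c y)
    {t t' : ℤ} (hcn : CN p t t') : c (zK t p) ≠ c (zK t' p) := by
  have h1 : ∀ᶠ n in Filter.atTop, c (eK t p (2 * n)) = c (zK t p) := by
    have := (hc.tendsto (zK t p)).comp (tendsto_eK_a t p)
    rwa [nhds_discrete, Filter.tendsto_pure] at this
  have h2 : ∀ᶠ n in Filter.atTop, c (eK t' p (2 * n + 1)) = c (zK t' p) := by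
    have := (hc.tendsto (zK t' p)).comp (tendsto_eK_b t' p)
    rwa [nhds_discrete, Filter.tendsto_pure] at this
  obtain ⟨n, hn1, hn2⟩ := (h1.and h2).exists
  intro he
  apply hprop (eK t p (2 * n)) (eK t' p (2 * n + 1))
    ⟨p, le_refl p, t, t', hcn, n, Or.inl ⟨rfl, rfl⟩⟩
  rw [hn1, hn2, he]

/-- no continuous 2-coloring. -/
lemma Gra_no2 (p : ℕ) : ¬ HasContColoring (Gra p) 2 := by
  rintro ⟨c, hc, hprop⟩
  have hcol : ∀ t t', CN p t t' → c (zK t p) ≠ c (zK t' p) :=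
    fun t t' hcn => zK_color_ne hc hprop hcn
  have hstep : ∀ i ≤ 2 * p + 2,
      (c (zK (mWalk p i) p)).val = if i % 2 = 0 then (c (zK (mWalk p 0) p)).val
        else 1 - (c (zK (mWalk p 0) p)).val := by
    intro i
    induction i with
    | zero => intro _; simp
    | succ i ih =>
      intro hle
      have hi := ih (by omega)
      have hcni : CN p (mWalk p i) (mWalk p (i + 1)) := by
        have := mWalk_CN p i
        rwa [Nat.mod_eq_of_lt (by omega), Nat.mod_eq_of_lt (by omega)] at this
      have hne := hcol _ _ hcni
      have hv1 : (c (zK (mWalk p i) p)).val < 2 := (c (zK (mWalk p i) p)).isLt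
      have hv2 : (c (zK (mWalk p (i + 1)) p)).val < 2 := (c (zK (mWalk p (i + 1)) p)).isLt
      have hvne : (c (zK (mWalk p i) p)).val ≠ (c (zK (mWalk p (i + 1)) p)).val := by
        intro hh; exact hne (Fin.ext hh)
      have hv0 : (c (zK (mWalk p 0) p)).val < 2 := (c (zK (mWalk p 0) p)).isLt
      rcases Nat.even_or_odd i with he | ho
      · rw [Nat.even_iff] at he
        rw [if_pos he] at hi
        rw [if_neg (by omega)]
        omega
      · rw [Nat.odd_iff] at ho
        rw [if_neg (by omega)] at hi
        rw [if_pos (by omega)]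
        omega
  have hlast := hstep (2 * p + 2) (by omega)
  rw [if_pos (by omega)] at hlast
  have hcnlast : CN p (mWalk p (2 * p + 2)) (mWalk p 0) := by
    have := mWalk_CN p (2 * p + 2)
    rwa [Nat.mod_eq_of_lt (by omega), Nat.mod_self] at this
  have hne := hcol _ _ hcnlast
  have : (c (zK (mWalk p (2 * p + 2)) p)).val = (c (zK (mWalk p 0) p)).val := hlast
  exact hne (Fin.ext this)
-- chunk 8 : remaining pieces and the main theorem
lemma Gra_sub_W {q : ℕ} {x y : ↥Kset} (h : (x, y) ∈ Gra q) :
    (hD x.1, hD y.1) ∈ Wrel q := by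
  obtain ⟨k, hk, t, t', hcn, n, ⟨hx, hy⟩ | ⟨hx, hy⟩⟩ := h
  · have hx' : x = eK t k (2 * n) := hx
    have hy' : y = eK t' k (2 * n + 1) := hy
    rw [hx', hy']
    exact edge_mem_W hk hcn n
  · have hx' : x = eK t' k (2 * n + 1) := hx
    have hy' : y = eK t k (2 * n) := hy
    rw [hx', hy']
    exact edge_mem_W' hk hcn n

lemma no_RedC (p : ℕ) : ¬ RedC (Gra p) (Gra (p + 1)) := by
  rintro ⟨φ, hφc, hφh⟩
  have hcont : Continuous (fun q : ↥Kset => hD (φ q).1) := continuous_hD.comp hφc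
  have hWpair : ∀ t t' : ℤ, CN p t t' →
      (hD (φ (zK t p)).1, hD (φ (zK t' p)).1) ∈ Wrel (p + 1) := by
    intro t t' hcn
    have hmemseq : ∀ n : ℕ,
        (hD (φ (eK t p (2 * n))).1, hD (φ (eK t' p (2 * n + 1))).1) ∈ Wrel (p + 1) := by
      intro n
      exact Gra_sub_W (hφh _ _ ⟨p, le_refl p, t, t', hcn, n, Or.inl ⟨rfl, rfl⟩⟩)
    have ht1 : Filter.Tendsto (fun n : ℕ => hD (φ (eK t p (2 * n))).1) Filter.atTop
        (nhds (hD (φ (zK t p)).1)) := (hcont.tendsto _).comp (tendsto_eK_a t p)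
    have ht2 : Filter.Tendsto (fun n : ℕ => hD (φ (eK t' p (2 * n + 1))).1) Filter.atTop
        (nhds (hD (φ (zK t' p)).1)) := (hcont.tendsto _).comp (tendsto_eK_b t' p)
    exact (isClosed_Wrel (p + 1)).mem_of_tendsto (ht1.prodMk_nhds ht2)
      (Filter.Eventually.of_forall hmemseq)
  exact no_odd_walk p (fun i => hD (φ (zK (mWalk p i) p)).1)
    (fun i => hWpair _ _ (mWalk_CN p i))

lemma s1_of_J {x : ℕ → Bool} {t : ℤ} (h : x 0 = decide (hd t = 0)) : s1 x = hd t := by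
  have h1 := hd_le_one t
  unfold s1
  rcases Nat.le_one_iff_eq_zero_or_eq_one.mp h1 with h0 | h0 <;> rw [h0] at h ⊢ <;> simp_all

lemma isClosed_topSingleton : IsClosed ({⊤} : Set ℕ∞) := by
  rw [← isOpen_compl_iff]
  have : ({⊤} : Set ℕ∞)ᶜ = Set.Iio ⊤ := by
    ext x; simp [lt_top_iff_ne_top]
  rw [this]; exact isOpen_Iio

lemma F_decomp (p : ℕ) : ∃ F₁ F₂ : Set (↥Kset × ↥Kset),
    IsClosed F₁ ∧ IsClosed F₂ ∧ Gra p = F₁ \ F₂ := by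
  have hPc : Continuous (fun q : ↥Kset × ↥Kset => ((hD q.1.1, hD q.2.1) : DD × DD)) :=
    (continuous_hD.comp continuous_fst).prodMk (continuous_hD.comp continuous_snd)
  have hdCc : Continuous (fun d : DD => dC d) := by unfold dC; fun_prop
  have hCc1 : Continuous (fun q : ↥Kset × ↥Kset => dC (hD q.1.1)) :=
    hdCc.comp (continuous_hD.comp continuous_fst)
  have hCc2 : Continuous (fun q : ↥Kset × ↥Kset => dC (hD q.2.1)) :=
    hdCc.comp (continuous_hD.comp continuous_snd)
  have hF1closed : IsClosed ((fun q : ↥Kset × ↥Kset => ((hD q.1.1, hD q.2.1) : DD × DD)) ⁻¹'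
      Wrel p) := (isClosed_Wrel p).preimage hPc
  refine ⟨_, ((fun q : ↥Kset × ↥Kset => ((hD q.1.1, hD q.2.1) : DD × DD)) ⁻¹' Wrel p) ∩
      (((fun q : ↥Kset × ↥Kset => dC (hD q.1.1)) ⁻¹' {⊤}) ∪
       ((fun q : ↥Kset × ↥Kset => dC (hD q.2.1)) ⁻¹' {⊤})),
    hF1closed, hF1closed.inter (IsClosed.union (isClosed_topSingleton.preimage hCc1)
      (isClosed_topSingleton.preimage hCc2)), ?_⟩
  ext ⟨x, y⟩
  simp only [Set.mem_diff, Set.mem_inter_iff, Set.mem_union, Set.mem_preimage,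
    Set.mem_singleton_iff]
  constructor
  · intro hG
    refine ⟨Gra_sub_W hG, ?_⟩
    rintro ⟨_, hor⟩
    obtain ⟨k, hk, t, t', hcn, n, ⟨hx, hy⟩ | ⟨hx, hy⟩⟩ := hG
    · have hx' : x = eK t k (2 * n) := hx
      have hy' : y = eK t' k (2 * n + 1) := hy
      rcases hor with h | h
      · rw [hx'] at h
        exact (ENat.coe_ne_top _) (((S_ptE t k (2 * n)).2.2).symm.trans h)
      · rw [hy'] at h
        exact (ENat.coe_ne_top _) (((S_ptE t' k (2 * n + 1)).2.2).symm.trans h)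
    · have hx' : x = eK t' k (2 * n + 1) := hx
      have hy' : y = eK t k (2 * n) := hy
      rcases hor with h | h
      · rw [hx'] at h
        exact (ENat.coe_ne_top _) (((S_ptE t' k (2 * n + 1)).2.2).symm.trans h)
      · rw [hy'] at h
        exact (ENat.coe_ne_top _) (((S_ptE t k (2 * n)).2.2).symm.trans h)
  · rintro ⟨hW, hn⟩
    have hC1 : dC (hD x.1) ≠ ⊤ := fun h => hn ⟨hW, Or.inl h⟩
    have hC2 : dC (hD y.1) ≠ ⊤ := fun h => hn ⟨hW, Or.inr h⟩
    rcases hW with hlim | hedg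
    · exact absurd (S4_top_of_S3 hlim.1) hC1
    · obtain ⟨k, hk, t, t', r1, r2, b1, b2, hCc⟩ := hedg
      rcases hCc with ⟨hc1, _, _⟩ | ⟨n, ⟨hc1, hc2, hcn⟩ | ⟨hc1, hc2, hcn⟩⟩
      · exact absurd hc1 hC1
      · have hxv : x.1 = code [hd t, eta t, k, 2 * n] :=
          reconstruct4 x.2 (hd_le_one t) (s1_of_J r1.1) r1.2 b1 hc1
        have hyv : y.1 = code [hd t', eta t', k, 2 * n + 1] :=
          reconstruct4 y.2 (hd_le_one t') (s1_of_J r2.1) r2.2 b2 hc2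
        exact ⟨k, hk, t, t', hcn, n, Or.inl ⟨Subtype.ext hxv, Subtype.ext hyv⟩⟩
      · have hxv : x.1 = code [hd t, eta t, k, 2 * n + 1] :=
          reconstruct4 x.2 (hd_le_one t) (s1_of_J r1.1) r1.2 b1 hc1
        have hyv : y.1 = code [hd t', eta t', k, 2 * n] :=
          reconstruct4 y.2 (hd_le_one t') (s1_of_J r2.1) r2.2 b2 hc2
        exact ⟨k, hk, t', t, hcn, n, Or.inr ⟨Subtype.ext hxv, Subtype.ext hyv⟩⟩

/-- the closed set of "top or even-fourth-gap" pairs. -/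
def TTset : Set (ℕ∞ × ℕ∞) :=
  {w | w.2 = ⊤ ∨ ∃ n m : ℕ, w.1 = (m : ℕ∞) ∧ w.2 = ((m + 1 + 2 * n : ℕ) : ℕ∞)}

lemma isClosed_TT : IsClosed TTset := by
  rw [← isOpen_compl_iff, isOpen_iff_mem_nhds]
  rintro ⟨b, c⟩ hbc
  rw [Set.mem_compl_iff] at hbc
  have hc : c ≠ ⊤ := fun h => hbc (Or.inl h)
  have hcc : c = ((c.toNat : ℕ) : ℕ∞) := (ENat.coe_toNat hc).symm
  have hU : (nbh b c.toNat) ×ˢ ({c} : Set ℕ∞) ∈ nhds (b, c) :=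
    prod_mem_nhds (nbh_mem_nhds _ _) ((ENat.isOpen_singleton hc).mem_nhds rfl)
  refine Filter.mem_of_superset hU ?_
  rintro ⟨b', c'⟩ ⟨hb', hc'⟩ hmem
  rw [Set.mem_singleton_iff] at hc'
  rcases hmem with h | ⟨n, m, h1, h2⟩
  · exact hc (hc'.symm.trans h)
  · rw [hc'] at h2
    have hm : m + 1 + 2 * n = c.toNat := by
      rw [hcc] at h2; exact_mod_cast h2.symm
    rcases nbh_cases hb' with ⟨hbt, hblt⟩ | ⟨hbf, hbe⟩
    · rw [h1] at hblt
      have : c.toNat < m := by exact_mod_cast hblt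
      omega
    · exact hbc (Or.inr ⟨n, m, by rw [← hbe]; exact h1, by rw [hcc, ← hm]⟩)

def Aset : Set ↥Kset := (fun x : ↥Kset => ((S3 x.1, S4 x.1) : ℕ∞ × ℕ∞)) ⁻¹' TTset

lemma isClosed_Aset : IsClosed Aset := by
  refine isClosed_TT.preimage ?_
  have h3 : Continuous (fun x : ↥Kset => S3 x.1) :=
    (continuous_iff_continuousAt.mpr continuousAt_S3).comp continuous_subtype_val
  have h4 : Continuous (fun x : ↥Kset => S4 x.1) :=
    (continuous_iff_continuousAt.mpr continuousAt_S4).comp continuous_subtype_val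
  exact h3.prodMk h4

lemma eK_a_mem_A (t : ℤ) (k n : ℕ) : eK t k (2 * n) ∈ Aset :=
  Or.inr ⟨n, hd t + 1 + eta t + 1 + k, (S_ptE t k (2 * n)).2.1, (S_ptE t k (2 * n)).2.2⟩

lemma eK_b_notMem_A (t : ℤ) (k n : ℕ) : eK t k (2 * n + 1) ∉ Aset := by
  rintro (h | ⟨n', m, h1, h2⟩)
  · exact (ENat.coe_ne_top _) (((S_ptE t k (2 * n + 1)).2.2).symm.trans h)
  · have e1 : ((hd t + 1 + eta t + 1 + k : ℕ) : ℕ∞) = ((m : ℕ) : ℕ∞) :=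
      ((S_ptE t k (2 * n + 1)).2.1).symm.trans h1
    have e2 : ((hd t + 1 + eta t + 1 + k + 1 + (2 * n + 1) : ℕ) : ℕ∞) =
        ((m + 1 + 2 * n' : ℕ) : ℕ∞) := ((S_ptE t k (2 * n + 1)).2.2).symm.trans h2
    have q1 : hd t + 1 + eta t + 1 + k = m := by exact_mod_cast e1
    have q2 : hd t + 1 + eta t + 1 + k + 1 + (2 * n + 1) = m + 1 + 2 * n' := by exact_mod_cast e2
    omega

lemma partitionAB (p : ℕ) : ∃ A B : Set ↥Kset, A ∪ B = Set.univ ∧ A ∩ B = ∅ ∧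
    SigmaPiForm A ∧ SigmaPiForm B ∧ Indep (Gra p) A ∧ Indep (Gra p) B := by
  refine ⟨Aset, Asetᶜ, Set.union_compl_self _, Set.inter_compl_self _, ?_, ?_, ?_, ?_⟩
  · exact ⟨∅, Aset, ∅, isOpen_empty, isClosed_Aset, isClopen_empty, by simp⟩
  · exact ⟨Asetᶜ, ∅, Set.univ, isClosed_Aset.isOpen_compl, isClosed_empty, isClopen_univ, by simp⟩
  · rintro x hx y hy ⟨k, hk, t, t', hcn, n, ⟨hx', hy'⟩ | ⟨hx', hy'⟩⟩
    · have h2 : y = eK t' k (2 * n + 1) := hy'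
      rw [h2] at hy
      exact eK_b_notMem_A t' k n hy
    · have h2 : x = eK t' k (2 * n + 1) := hx'
      rw [h2] at hx
      exact eK_b_notMem_A t' k n hx
  · rintro x hx y hy ⟨k, hk, t, t', hcn, n, ⟨hx', hy'⟩ | ⟨hx', hy'⟩⟩
    · have h2 : x = eK t k (2 * n) := hx'
      rw [h2] at hx
      exact hx (eK_a_mem_A t k n)
    · have h2 : y = eK t k (2 * n) := hy'
      rw [h2] at hy
      exact hy (eK_a_mem_A t k n)

theorem stmt3 :
    ∃ K : Set (ℕ → Bool), IsCompact K ∧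
      ∃ G : ℕ → Set (↥K × ↥K),
        (∀ p, (G p).Countable) ∧
        (∀ p, IsGraph (G p)) ∧
        (∀ p, ∃ F₁ F₂ : Set (↥K × ↥K), IsClosed F₁ ∧ IsClosed F₂ ∧ G p = F₁ \ F₂) ∧
        (∀ p, HasContColoring (G p) 3 ∧ ¬ HasContColoring (G p) 2) ∧
        (∀ p, ∃ A B : Set ↥K, A ∪ B = Set.univ ∧ A ∩ B = ∅ ∧
          SigmaPiForm A ∧ SigmaPiForm B ∧ Indep (G p) A ∧ Indep (G p) B) ∧
        (∀ p, ∀ x y z : ↥K, (x, y) ∈ G p → (x, z) ∈ G p → y = z) ∧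
        (∀ p, G (p + 1) ⊆ G p) ∧
        (∀ p, RedIC (G (p + 1)) (G p)) ∧
        (∀ p, ¬ RedC (G p) (G (p + 1))) ∧
        (∀ p, ¬ RedIC (G p) (G (p + 1))) := by
  refine ⟨Kset, isCompact_Kset, Gra, Gra_countable, Gra_isGraph, F_decomp,
    (fun p => ⟨Gra_col3 p, Gra_no2 p⟩), partitionAB, Gra_deg1, Gra_mono,
    (fun p => ⟨id, continuous_id, Function.injective_id, fun x y h => Gra_mono p h⟩),
    no_RedC, ?_⟩
  rintro p ⟨φ, hc, hi, hh⟩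
  exact no_RedC p ⟨φ, hc, hh⟩
end

section
/- Let X be a first countable topological space and G a graph on X. If there exists x ∈ X such that (x,x) belongs to the closure in X×X of ⋃_{p∈ℕ} (\overline{G})^{2p+1}, where \overline{G} is the closure of G in X×X, then (X,G) has no continuous 2-coloring. -/
open TopologicalSpace

theorem stmt4 (X : Type*) [TopologicalSpace X] [FirstCountableTopology X]
    (G : Set (X × X)) (hG : IsGraph G)
    (h : ∃ x : X, (x, x) ∈ closure (⋃ p : ℕ, RelPow (closure G) (2 * p + 1))) :
    ¬ HasContColoring G 2 := by
  rintro ⟨c, hc, hcol⟩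
  obtain ⟨x, hx⟩ := h
  set D : Set (X × X) := {p | c p.1 ≠ c p.2} with hD
  have hDc : IsClosed D := by
    have : D = (fun p : X × X => (c p.1, c p.2)) ⁻¹' {q : Fin 2 × Fin 2 | q.1 ≠ q.2} := rfl
    rw [this]
    exact (isClosed_discrete _).preimage
      ((hc.comp continuous_fst).prodMk (hc.comp continuous_snd))
  have hGD : closure G ⊆ D := closure_minimal (fun p hp => hcol p.1 p.2 hp) hDc
  have flip : ∀ a b d : Fin 2, a ≠ b → ((b = d) ↔ ¬ a = d) := by decide
  have key : (⋃ p : ℕ, RelPow (closure G) (2 * p + 1)) ⊆ D := by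
    rintro ⟨a, b⟩ hab
    simp only [Set.mem_iUnion] at hab
    obtain ⟨p, f, h0, hl, hstep⟩ := hab
    have alt : ∀ i, i ≤ 2 * p + 1 → (c (f i) = c (f 0) ↔ Even i) := by
      intro i
      induction i with
      | zero => simp
      | succ n ih =>
        intro hn
        have hne : c (f n) ≠ c (f (n + 1)) := hGD (hstep n (by omega))
        have ihn := ih (by omega)
        rw [flip _ _ _ hne, ihn, Nat.even_add_one]
    have := alt (2 * p + 1) le_rfl
    rw [h0, hl] at this
    have hodd : ¬ Even (2 * p + 1) := by simp [Nat.even_add_one]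
    have : c b ≠ c a := fun hh => hodd (this.mp hh)
    exact this.symm
  have hcl : closure (⋃ p : ℕ, RelPow (closure G) (2 * p + 1)) ⊆ D :=
    closure_minimal key hDc
  exact (hcl hx) rfl
end

section
/- There is a family ((P_α,G_α))_{α∈2^ℕ}, where each P_α is a countable zero-dimensional Polish space and each G_α is a graph on P_α with continuous chromatic number exactly three, such that for α ≠ β the pairs (P_α,G_α) and (P_β,G_β) are ≼^i_c-incompatible in the class 𝔖 of graphs on zero-dimensional metrizable separable spaces with continuous chromatic number at least three (i.e., no (Z,G) ∈ 𝔖 satisfies both (Z,G) ≼^i_c (P_α,G_α) and (Z,G) ≼^i_c (P_β,G_β)). Consequently, 𝔖 has no ≼^i_c-antichain basis, and every ≼^i_c-basis for 𝔖 has cardinality at least 2^ℵ0; the same holds for the subclass of graphs on zero-dimensional Polish spaces with continuous chromatic number at least three. -/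
/-!
For `α : ℕ → Bool` and `S ⊆ ℕ`, `pathGraph α S` is a disjoint union of paths, the `k`-th of odd
length `pathLen α k`, a length which encodes `k` and `α` below `k`. The endpoints of all paths
converge to a point `apex`, and all other points are isolated. Coloring by the parity of the
position is continuous off `apex`; giving `apex` and the endpoints a third color makes it
continuous, while for infinite `S` the odd lengths rule out any continuous 2-coloring.

Let `G` have no continuous 2-coloring and map injectively and continuously into `pathGraph α S`,
with `z₀ ↦ apex`. If some neighbourhood of `z₀` contained no two distinct points joined in `G`,
flipping the pulled-back parity coloring on the components meeting it would make it continuous.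
So every neighbourhood of `z₀` contains the ends of a path of `G`, which is mapped onto a whole
path `k` of `pathGraph α S`, with `k` as large as we like. Mapping the same path of `G` into
`pathGraph β T` shows that its length is also some `pathLen β l`; hence `α` and `β` agree on
arbitrarily long initial segments, so `G` determines `α`. Pulling these paths back along a
neighbourhood basis of `z₀` embeds `pathGraph α S'` into `G` for an infinite `S' ⊆ S`. Thus a
member of an antichain basis below `pathGraph α ℕ` would lie below both `pathGraph α T₁` and
`pathGraph α T₂` for disjoint infinite `T₁, T₂ ⊆ S'`, which is impossible.
-/

open TopologicalSpace

/-- Since every zero-dimensional metrizable separable space embeds into `2^ℕ`, the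
class `𝔖` may equivalently be taken to consist of graphs on subspaces of `2^ℕ`:
a member is a subset of the Cantor space together with a graph on it. -/
def SubCantorGraph : Type := Σ P : Set (ℕ → Bool), Set (↥P × ↥P)

/-- membership in (the concrete representation of) the class `𝔖` of graphs on
zero-dimensional metrizable separable spaces with CCN at least three -/
def SubCantorGraph.MemS (z : SubCantorGraph) : Prop :=
  IsGraph z.2 ∧ ¬ HasContColoring z.2 2

/-- membership in the subclass of graphs on zero-dimensional Polish spaces
with CCN at least three -/
def SubCantorGraph.MemP (z : SubCantorGraph) : Prop :=
  z.MemS ∧ PolishSpace ↥z.1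

open Topology Filter Set Function

def IsGraph.toSimpleGraph {X : Type*} {G : Set (X × X)} (hG : IsGraph G) : SimpleGraph X where
  Adj x y := (x, y) ∈ G
  symm := ⟨hG.1⟩
  loopless := ⟨hG.2⟩

def IsGraphPath {X : Type*} (G : Set (X × X)) (w : ℕ → X) (n : ℕ) : Prop :=
  (∀ j < n, (w j, w (j + 1)) ∈ G) ∧ InjOn w (Iic n)

section Graphs

variable {X Y : Type*} {G : Set (X × X)} {w : ℕ → X} {n : ℕ}

lemma IsGraphPath.map {H : Set (Y × Y)} {f : X → Y} (hw : IsGraphPath G w n)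
    (hf : Injective f) (hfG : ∀ x y, (x, y) ∈ G → (f x, f y) ∈ H) :
    IsGraphPath H (f ∘ w) n :=
  ⟨fun j hj => hfG _ _ (hw.1 j hj), hf.comp_injOn hw.2⟩

lemma IsGraphPath.reverse (hG : IsGraph G) (hw : IsGraphPath G w n) :
    IsGraphPath G (fun j => w (n - j)) n := by
  refine ⟨fun j hj => ?_, fun i hi j hj hij => ?_⟩
  · have := hG.1 _ _ (hw.1 (n - (j + 1)) (by omega))
    rwa [show n - (j + 1) + 1 = n - j by omega] at this
  · simp only [mem_Iic] at hi hj
    have := hw.2 (show n - i ∈ Iic n from Nat.sub_le n i) (Nat.sub_le n j) hij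
    omega

lemma IsGraph.exists_isGraphPath (hG : IsGraph G) {z z' : X}
    (h : hG.toSimpleGraph.Reachable z z') : ∃ n w, IsGraphPath G w n ∧ w 0 = z ∧ w n = z' := by
  classical
  obtain ⟨p⟩ := h
  obtain ⟨q, hq⟩ := p.toPath
  exact ⟨q.length, q.getVert, ⟨fun j hj => q.adj_getVert_succ hj, hq.getVert_injOn⟩,
    q.getVert_zero, q.getVert_length⟩

lemma coloring_eq_iff_even_of_walk {c : X → Fin 2} (hc : ∀ x y, (x, y) ∈ G → c x ≠ c y)
    (hw : ∀ j < n, (w j, w (j + 1)) ∈ G) : ∀ j ≤ n, (c (w j) = c (w 0) ↔ Even j) := by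
  intro j hj
  induction j with
  | zero => simp
  | succ j ih =>
    have two_valued : ∀ a b t : Fin 2, a ≠ b → (b = t ↔ a ≠ t) := by decide
    rw [two_valued _ _ _ (hc _ _ (hw j hj)), ne_eq, ih (by omega), Nat.even_add_one]

/-- Flip `c` on the components meeting `V`, so that `V` becomes monochromatic. -/
theorem hasContColoring_two_of_reachable_eq [TopologicalSpace X] (hG : IsGraph G)
    {c : X → Fin 2} (hc : ∀ x y, (x, y) ∈ G → c x ≠ c y) {V : Set X} (hV : IsOpen V)
    (hiso : ∀ x ∉ V, IsOpen {x})
    (hVG : ∀ x ∈ V, ∀ y ∈ V, hG.toSimpleGraph.Reachable x y → x = y) :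
    HasContColoring G 2 := by
  classical
  let flip : hG.toSimpleGraph.ConnectedComponent → Fin 2 := fun C =>
    if h : ∃ v ∈ V, hG.toSimpleGraph.connectedComponentMk v = C then c h.choose else 0
  have hV0 : ∀ x ∈ V, c x + flip (hG.toSimpleGraph.connectedComponentMk x) = 0 := by
    intro x hx
    have h : ∃ v ∈ V, hG.toSimpleGraph.connectedComponentMk v =
        hG.toSimpleGraph.connectedComponentMk x := ⟨x, hx, rfl⟩
    have hv := h.choose_spec
    have self_add : ∀ a : Fin 2, a + a = 0 := by decide
    simp only [flip, dif_pos h, hVG _ hv.1 x hx (SimpleGraph.ConnectedComponent.exact hv.2),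
      self_add]
  refine ⟨fun x => c x + flip (hG.toSimpleGraph.connectedComponentMk x), ?_, fun x y hxy => ?_⟩
  · refine IsLocallyConstant.continuous ((IsLocallyConstant.iff_eventually_eq _).2 fun x => ?_)
    by_cases hx : x ∈ V
    · filter_upwards [hV.mem_nhds hx] with y hy
      rw [hV0 y hy, hV0 x hx]
    · filter_upwards [(hiso x hx).mem_nhds rfl] with y hy
      rw [mem_singleton_iff.1 hy]
  · have hxy' : hG.toSimpleGraph.Adj x y := hxy
    show c x + _ ≠ c y + _
    rw [SimpleGraph.ConnectedComponent.sound hxy'.reachable]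
    exact fun h => hc x y hxy (add_right_cancel h)

end Graphs

lemma RedIC.trans {X Y W : Type*} [TopologicalSpace X] [TopologicalSpace Y] [TopologicalSpace W]
    {G : Set (X × X)} {H : Set (Y × Y)} {K : Set (W × W)} (h₁ : RedIC G H) (h₂ : RedIC H K) :
    RedIC G K := by
  obtain ⟨f, hfc, hfi, hfG⟩ := h₁
  obtain ⟨g, hgc, hgi, hgH⟩ := h₂
  exact ⟨g ∘ f, hgc.comp hfc, hgi.comp hfi, fun x y hxy => hgH _ _ (hfG x y hxy)⟩

lemma continuous_of_continuousAt_of_isOpen_singleton {X Y : Type*} [TopologicalSpace X]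
    [TopologicalSpace Y] {f : X → Y} {a : X} (hiso : ∀ x ≠ a, IsOpen {x})
    (ha : ContinuousAt f a) : Continuous f := by
  refine continuous_iff_continuousAt.2 fun x => ?_
  by_cases hx : x = a
  · exact hx ▸ ha
  · rw [ContinuousAt, (isOpen_singleton_iff_nhds_eq_pure x).1 (hiso x hx)]
    exact tendsto_pure_nhds f x

lemma IsLocallyClosed.polishSpace {X : Type*} [TopologicalSpace X] [PolishSpace X] {s : Set X}
    (hs : IsLocallyClosed s) : PolishSpace s := by
  obtain ⟨U, C, hU, hC, rfl⟩ := hs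
  have := hU.polishSpace
  refine (Topology.IsClosedEmbedding.inclusion inter_subset_left ?_).polishSpace
  convert hC.preimage continuous_subtype_val using 1
  ext x
  simp

lemma Set.Infinite.exists_disjoint_infinite {X : Type*} {s : Set X} (hs : s.Infinite) :
    ∃ t₁ ⊆ s, ∃ t₂ ⊆ s, t₁.Infinite ∧ t₂.Infinite ∧ Disjoint t₁ t₂ := by
  let e := hs.natEmbedding
  have he : Injective fun n => (e n : X) := Subtype.val_injective.comp e.injective
  refine ⟨range fun n => (e (2 * n) : X), range_subset_iff.2 fun n => (e _).2,
    range fun n => (e (2 * n + 1) : X), range_subset_iff.2 fun n => (e _).2,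
    infinite_range_of_injective fun m n h => by have := he h; omega,
    infinite_range_of_injective fun m n h => by have := he h; omega, ?_⟩
  rw [Set.disjoint_left]
  rintro _ ⟨m, rfl⟩ ⟨n, h⟩
  have := he h
  omega

lemma eq_id_of_injOn_of_succ_le {b : ℕ → ℕ} {n m : ℕ} (hstep : ∀ j < n, b (j + 1) ≤ b j + 1)
    (hinj : InjOn b (Iic n)) (hle : ∀ j ≤ n, b j ≤ m) (h0 : b 0 = 0) (hn : b n = m) :
    n = m ∧ ∀ j ≤ n, b j = j := by
  have hlip : ∀ i j, i ≤ j → j ≤ n → b j ≤ b i + (j - i) := by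
    intro i j hij hjn
    induction j, hij using Nat.le_induction with
    | base => simp
    | succ j hij ih =>
      have := hstep j (by omega)
      have := ih (by omega)
      omega
  have hnm : (Finset.range (n + 1)).card ≤ (Finset.range (m + 1)).card := by
    refine Finset.card_le_card_of_injOn b (fun j hj => ?_) (hinj.mono fun j hj => ?_)
    · simp only [Finset.coe_range, mem_Iio, Nat.lt_succ_iff] at hj ⊢
      exact hle j hj
    · simpa [Nat.lt_succ_iff] using hj
  rw [Finset.card_range, Finset.card_range] at hnm
  have hmn := hlip 0 n (Nat.zero_le n) le_rfl
  refine ⟨by omega, fun j hj => ?_⟩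
  have h₁ := hlip 0 j (Nat.zero_le j) hj
  have h₂ := hlip j n hj le_rfl
  omega

namespace PathSpace

def pathLen (α : ℕ → Bool) (k : ℕ) : ℕ := 2 * Encodable.encode ((List.range k).map α) + 3

def apex : ℕ → Bool := fun _ => false

/-- Vertex `i` of the `k`-th path. Coordinate `Nat.pair k i + 1` identifies the vertex;
coordinate `0` marks the inner vertices, which keeps them away from `apex`. -/
def vtx (α : ℕ → Bool) (k i : ℕ) : ℕ → Bool :=
  fun n => decide (n = Nat.pair k i + 1 ∨ (n = 0 ∧ 0 < i ∧ i < pathLen α k))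

def pathSpace (α : ℕ → Bool) (S : Set ℕ) : Set (ℕ → Bool) :=
  insert apex {x | ∃ k ∈ S, ∃ i ≤ pathLen α k, x = vtx α k i}

def apexPt (α : ℕ → Bool) (S : Set ℕ) : pathSpace α S := ⟨apex, mem_insert _ _⟩

def IsEndpoint (α : ℕ → Bool) (k : ℕ) (x : ℕ → Bool) : Prop :=
  x = vtx α k 0 ∨ x = vtx α k (pathLen α k)

def pathGraph (α : ℕ → Bool) (S : Set ℕ) : Set (pathSpace α S × pathSpace α S) :=
  {e | ∃ k, ∃ i < pathLen α k, (e.1.1 = vtx α k i ∧ e.2.1 = vtx α k (i + 1)) ∨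
    (e.2.1 = vtx α k i ∧ e.1.1 = vtx α k (i + 1))}

noncomputable def pos (α : ℕ → Bool) (x : ℕ → Bool) : ℕ :=
  (invFun (fun p : ℕ × ℕ => vtx α p.1 p.2) x).2

variable {α β : ℕ → Bool} {S T : Set ℕ} {k k' i i' : ℕ}

lemma eq_of_pathLen_eq {l : ℕ} (h : pathLen α k = pathLen β l) : k = l ∧ ∀ j < k, α j = β j := by
  have hlist : (List.range k).map α = (List.range l).map β :=
    Encodable.encode_injective (by unfold pathLen at h; omega)
  obtain rfl : k = l := by simpa using congrArg List.length hlist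
  exact ⟨rfl, fun j hj => List.map_inj_left.1 hlist j (List.mem_range.2 hj)⟩

lemma three_le_pathLen : 3 ≤ pathLen α k := by
  unfold pathLen; omega

lemma not_even_pathLen : ¬ Even (pathLen α k) := by
  unfold pathLen; rw [Nat.not_even_iff_odd, Nat.odd_iff]; omega

lemma vtx_apply_succ (m : ℕ) : vtx α k i (m + 1) = decide (m = Nat.pair k i) := by
  simp [vtx]

lemma vtx_apply_zero : vtx α k i 0 = decide (0 < i ∧ i < pathLen α k) := by
  simp [vtx]

lemma vtx_inj : vtx α k i = vtx α k' i' ↔ k = k' ∧ i = i' := by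
  refine ⟨fun h => ?_, by rintro ⟨rfl, rfl⟩; rfl⟩
  have := congrFun h (Nat.pair k i + 1)
  simp only [vtx_apply_succ, decide_true, true_eq_decide_iff] at this
  exact Nat.pair_eq_pair.1 this

lemma vtx_ne_apex : vtx α k i ≠ apex := fun h => by
  simpa [vtx_apply_succ, apex] using congrFun h (Nat.pair k i + 1)

lemma pos_vtx : pos α (vtx α k i) = i := by
  have hinj : Injective fun p : ℕ × ℕ => vtx α p.1 p.2 := fun p q h => Prod.ext_iff.2 (vtx_inj.1 h)
  simp [pos, leftInverse_invFun hinj (k, i)]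

lemma vtx_mem_pathSpace_iff : vtx α k i ∈ pathSpace α S ↔ k ∈ S ∧ i ≤ pathLen α k := by
  refine ⟨?_, fun ⟨hk, hi⟩ => Or.inr ⟨k, hk, i, hi, rfl⟩⟩
  rintro (h | ⟨k', hk', i', hi', h⟩)
  · exact absurd h vtx_ne_apex
  · obtain ⟨rfl, rfl⟩ := vtx_inj.1 h
    exact ⟨hk', hi'⟩

lemma IsEndpoint.mem {x : pathSpace α S} (hx : IsEndpoint α k x.1) : k ∈ S := by
  rcases hx with h | h <;> exact (vtx_mem_pathSpace_iff.1 (h ▸ x.2)).1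

lemma isGraph_pathGraph : IsGraph (pathGraph α S) := by
  refine ⟨fun x y ⟨k, i, hi, h⟩ => ⟨k, i, hi, h.symm⟩, fun x ⟨k, i, hi, h⟩ => ?_⟩
  rcases h with ⟨h₁, h₂⟩ | ⟨h₁, h₂⟩ <;> have := vtx_inj.1 (h₁.symm.trans h₂) <;> omega

lemma exists_vtx_of_mem_pathGraph {x y : pathSpace α S} (hxy : (x, y) ∈ pathGraph α S)
    (hx : x.1 = vtx α k i) :
    ∃ i', y.1 = vtx α k i' ∧ (i' = i + 1 ∨ i = i' + 1) := by
  obtain ⟨k', j, -, ⟨h₁, h₂⟩ | ⟨h₂, h₁⟩⟩ := hxy <;>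
    obtain ⟨rfl, rfl⟩ := vtx_inj.1 (hx.symm.trans h₁)
  exacts [⟨_, h₂, Or.inl rfl⟩, ⟨_, h₂, Or.inr rfl⟩]

lemma ne_apexPt_of_mem_pathGraph {x y : pathSpace α S} (hxy : (x, y) ∈ pathGraph α S) :
    x ≠ apexPt α S := by
  rintro rfl
  obtain ⟨k, i, -, ⟨h, -⟩ | ⟨-, h⟩⟩ := hxy <;> exact vtx_ne_apex h.symm

noncomputable def parity (x : pathSpace α S) : Fin 2 := if Even (pos α x.1) then 0 else 1

lemma parity_ne {x y : pathSpace α S} (hxy : (x, y) ∈ pathGraph α S) : parity x ≠ parity y := by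
  obtain ⟨k, i, -, h⟩ := hxy
  dsimp only at h
  rcases h with ⟨h₁, h₂⟩ | ⟨h₂, h₁⟩ <;>
  · simp only [parity, h₁, h₂, pos_vtx, Nat.even_add_one]
    split_ifs <;> simp

lemma eq_vtx_pos_of_walk {w : ℕ → pathSpace α S} {n : ℕ}
    (hw : ∀ j < n, (w j, w (j + 1)) ∈ pathGraph α S) (h₀ : (w 0).1 = vtx α k i) :
    ∀ j ≤ n, (w j).1 = vtx α k (pos α (w j).1) := by
  intro j hj
  induction j with
  | zero => rw [h₀, pos_vtx]
  | succ j ih =>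
    obtain ⟨i', h, -⟩ := exists_vtx_of_mem_pathGraph (hw j hj) (ih (by omega))
    rw [h, pos_vtx]

theorem IsGraphPath.eq_pathLen {w : ℕ → pathSpace α S} {n : ℕ}
    (hw : IsGraphPath (pathGraph α S) w n) (h₀ : IsEndpoint α k (w 0).1)
    (hₙ : IsEndpoint α k' (w n).1) (hne : w 0 ≠ w n) :
    n = pathLen α k ∧
      ((∀ j ≤ n, (w j).1 = vtx α k j) ∨ ∀ j ≤ n, (w j).1 = vtx α k (n - j)) := by
  set b : ℕ → ℕ := fun j => pos α (w j).1 with hb_def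
  have hwb : ∀ j ≤ n, (w j).1 = vtx α k (b j) := by
    rcases h₀ with h | h <;> exact eq_vtx_pos_of_walk hw.1 h
  have hb : ∀ j ≤ n, b j ≤ pathLen α k := fun j hj =>
    (vtx_mem_pathSpace_iff.1 (hwb j hj ▸ (w j).2)).2
  have hstep : ∀ j < n, b (j + 1) = b j + 1 ∨ b j = b (j + 1) + 1 := by
    intro j hj
    obtain ⟨i', h, hi'⟩ := exists_vtx_of_mem_pathGraph (hw.1 j hj) (hwb j hj.le)
    simpa [hb_def, h, pos_vtx] using hi'
  have hinj : InjOn b (Iic n) := fun i hi j hj h =>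
    hw.2 hi hj (Subtype.ext (by rw [hwb i hi, hwb j hj, h]))
  have hend : ∀ j, IsEndpoint α k (w j).1 → b j = 0 ∨ b j = pathLen α k := by
    rintro j (h | h) <;> simp [hb_def, h, pos_vtx]
  obtain rfl : k = k' := by
    rcases hₙ with h | h <;> exact (vtx_inj.1 ((hwb n le_rfl).symm.trans h)).1
  have hb₀ₙ : b 0 ≠ b n := fun h =>
    hne (by rw [hinj (mem_Iic.2 (Nat.zero_le n)) (mem_Iic.2 le_rfl) h])
  rcases hend 0 h₀ with hb₀ | hb₀
  · obtain ⟨hn, hid⟩ := eq_id_of_injOn_of_succ_le (fun j hj => by have := hstep j hj; omega)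
      hinj hb hb₀ (by have := hend n hₙ; omega)
    exact ⟨hn, Or.inl fun j hj => by rw [hwb j hj, hid j hj]⟩
  · obtain ⟨hn, hid⟩ := eq_id_of_injOn_of_succ_le (b := fun j => pathLen α k - b j)
      (fun j hj => by have := hstep j hj; have := hb j hj.le; have := hb (j + 1) hj; omega)
      (fun i hi j hj h => hinj hi hj (by have := hb i hi; have := hb j hj; simp only at h; omega))
      (fun j _ => Nat.sub_le _ _) (by omega) (by have := hend n hₙ; omega)
    refine ⟨hn, Or.inr fun j hj => ?_⟩
    rw [hwb j hj]
    have := hid j hj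
    have := hb j hj
    congr 1
    omega

lemma isOpen_setOf_apply_eq (m : ℕ) (b : Bool) : IsOpen {y : ℕ → Bool | y m = b} :=
  (isOpen_discrete {b}).preimage (continuous_apply m : Continuous fun y : ℕ → Bool => y m)

lemma subsingleton_pathSpace_inter (m : ℕ) :
    (pathSpace α S ∩ {x | x (m + 1) = true}).Subsingleton := by
  have key : ∀ x ∈ pathSpace α S ∩ {x | x (m + 1) = true},
      ∃ k i, m = Nat.pair k i ∧ x = vtx α k i := by
    rintro x ⟨rfl | ⟨k, -, i, -, rfl⟩, hx⟩
    · simp [apex] at hx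
    · simp only [mem_ofPred_eq, vtx_apply_succ, decide_eq_true_eq] at hx
      exact ⟨k, i, hx, rfl⟩
  intro x hx y hy
  obtain ⟨k, i, rfl, rfl⟩ := key x hx
  obtain ⟨k', i', h, rfl⟩ := key y hy
  obtain ⟨rfl, rfl⟩ := Nat.pair_eq_pair.1 h
  rfl

lemma isOpen_singleton_of_ne_apexPt {x : pathSpace α S} (hx : x ≠ apexPt α S) : IsOpen {x} := by
  obtain ⟨_, rfl | ⟨k, hk, i, hi, rfl⟩⟩ := x
  · exact absurd rfl hx
  convert (isOpen_setOf_apply_eq (Nat.pair k i + 1) true).preimage continuous_subtype_val using 1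
  ext ⟨y, hy⟩
  have hvtx : vtx α k i (Nat.pair k i + 1) = true := by simp [vtx_apply_succ]
  simp only [mem_singleton_iff, mem_preimage, mem_ofPred_eq, Subtype.ext_iff]
  refine ⟨fun h => h ▸ hvtx, fun h => ?_⟩
  exact subsingleton_pathSpace_inter _ ⟨hy, h⟩ ⟨vtx_mem_pathSpace_iff.2 ⟨hk, hi⟩, hvtx⟩

lemma continuous_of_continuousAt_apexPt {Y : Type*} [TopologicalSpace Y]
    {f : pathSpace α S → Y} (hf : ContinuousAt f (apexPt α S)) : Continuous f :=
  continuous_of_continuousAt_of_isOpen_singleton (fun _ => isOpen_singleton_of_ne_apexPt) hf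

lemma eventually_apply_zero_eq_false : ∀ᶠ x in 𝓝 (apexPt α S), x.1 0 = false :=
  ((isOpen_setOf_apply_eq 0 false).preimage continuous_subtype_val).mem_nhds rfl

lemma eventually_eq_apexPt_or_isEndpoint (N : ℕ) :
    ∀ᶠ x in 𝓝 (apexPt α S), x = apexPt α S ∨ ∃ k, N ≤ k ∧ IsEndpoint α k x.1 := by
  have hfar : ∀ k ∈ Iio N, ∀ᶠ x in 𝓝 (apexPt α S), ¬ IsEndpoint α k x.1 := fun k _ => by
    filter_upwards [continuous_subtype_val.continuousAt.eventually_ne vtx_ne_apex.symm,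
      continuous_subtype_val.continuousAt.eventually_ne vtx_ne_apex.symm] with x h₁ h₂
    exact fun h => h.elim h₁ h₂
  filter_upwards [eventually_apply_zero_eq_false, (eventually_all_finite (finite_Iio N)).2 hfar]
    with x hx₀ hxN
  rcases x.2 with hx | ⟨k, -, i, hi, hx⟩
  · exact Or.inl (Subtype.ext hx)
  have hk : IsEndpoint α k x.1 := by
    simp only [hx, vtx_apply_zero, decide_eq_false_iff_not, not_and_or, not_lt] at hx₀
    rcases hx₀ with h | h
    · exact Or.inl (by rw [hx, Nat.le_zero.1 h])
    · exact Or.inr (by rw [hx, le_antisymm hi h])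
  exact Or.inr ⟨k, not_lt.1 fun h => hxN k h hk, hk⟩

lemma tendsto_vtx {f : ℕ → ℕ} (hf : ∀ k, f k = 0 ∨ f k = pathLen α k) :
    Tendsto (fun k => vtx α k (f k)) atTop (𝓝 apex) := by
  refine tendsto_pi_nhds.2 fun n => ?_
  rw [nhds_discrete, tendsto_pure]
  filter_upwards [eventually_ge_atTop n] with k hk
  have := Nat.left_le_pair k (f k)
  simp only [vtx, apex, decide_eq_false_iff_not]
  rcases hf k with h | h <;> rw [h] at this ⊢ <;> omega

lemma eventually_isEndpoint_mem {U : Set (pathSpace α S)} (hU : U ∈ 𝓝 (apexPt α S)) :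
    ∀ᶠ k in atTop, ∀ x : pathSpace α S, IsEndpoint α k x.1 → x ∈ U := by
  obtain ⟨u, hu, huU⟩ := (mem_nhds_subtype _ _ _).1 hU
  filter_upwards [tendsto_vtx (f := fun _ => 0) (fun _ => Or.inl rfl) hu,
    tendsto_vtx (f := pathLen α) (fun _ => Or.inr rfl) hu] with k h₀ hₙ x hx
  rcases hx with h | h <;> exact huU (show x.1 ∈ u by rw [h]; assumption)

lemma countable_pathSpace : (pathSpace α S).Countable :=
  ((countable_range fun p : ℕ × ℕ => vtx α p.1 p.2).insert apex).mono <|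
    insert_subset_insert (by rintro _ ⟨k, -, i, -, rfl⟩; exact ⟨(k, i), rfl⟩)

/-- The closure of `pathSpace α S` adds only `fun n => decide (n = 0)`: every other point of the
closure has some coordinate `m + 1` set, and at most one point of `pathSpace α S` has it. -/
lemma isLocallyClosed_pathSpace : IsLocallyClosed (pathSpace α S) := by
  set δ : ℕ → Bool := fun n => decide (n = 0)
  refine ⟨{δ}ᶜ, closure (pathSpace α S), isOpen_compl_singleton, isClosed_closure, ?_⟩
  ext x
  refine ⟨fun hx => ⟨?_, subset_closure hx⟩, fun ⟨hxδ, hx⟩ => ?_⟩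
  · rintro rfl
    rcases hx with h | ⟨k, -, i, -, h⟩
    · simpa [δ, apex] using congrFun h 0
    · simpa [δ, vtx_apply_succ] using congrFun h (Nat.pair k i + 1)
  by_cases hm : ∃ m, x (m + 1) = true
  · obtain ⟨m, hm⟩ := hm
    have := (isOpen_setOf_apply_eq (m + 1) true).inter_closure ⟨hm, hx⟩
    rw [inter_comm, (subsingleton_pathSpace_inter m).isClosed.closure_eq] at this
    exact this.1
  · simp only [not_exists, Bool.not_eq_true] at hm
    have : x = apex ∨ x = δ := by
      cases h₀ : x 0
      · exact Or.inl (funext fun n => by cases n; exacts [h₀, hm _])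
      · exact Or.inr (funext fun n => by cases n; exacts [h₀, hm _])
    rcases this with rfl | rfl
    exacts [mem_insert _ _, absurd rfl hxδ]

lemma polishSpace_pathSpace : PolishSpace (pathSpace α S) :=
  have : PolishSpace (ℕ → Bool) := {}
  isLocallyClosed_pathSpace.polishSpace

lemma hasContColoring_three : HasContColoring (pathGraph α S) 3 := by
  let c : pathSpace α S → Fin 3 := fun x => if x.1 0 then (parity x).castSucc else 2
  refine ⟨c, continuous_of_continuousAt_apexPt ?_, fun x y hxy => ?_⟩
  · rw [ContinuousAt, nhds_discrete (Fin 3), tendsto_pure]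
    filter_upwards [eventually_apply_zero_eq_false] with x hx
    simp [c, hx, apexPt, apex]
  · have hne := parity_ne hxy
    obtain ⟨k, i, hi, h⟩ := hxy
    have h3 := three_le_pathLen (α := α) (k := k)
    dsimp only at h
    rcases h with ⟨h₁, h₂⟩ | ⟨h₂, h₁⟩ <;>
    · simp only [c, h₁, h₂, vtx_apply_zero]
      split_ifs <;> simp_all [Fin.ext_iff] <;> omega

lemma not_hasContColoring_two (hS : S.Infinite) : ¬ HasContColoring (pathGraph α S) 2 := by
  rintro ⟨c, hc, hcG⟩
  have hU : c ⁻¹' {c (apexPt α S)} ∈ 𝓝 (apexPt α S) :=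
    hc.continuousAt.preimage_mem_nhds (by rw [nhds_discrete (Fin 2)]; exact mem_pure.2 rfl)
  obtain ⟨N, hN⟩ := eventually_atTop.1 (eventually_isEndpoint_mem hU)
  obtain ⟨k, hk, hkN⟩ := hS.exists_gt N
  let w : ℕ → pathSpace α S := fun j =>
    ⟨vtx α k (min j (pathLen α k)), vtx_mem_pathSpace_iff.2 ⟨hk, min_le_right _ _⟩⟩
  have hw : ∀ j ≤ pathLen α k, (w j).1 = vtx α k j := fun j hj => by simp [w, min_eq_left hj]
  have hwalk : ∀ j < pathLen α k, (w j, w (j + 1)) ∈ pathGraph α S := fun j hj =>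
    ⟨k, j, hj, Or.inl ⟨hw j hj.le, hw (j + 1) hj⟩⟩
  have hend : ∀ x : pathSpace α S, IsEndpoint α k x.1 → c x = c (apexPt α S) := hN k hkN.le
  have := coloring_eq_iff_even_of_walk hcG hwalk _ le_rfl
  rw [hend _ (Or.inr (hw _ le_rfl)), hend _ (Or.inl (hw 0 (Nat.zero_le _)))] at this
  exact not_even_pathLen (this.1 rfl)

lemma redIC_pathGraph_of_subset (h : S ⊆ T) : RedIC (pathGraph α S) (pathGraph α T) :=
  ⟨inclusion (insert_subset_insert fun _ ⟨k, hk, hx⟩ => ⟨k, h hk, hx⟩),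
    continuous_inclusion _, inclusion_injective _, fun _ _ hxy => hxy⟩

section Pullback

variable {Z : Type*} [TopologicalSpace Z] {G : Set (Z × Z)} {φ : Z → pathSpace α S}

lemma isOpen_singleton_of_apply_ne_apexPt (hφc : Continuous φ) (hφi : Injective φ) {z : Z}
    (hz : φ z ≠ apexPt α S) : IsOpen {z} := by
  rw [← hφi.preimage_image {z}, image_singleton]
  exact (isOpen_singleton_of_ne_apexPt hz).preimage hφc

variable (hG : IsGraph G) (hcol : ¬ HasContColoring G 2) (hφc : Continuous φ)
  (hφi : Injective φ) (hφG : ∀ x y, (x, y) ∈ G → (φ x, φ y) ∈ pathGraph α S)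
include hG hcol hφc hφi hφG

lemma exists_apply_eq_apexPt : ∃ z₀, φ z₀ = apexPt α S := by
  by_contra! h
  exact hcol (hasContColoring_two_of_reachable_eq hG (fun x y hxy => parity_ne (hφG x y hxy))
    isOpen_empty (fun z _ => isOpen_singleton_of_apply_ne_apexPt hφc hφi (h z))
    fun x hx => hx.elim)

lemma exists_reachable_ne {z₀ : Z} (hz₀ : φ z₀ = apexPt α S) {V : Set Z} (hV : V ∈ 𝓝 z₀) :
    ∃ z ∈ V, ∃ z' ∈ V, z ≠ z' ∧ hG.toSimpleGraph.Reachable z z' := by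
  by_contra! h
  refine hcol (hasContColoring_two_of_reachable_eq hG
    (fun x y hxy => parity_ne (hφG x y hxy)) (V := interior V) isOpen_interior (fun z hz => ?_)
    fun x hx y hy hxy => ?_)
  · refine isOpen_singleton_of_apply_ne_apexPt hφc hφi fun hz' => hz ?_
    rw [hφi (hz'.trans hz₀.symm)]
    exact mem_interior_iff_mem_nhds.2 hV
  · by_contra hne
    exact h x (interior_subset hx) y (interior_subset hy) hne hxy

lemma not_isOpen_singleton_of_apply_eq_apexPt {z₀ : Z} (hz₀ : φ z₀ = apexPt α S) :
    ¬ IsOpen {z₀} := fun h => by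
  obtain ⟨z, hz, z', hz', hne, -⟩ := exists_reachable_ne hG hcol hφc hφi hφG hz₀ (h.mem_nhds rfl)
  exact hne (hz.trans hz'.symm)

omit [TopologicalSpace Z] hG hcol hφc in
lemma IsGraphPath.exists_eq_pathLen {w : ℕ → Z} {n N : ℕ} (hw : IsGraphPath G w n) (hn : 0 < n)
    (h₀ : φ (w 0) = apexPt α S ∨ ∃ k, N ≤ k ∧ IsEndpoint α k (φ (w 0)).1)
    (hₙ : φ (w n) = apexPt α S ∨ ∃ k, N ≤ k ∧ IsEndpoint α k (φ (w n)).1) :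
    ∃ k ∈ S, N ≤ k ∧ n = pathLen α k ∧
      ((∀ j ≤ n, (φ (w j)).1 = vtx α k j) ∨ ∀ j ≤ n, (φ (w j)).1 = vtx α k (n - j)) := by
  have hφw := hw.map hφi hφG
  have hlast := isGraph_pathGraph.1 _ _ (hφw.1 (n - 1) (by omega))
  rw [Nat.sub_add_cancel hn] at hlast
  obtain ⟨k, hkN, hk⟩ := h₀.resolve_left (ne_apexPt_of_mem_pathGraph (hφw.1 0 hn))
  obtain ⟨k', -, hk'⟩ := hₙ.resolve_left (ne_apexPt_of_mem_pathGraph hlast)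
  have hne : φ (w 0) ≠ φ (w n) := fun h => by
    have := hw.2 (mem_Iic.2 (Nat.zero_le n)) (mem_Iic.2 le_rfl) (hφi h)
    omega
  exact ⟨k, hk.mem, hkN, IsGraphPath.eq_pathLen hφw hk hk' hne⟩

theorem exists_isGraphPath_vtx {z₀ : Z} (hz₀ : φ z₀ = apexPt α S) {V : Set Z} (hV : V ∈ 𝓝 z₀)
    (N : ℕ) :
    ∃ k ∈ S, N ≤ k ∧ ∃ w, IsGraphPath G w (pathLen α k) ∧
      (∀ j ≤ pathLen α k, (φ (w j)).1 = vtx α k j) ∧ w 0 ∈ V ∧ w (pathLen α k) ∈ V := by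
  have hnear := (hφc.tendsto' z₀ _ hz₀).eventually (eventually_eq_apexPt_or_isEndpoint N)
  obtain ⟨z, hz, z', hz', hne, hzz'⟩ :=
    exists_reachable_ne hG hcol hφc hφi hφG hz₀ (inter_mem hV hnear)
  obtain ⟨n, w, hw, rfl, rfl⟩ := hG.exists_isGraphPath hzz'
  have hn : 0 < n := Nat.pos_of_ne_zero fun h => hne (by rw [h])
  obtain ⟨k, hk, hkN, rfl, hdir | hdir⟩ := IsGraphPath.exists_eq_pathLen hφi hφG hw hn hz.2 hz'.2
  · exact ⟨k, hk, hkN, w, hw, hdir, hz.1, hz'.1⟩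
  · refine ⟨k, hk, hkN, fun j => w (pathLen α k - j), hw.reverse hG, fun j hj => ?_,
      by simpa using hz'.1, by simpa using hz.1⟩
    rw [hdir _ (Nat.sub_le _ _), Nat.sub_sub_self hj]

end Pullback

section Reductions

variable {Z : Type*} [TopologicalSpace Z] {G : Set (Z × Z)}

theorem exists_mem_inter_of_redIC (hG : IsGraph G) (hcol : ¬ HasContColoring G 2)
    (hα : RedIC G (pathGraph α S)) (hβ : RedIC G (pathGraph β T)) (N : ℕ) :
    ∃ k ∈ S ∩ T, N ≤ k ∧ ∀ j < k, α j = β j := by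
  obtain ⟨φ, hφc, hφi, hφG⟩ := hα
  obtain ⟨ψ, hψc, hψi, hψG⟩ := hβ
  obtain ⟨z₀, hz₀⟩ := exists_apply_eq_apexPt hG hcol hφc hφi hφG
  have hψz₀ : ψ z₀ = apexPt β T := by
    by_contra h
    exact not_isOpen_singleton_of_apply_eq_apexPt hG hcol hφc hφi hφG hz₀
      (isOpen_singleton_of_apply_ne_apexPt hψc hψi h)
  have hnear := (hψc.tendsto' z₀ _ hψz₀).eventually (eventually_eq_apexPt_or_isEndpoint N)
  obtain ⟨k, hk, hkN, w, hw, -, h₀, hₙ⟩ :=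
    exists_isGraphPath_vtx hG hcol hφc hφi hφG hz₀ hnear N
  obtain ⟨l, hl, -, hkl, -⟩ := IsGraphPath.exists_eq_pathLen hψi hψG hw
    (three_le_pathLen.trans_lt' (by norm_num)) h₀ hₙ
  obtain ⟨rfl, hαβ⟩ := eq_of_pathLen_eq hkl
  exact ⟨k, ⟨hk, hl⟩, hkN, hαβ⟩

theorem eq_of_redIC (hG : IsGraph G) (hcol : ¬ HasContColoring G 2)
    (hα : RedIC G (pathGraph α S)) (hβ : RedIC G (pathGraph β T)) : α = β := by
  funext j
  obtain ⟨k, -, hk, h⟩ := exists_mem_inter_of_redIC hG hcol hα hβ (j + 1)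
  exact h j hk

lemma redIC_pathGraph_range (hG : IsGraph G) {φ : Z → pathSpace α S} (hφi : Injective φ)
    {z₀ : Z} (hz₀ : φ z₀ = apexPt α S) {U : ℕ → Set Z} (hU : (𝓝 z₀).HasAntitoneBasis U)
    {κ : ℕ → ℕ} (hκ : StrictMono κ) {w : ℕ → ℕ → Z}
    (hw : ∀ m, ∀ j < pathLen α (κ m), (w m j, w m (j + 1)) ∈ G)
    (hwφ : ∀ m, ∀ j ≤ pathLen α (κ m), (φ (w m j)).1 = vtx α (κ m) j)
    (hw₀ : ∀ m, w m 0 ∈ U m) (hwₙ : ∀ m, w m (pathLen α (κ m)) ∈ U m) :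
    RedIC (pathGraph α (range κ)) G := by
  have hrange : ∀ p : pathSpace α (range κ), ∃ z, (φ z).1 = p.1 := by
    rintro ⟨_, rfl | ⟨_, ⟨m, rfl⟩, i, hi, rfl⟩⟩
    exacts [⟨z₀, congrArg Subtype.val hz₀⟩, ⟨w m i, hwφ m i hi⟩]
  choose g hg using hrange
  have hg_eq : ∀ p z, (φ z).1 = p.1 → g p = z := fun p z hz =>
    hφi (Subtype.ext ((hg p).trans hz.symm))
  have hg_apex : g (apexPt α (range κ)) = z₀ := hg_eq _ _ (congrArg Subtype.val hz₀)
  refine ⟨g, continuous_of_continuousAt_apexPt ?_,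
    fun p q hpq => Subtype.ext ((hg p).symm.trans (hpq ▸ hg q)), ?_⟩
  · rw [ContinuousAt, hg_apex]
    refine hU.toHasBasis.tendsto_right_iff.2 fun n _ => ?_
    filter_upwards [eventually_eq_apexPt_or_isEndpoint (κ n)] with p hp
    rcases hp with rfl | ⟨k, hk, hpk⟩
    · rw [hg_apex]
      exact mem_of_mem_nhds (hU.mem n)
    · obtain ⟨m, rfl⟩ := hpk.mem
      have hnm : U m ⊆ U n := hU.antitone (hκ.le_iff_le.1 hk)
      rcases hpk with h | h
      · rw [hg_eq p _ ((hwφ m 0 (Nat.zero_le _)).trans h.symm)]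
        exact hnm (hw₀ m)
      · rw [hg_eq p _ ((hwφ m _ le_rfl).trans h.symm)]
        exact hnm (hwₙ m)
  · rintro p q ⟨k, i, hi, ⟨hp, hq⟩ | ⟨hq, hp⟩⟩ <;>
      obtain ⟨⟨m, rfl⟩, -⟩ := vtx_mem_pathSpace_iff.1 (hp ▸ p.2) <;>
      rw [hg_eq p _ ((hwφ m _ (by omega)).trans hp.symm),
        hg_eq q _ ((hwφ m _ (by omega)).trans hq.symm)]
    exacts [hw m i hi, hG.1 _ _ (hw m i hi)]

theorem exists_redIC_pathGraph [FirstCountableTopology Z] (hG : IsGraph G)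
    (hcol : ¬ HasContColoring G 2) (h : RedIC G (pathGraph α S)) :
    ∃ S' ⊆ S, S'.Infinite ∧ RedIC (pathGraph α S') G := by
  obtain ⟨φ, hφc, hφi, hφG⟩ := h
  obtain ⟨z₀, hz₀⟩ := exists_apply_eq_apexPt hG hcol hφc hφi hφG
  obtain ⟨U, hU⟩ := (𝓝 z₀).exists_antitone_basis
  have hfreq : ∀ n, ∃ᶠ k in atTop, k ∈ S ∧ ∃ w, IsGraphPath G w (pathLen α k) ∧
      (∀ j ≤ pathLen α k, (φ (w j)).1 = vtx α k j) ∧ w 0 ∈ U n ∧ w (pathLen α k) ∈ U n :=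
    fun n => frequently_atTop.2 fun N => by
      obtain ⟨k, hk, hkN, hw⟩ := exists_isGraphPath_vtx hG hcol hφc hφi hφG hz₀ (hU.mem n) N
      exact ⟨k, hkN, hk, hw⟩
  obtain ⟨κ, hκ, hκS⟩ := extraction_forall_of_frequently hfreq
  choose hκS w hw hwφ hw₀ hwₙ using hκS
  exact ⟨range κ, range_subset_iff.2 hκS, infinite_range_of_injective hκ.injective,
    redIC_pathGraph_range hG hφi hz₀ hU hκ (fun m => (hw m).1) hwφ hw₀ hwₙ⟩

end Reductions

section Bases

variable {C : SubCantorGraph → Prop}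

theorem not_isAntichain_of_basis (hC : ∀ z, C z → z.MemS)
    (hpath : ∀ α (S : Set ℕ), S.Infinite → C ⟨pathSpace α S, pathGraph α S⟩)
    {B : Set SubCantorGraph} (hBC : ∀ b ∈ B, C b) (hB : ∀ z, C z → ∃ b ∈ B, RedIC b.2 z.2) :
    ¬ IsAntichain (fun b b' : SubCantorGraph => RedIC b.2 b'.2) B := by
  intro hanti
  let α : ℕ → Bool := fun _ => false
  obtain ⟨b₀, hb₀B, hb₀⟩ := hB _ (hpath α univ infinite_univ)
  obtain ⟨hG, hcol⟩ := hC b₀ (hBC b₀ hb₀B)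
  obtain ⟨S, -, hS, hSb₀⟩ := exists_redIC_pathGraph hG hcol hb₀
  have hbelow : ∀ T ⊆ S, T.Infinite → RedIC b₀.2 (pathGraph α T) := by
    intro T hTS hT
    obtain ⟨b, hbB, hb⟩ := hB _ (hpath α T hT)
    obtain rfl : b = b₀ := by
      by_contra hne
      exact hanti hbB hb₀B hne (hb.trans ((redIC_pathGraph_of_subset hTS).trans hSb₀))
    exact hb
  obtain ⟨T₁, h₁, T₂, h₂, hT₁, hT₂, hdisj⟩ := hS.exists_disjoint_infinite
  obtain ⟨k, hk, -⟩ := exists_mem_inter_of_redIC hG hcol (hbelow T₁ h₁ hT₁) (hbelow T₂ h₂ hT₂) 0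
  exact disjoint_left.1 hdisj hk.1 hk.2

theorem continuum_le_card_of_basis (hC : ∀ z, C z → z.MemS)
    (hpath : ∀ α (S : Set ℕ), S.Infinite → C ⟨pathSpace α S, pathGraph α S⟩)
    {B : Set SubCantorGraph} (hBC : ∀ b ∈ B, C b) (hB : ∀ z, C z → ∃ b ∈ B, RedIC b.2 z.2) :
    Cardinal.continuum ≤ Cardinal.mk B := by
  choose b hbB hb using fun α => hB _ (hpath α univ infinite_univ)
  have hinj : Injective fun α => (⟨b α, hbB α⟩ : B) := fun α β h => by
    have hαβ : b α = b β := congrArg Subtype.val h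
    obtain ⟨hG, hcol⟩ := hC _ (hBC _ (hbB β))
    exact eq_of_redIC hG hcol (hαβ ▸ hb α) (hb β)
  calc Cardinal.continuum = Cardinal.mk (ℕ → Bool) := by simp
    _ ≤ Cardinal.mk B := Cardinal.mk_le_of_injective hinj

end Bases

end PathSpace

open PathSpace

theorem stmt5 :
    -- the family of pairwise ≼^i_c-incompatible graphs on countable 0D Polish spaces
    (∃ (P : (ℕ → Bool) → Set (ℕ → Bool))
       (Gr : ∀ α : ℕ → Bool, Set (↥(P α) × ↥(P α))),
      (∀ α, (P α).Countable) ∧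
      (∀ α, PolishSpace ↥(P α)) ∧
      (∀ α, IsGraph (Gr α)) ∧
      (∀ α, HasContColoring (Gr α) 3 ∧ ¬ HasContColoring (Gr α) 2) ∧
      ∀ α β : ℕ → Bool, α ≠ β →
        ∀ (Z : Type*) [TopologicalSpace Z], Is0DMS Z →
          ∀ G : Set (Z × Z), IsGraph G → ¬ HasContColoring G 2 →
            ¬ (RedIC G (Gr α) ∧ RedIC G (Gr β))) ∧
    -- 𝔖 has no ≼^i_c-antichain basis
    (¬ ∃ B : Set SubCantorGraph,
        (∀ b ∈ B, b.MemS) ∧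
        (∀ z : SubCantorGraph, z.MemS → ∃ b ∈ B, RedIC b.2 z.2) ∧
        (∀ b ∈ B, ∀ b' ∈ B, b ≠ b' → ¬ RedIC b.2 b'.2 ∧ ¬ RedIC b'.2 b.2)) ∧
    -- every ≼^i_c-basis for 𝔖 has cardinality at least continuum
    (∀ B : Set SubCantorGraph, (∀ b ∈ B, b.MemS) →
        (∀ z : SubCantorGraph, z.MemS → ∃ b ∈ B, RedIC b.2 z.2) →
        Cardinal.continuum ≤ Cardinal.mk ↥B) ∧
    -- the Polish subclass has no ≼^i_c-antichain basis
    (¬ ∃ B : Set SubCantorGraph,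
        (∀ b ∈ B, b.MemP) ∧
        (∀ z : SubCantorGraph, z.MemP → ∃ b ∈ B, RedIC b.2 z.2) ∧
        (∀ b ∈ B, ∀ b' ∈ B, b ≠ b' → ¬ RedIC b.2 b'.2 ∧ ¬ RedIC b'.2 b.2)) ∧
    -- every ≼^i_c-basis for the Polish subclass has cardinality at least continuum
    (∀ B : Set SubCantorGraph, (∀ b ∈ B, b.MemP) →
        (∀ z : SubCantorGraph, z.MemP → ∃ b ∈ B, RedIC b.2 z.2) →
        Cardinal.continuum ≤ Cardinal.mk ↥B) := by
  have hS : ∀ α (S : Set ℕ), S.Infinite → SubCantorGraph.MemS ⟨pathSpace α S, pathGraph α S⟩ :=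
    fun _ _ hS => ⟨isGraph_pathGraph, not_hasContColoring_two hS⟩
  have hP : ∀ α (S : Set ℕ), S.Infinite → SubCantorGraph.MemP ⟨pathSpace α S, pathGraph α S⟩ :=
    fun α S hS' => ⟨hS α S hS', polishSpace_pathSpace⟩
  refine ⟨⟨fun α => pathSpace α univ, fun α => pathGraph α univ, fun _ => countable_pathSpace,
    fun _ => polishSpace_pathSpace, fun _ => isGraph_pathGraph,
    fun _ => ⟨hasContColoring_three, not_hasContColoring_two infinite_univ⟩, ?_⟩,
    ?_, fun B hBC hB => continuum_le_card_of_basis (fun _ h => h) hS hBC hB,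
    ?_, fun B hBC hB => continuum_le_card_of_basis (fun _ h => h.1) hP hBC hB⟩
  · rintro α β hne Z _ - G hG hcol ⟨hα, hβ⟩
    exact hne (eq_of_redIC hG hcol hα hβ)
  · rintro ⟨B, hBC, hB, hanti⟩
    exact not_isAntichain_of_basis (fun _ h => h) hS hBC hB
      fun b hb b' hb' hne => (hanti b hb b' hb' hne).1
  · rintro ⟨B, hBC, hB, hanti⟩
    exact not_isAntichain_of_basis (fun _ h => h.1) hP hBC hB
      fun b hb b' hb' hne => (hanti b hb b' hb' hne).1
end
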